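/- arXiv:1604.05116 — 8 statements merged into one kernel-verified Lean document; each statement's English description precedes it below -/
import Mathlib

section
/- If f : X → ℝ is a pointwise limit of a sequence of continuous functions, then for every open set G ⊆ ℝ, the preimage f⁻¹(G) is a countable union of zero-sets of X. -/
open Set Filter Topology Metric

def IsZeroSet {X : Type*} [TopologicalSpace X] (Z : Set X) : Prop :=
  ∃ f : X → ℝ, Continuous f ∧ Z = f ⁻¹' {0}

theorem preimage_open_isZSigma_of_baireOne
    {X : Type*} [TopologicalSpace X] (f : X → ℝ)
    (hf : ∃ g : ℕ → X → ℝ, (∀ n, Continuous (g n)) ∧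
      ∀ x, Tendsto (fun n => g n x) atTop (𝓝 (f x)))
    (G : Set ℝ) (hG : IsOpen G) :
    ∃ F : ℕ → Set X, (∀ n, IsZeroSet (F n)) ∧ f ⁻¹' G = ⋃ n, F n := by
  classical
  obtain ⟨g, hg, hlim⟩ := hf
  by_cases hGu : G = univ
  · exact ⟨fun _ => univ, fun n => ⟨fun _ => 0, continuous_const, by simp⟩, by simp [hGu, Set.iUnion_const]⟩
  have hne : Gᶜ.Nonempty := nonempty_compl.2 hGu
  have hGc : IsClosed Gᶜ := hG.isClosed_compl
  set c : ℕ → ℝ := fun k => 1 / (k + 1) with hcdef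
  have hc : ∀ k, 0 < c k := fun k => by positivity
  set φ : ℕ → ℝ → ℝ := fun k y => max (c k - infDist y Gᶜ) 0 with hφdef
  have hφc : ∀ k, Continuous (φ k) :=
    fun k => ((continuous_const.sub (continuous_infDist_pt _)).max continuous_const)
  have hφnn : ∀ k y, 0 ≤ φ k y := fun k y => le_max_right _ _
  have hφle : ∀ k y, φ k y ≤ c k := fun k y => by
    have := infDist_nonneg (x := y) (s := Gᶜ)
    simp only [hφdef]; apply max_le <;> [linarith; exact (hc k).le]
  have hφ0 : ∀ k y, φ k y = 0 ↔ c k ≤ infDist y Gᶜ := by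
    intro k y
    constructor
    · intro h
      have : c k - infDist y Gᶜ ≤ 0 := by
        have := le_max_left (c k - infDist y Gᶜ) 0
        simp only [hφdef] at h; linarith [h ▸ this]
      linarith
    · intro h; simp only [hφdef]; exact max_eq_right (by linarith)
  set H : ℕ → ℕ → X → ℝ := fun k m x => ∑' n, (1/2 : ℝ)^n * φ k (g (m+n) x) with hHdef
  have hsum : ∀ k m x, Summable (fun n => (1/2 : ℝ)^n * φ k (g (m+n) x)) := by
    intro k m x
    apply Summable.of_nonneg_of_le
      (fun n => mul_nonneg (by positivity) (hφnn _ _))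
      (fun n => mul_le_mul_of_nonneg_left (hφle _ _) (by positivity))
    exact (summable_geometric_of_lt_one (by norm_num) (by norm_num)).mul_right _
  have hHc : ∀ k m, Continuous (H k m) := by
    intro k m
    refine continuous_tsum (u := fun n => (1/2 : ℝ)^n * c k)
      (fun n => continuous_const.mul ((hφc k).comp (hg (m+n)))) ?_ ?_
    · exact (summable_geometric_of_lt_one (by norm_num) (by norm_num)).mul_right (c k)
    · intro n x
      rw [Real.norm_eq_abs, abs_of_nonneg (mul_nonneg (by positivity) (hφnn _ _))]
      exact mul_le_mul_of_nonneg_left (hφle _ _) (by positivity)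
  have hH0 : ∀ k m x, H k m x = 0 ↔ ∀ n, c k ≤ infDist (g (m+n) x) Gᶜ := by
    intro k m x
    constructor
    · intro h n
      rw [← hφ0]
      by_contra hn
      have hpos : 0 < φ k (g (m+n) x) :=
        lt_of_le_of_ne (hφnn _ _) (Ne.symm hn)
      have : 0 < H k m x := by
        refine Summable.tsum_pos (hsum k m x)
          (fun i => mul_nonneg (by positivity) (hφnn _ _)) n ?_
        positivity
      linarith [this, h]
    · intro h
      have : (fun n => (1/2 : ℝ)^n * φ k (g (m+n) x)) = fun _ => 0 := by
        funext n; rw [(hφ0 _ _).2 (h n), mul_zero]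
      simp only [hHdef, this, tsum_zero]
  refine ⟨fun n => H n.unpair.1 n.unpair.2 ⁻¹' {0},
    fun n => ⟨_, hHc _ _, rfl⟩, ?_⟩
  ext x
  simp only [mem_preimage, mem_iUnion, mem_singleton_iff]
  constructor
  · intro hx
    have hd : 0 < infDist (f x) Gᶜ :=
      (hGc.notMem_iff_infDist_pos hne).1 (by simpa using hx)
    obtain ⟨k, hk⟩ := exists_nat_one_div_lt (half_pos hd)
    have hck : c k < infDist (f x) Gᶜ / 2 := hk
    obtain ⟨N, hN⟩ := (Metric.tendsto_atTop.1 (hlim x)) (c k) (hc k)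
    refine ⟨Nat.pair k N, ?_⟩
    rw [Nat.unpair_pair, hH0]
    intro n
    have h1 : dist (g (N+n) x) (f x) < c k := hN _ (Nat.le_add_right N n)
    have h2 : infDist (f x) Gᶜ ≤ infDist (g (N+n) x) Gᶜ + dist (f x) (g (N+n) x) :=
      infDist_le_infDist_add_dist
    rw [dist_comm] at h2
    linarith
  · rintro ⟨n, hn⟩
    rw [hH0] at hn
    set k := n.unpair.1
    set m := n.unpair.2
    have htend : Tendsto (fun i => infDist (g (m+i) x) Gᶜ) atTop (𝓝 (infDist (f x) Gᶜ)) := by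
      have h1 : Tendsto (fun i => g (m+i) x) atTop (𝓝 (f x)) := by
        have := (hlim x).comp (tendsto_add_atTop_nat m)
        simpa [Function.comp_def, Nat.add_comm] using this
      exact ((continuous_infDist_pt Gᶜ).continuousAt.tendsto).comp h1
    have hge : c k ≤ infDist (f x) Gᶜ := ge_of_tendsto' htend hn
    have : f x ∉ Gᶜ := (hGc.notMem_iff_infDist_pos hne).2 (lt_of_lt_of_le (hc k) hge)
    simpa using this
end

section
/- For every separable metric space X, the space B₁(X) of first Baire class real-valued functions on X, equipped with the topology of pointwise convergence, is sequentially separable: there is a countable subset S ⊆ C(X) such that every f ∈ B₁(X) is a pointwise limit of a sequence from S. -/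
open Set Filter Topology TopologicalSpace

def IsZSigmaSet {X : Type*} [TopologicalSpace X] (Z : Set X) : Prop :=
  ∃ F : ℕ → Set X, (∀ n, IsZeroSet (F n)) ∧ Z = ⋃ n, F n

def IsFSigmaSet {X : Type*} [TopologicalSpace X] (Z : Set X) : Prop :=
  ∃ F : ℕ → Set X, (∀ n, IsClosed (F n)) ∧ Z = ⋃ n, F n

/-- A function of the first Baire class: a pointwise limit of continuous functions. -/
def IsBaire1 {X : Type*} [TopologicalSpace X] (f : X → ℝ) : Prop :=
  ∃ g : ℕ → X → ℝ, (∀ n, Continuous (g n)) ∧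
    ∀ x, Tendsto (fun n => g n x) atTop (𝓝 (f x))

/-- `B₁(X)` with the pointwise topology is sequentially separable: there is a countable
set of Baire-one functions such that every Baire-one function is a pointwise limit of a
sequence from it. -/
def B1SeqSeparable (X : Type*) [TopologicalSpace X] : Prop :=
  ∃ S : Set (X → ℝ), S.Countable ∧ (∀ f ∈ S, IsBaire1 f) ∧
    ∀ f : X → ℝ, IsBaire1 f → ∃ u : ℕ → X → ℝ, (∀ n, u n ∈ S) ∧
      ∀ x, Tendsto (fun n => u n x) atTop (𝓝 (f x))

section B1Aux
open Metric

noncomputable section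

attribute [local instance] PiCountable.metricSpace



lemma fsigma_preimage {X : Type*} [TopologicalSpace X] (f : X → ℝ) (g : ℕ → X → ℝ)
    (hg : ∀ n, Continuous (g n)) (hlim : ∀ x, Tendsto (fun n => g n x) atTop (𝓝 (f x)))
    (c d : ℝ) :
    ∃ F : ℕ → Set X, (∀ n, IsClosed (F n)) ∧ Monotone F ∧ (⋃ n, F n) = f ⁻¹' (Set.Ioo c d) := by
  classical
  set K : ℚ × ℚ × ℕ → Set X := fun t =>
    if c < (t.1 : ℝ) ∧ ((t.2.1 : ℝ) < d) then
      {x | ∀ n ≥ t.2.2, g n x ∈ Icc (t.1 : ℝ) (t.2.1 : ℝ)} else ∅ with hK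
  have hKclosed : ∀ t, IsClosed (K t) := by
    intro t
    rw [hK]
    dsimp only
    split
    · have : {x | ∀ n ≥ t.2.2, g n x ∈ Icc (t.1 : ℝ) (t.2.1 : ℝ)}
          = ⋂ n, ⋂ _ : n ≥ t.2.2, (g n) ⁻¹' (Icc (t.1 : ℝ) (t.2.1 : ℝ)) := by
        ext x; simp [Set.mem_iInter]
      rw [this]
      exact isClosed_iInter fun n => isClosed_iInter fun _ => isClosed_Icc.preimage (hg n)
    · exact isClosed_empty
  have hKunion : (⋃ t, K t) = f ⁻¹' (Set.Ioo c d) := by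
    apply Set.Subset.antisymm
    · rintro x hx
      obtain ⟨⟨p, q, N⟩, hx⟩ := Set.mem_iUnion.1 hx
      rw [hK] at hx
      dsimp only at hx
      split at hx
      · rename_i hcond
        have h1 : (p : ℝ) ≤ f x :=
          ge_of_tendsto (hlim x) (eventually_atTop.2 ⟨N, fun n hn => (hx n hn).1⟩)
        have h2 : f x ≤ (q : ℝ) :=
          le_of_tendsto (hlim x) (eventually_atTop.2 ⟨N, fun n hn => (hx n hn).2⟩)
        exact ⟨lt_of_lt_of_le hcond.1 h1, lt_of_le_of_lt h2 hcond.2⟩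
      · exact absurd hx (Set.notMem_empty x)
    · intro x hx
      obtain ⟨p, hp1, hp2⟩ := exists_rat_btwn hx.1
      obtain ⟨q, hq1, hq2⟩ := exists_rat_btwn hx.2
      have hev : ∀ᶠ n in atTop, g n x ∈ Ioo (p : ℝ) (q : ℝ) :=
        (hlim x).eventually (Ioo_mem_nhds hp2 hq1)
      obtain ⟨N, hN⟩ := eventually_atTop.1 hev
      refine Set.mem_iUnion.2 ⟨⟨p, q, N⟩, ?_⟩
      rw [hK]
      dsimp only
      rw [if_pos ⟨hp1, hq2⟩]
      exact fun n hn => Ioo_subset_Icc_self (hN n hn)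
  let e : ℕ → ℚ × ℚ × ℕ := (Denumerable.eqv (ℚ × ℚ × ℕ)).symm
  refine ⟨fun n => ⋃ i ∈ Set.Iic n, K (e i), ?_, ?_, ?_⟩
  · intro n
    exact (Set.finite_Iic n).isClosed_biUnion fun i _ => hKclosed (e i)
  · intro a b hab
    exact Set.biUnion_subset_biUnion_left (Set.Iic_subset_Iic.2 hab)
  · rw [← hKunion]
    apply Set.Subset.antisymm
    · exact Set.iUnion_subset fun n => Set.iUnion₂_subset fun i _ => Set.subset_iUnion K (e i)
    · intro x hx
      obtain ⟨t, ht⟩ := Set.mem_iUnion.1 hx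
      refine Set.mem_iUnion.2 ⟨Denumerable.eqv (ℚ × ℚ × ℕ) t, ?_⟩
      refine Set.mem_biUnion (Set.mem_Iic.2 le_rfl) ?_
      simpa [e] using ht

lemma level_lemma {X Y : Type*} [TopologicalSpace X] [MetricSpace Y] (ι : X → Y)
    (hι : IsInducing ι)
    (f₀ : X → ℝ) (hf₀ : ∀ x, f₀ x ∈ Set.Ioo (0:ℝ) 1)
    (g : ℕ → X → ℝ) (hg : ∀ n, Continuous (g n))
    (hlim : ∀ x, Tendsto (fun n => g n x) atTop (𝓝 (f₀ x))) (k : ℕ) :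
    ∃ (s : X → ℝ) (φ : ℕ → Y → ℝ),
      (∀ n, Continuous (φ n)) ∧ (∀ n y, φ n y ∈ Set.Icc (0:ℝ) 1) ∧
      (∀ x, |s x - f₀ x| ≤ (2:ℝ)⁻¹ ^ k) ∧
      (∀ x, ∀ᶠ n in atTop, φ n (ι x) = s x) := by
  classical
  set ε : ℝ := (2:ℝ)⁻¹ ^ k with hεdef
  have hε : 0 < ε := pow_pos (by norm_num) k
  set N : ℕ := 2 ^ k with hNdef
  have hNε : (N : ℝ) * ε = 1 := by
    rw [hNdef, hεdef]
    push_cast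
    rw [← mul_pow]
    norm_num
  -- closed pieces of the preimages of the intervals
  choose F hFcl hFmono hFun using fun j : ℕ =>
    fsigma_preimage f₀ g hg hlim ((j:ℝ) * ε - ε) ((j:ℝ) * ε + ε)
  -- coded closures in Y
  set A : ℕ → Set Y := fun c => closure (ι '' F (c % (N+1)) (c / (N+1))) with hAdef
  have hAcl : ∀ c, IsClosed (A c) := fun c => isClosed_closure
  have htrace : ∀ c x, ι x ∈ A c → x ∈ F (c % (N+1)) (c / (N+1)) := by
    intro c x hx
    have h1 : x ∈ closure (F (c % (N+1)) (c / (N+1))) := by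
      rw [hι.closure_eq_preimage_closure_image]
      exact hx
    rwa [(hFcl _ _).closure_eq] at h1
  set B : ℕ → Set Y := fun c => ⋃ c' ∈ Set.Iio c, A c' with hBdef
  have hBcl : ∀ c, IsClosed (B c) :=
    fun c => (Set.finite_Iio c).isClosed_biUnion fun c' _ => hAcl c'
  set piece : ℕ → ℕ → Set Y := fun c r =>
    A c ∩ ⋂ z ∈ B c, {y | 1/((r:ℝ)+1) ≤ dist y z} with hpdef
  have hpcl : ∀ c r, IsClosed (piece c r) := by
    intro c r
    refine (hAcl c).inter (isClosed_biInter fun z _ => ?_)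
    exact isClosed_le continuous_const (continuous_id.dist continuous_const)
  have hpieceB : ∀ c r y, y ∈ piece c r → y ∉ B c := by
    intro c r y hy hyB
    have h1 : 1/((r:ℝ)+1) ≤ dist y y := by
      have := hy.2
      rw [Set.mem_iInter₂] at this
      exact this y hyB
    rw [dist_self] at h1
    have : (0:ℝ) < 1/((r:ℝ)+1) := by positivity
    linarith
  have hkey : ∀ c r c' r' y, c' < c → y ∈ piece c r → y ∈ piece c' r' → False := by
    intro c r c' r' y hlt hy hy'
    exact hpieceB c r y hy (Set.mem_biUnion hlt hy'.1)
  -- the disjointified stage sets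
  set D : ℕ → ℕ → Set Y := fun j m =>
    ⋃ c ∈ Set.Iic m, ⋃ r ∈ Set.Iic m, if c % (N+1) = j then piece c r else ∅ with hDdef
  have hDcl : ∀ j m, IsClosed (D j m) := by
    intro j m
    refine (Set.finite_Iic m).isClosed_biUnion fun c _ => ?_
    refine (Set.finite_Iic m).isClosed_biUnion fun r _ => ?_
    split
    · exact hpcl c r
    · exact isClosed_empty
  have hDmem : ∀ j m y, y ∈ D j m → ∃ c r, c % (N+1) = j ∧ y ∈ piece c r := by
    intro j m y hy
    simp only [hDdef, Set.mem_iUnion] at hy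
    obtain ⟨c, -, r, -, hy⟩ := hy
    by_cases hc : c % (N+1) = j
    · rw [if_pos hc] at hy; exact ⟨c, r, hc, hy⟩
    · rw [if_neg hc] at hy; exact absurd hy (Set.notMem_empty y)
  have hDmono : ∀ j, Monotone (D j) := by
    intro j m m' hmm
    simp only [hDdef]
    refine Set.biUnion_subset_biUnion_left (Set.Iic_subset_Iic.2 hmm) |>.trans ?_
    refine Set.iUnion₂_mono fun c _ => ?_
    exact Set.biUnion_subset_biUnion_left (Set.Iic_subset_Iic.2 hmm)
  have hDdisj : ∀ m m' j j', j ≠ j' → ∀ y, y ∈ D j m → y ∈ D j' m' → False := by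
    intro m m' j j' hjj y hy hy'
    obtain ⟨c, r, hc, hyc⟩ := hDmem j m y hy
    obtain ⟨c', r', hc', hyc'⟩ := hDmem j' m' y hy'
    have hcc : c ≠ c' := fun h => hjj (hc ▸ hc' ▸ h ▸ rfl)
    rcases lt_or_gt_of_ne hcc with h | h
    · exact hkey c' r' c r y h hyc' hyc
    · exact hkey c r c' r' y h hyc hyc'
  -- covering: every point of X lands in some piece
  have hex : ∀ x : X, ∃ c, ι x ∈ A c := by
    intro x
    set j₁ : ℕ := ⌊f₀ x * 2 ^ k⌋₊ with hj₁
    have hx0 : (0:ℝ) ≤ f₀ x * 2 ^ k := by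
      have := (hf₀ x).1
      positivity
    have hfl : (j₁ : ℝ) ≤ f₀ x * 2 ^ k := Nat.floor_le hx0
    have hfu : f₀ x * 2 ^ k < (j₁ : ℝ) + 1 := Nat.lt_floor_add_one _
    have h2ε : (2:ℝ) ^ k * ε = 1 := by
      rw [hεdef, ← mul_pow]; norm_num
    have hmem : f₀ x ∈ Set.Ioo ((j₁:ℝ) * ε - ε) ((j₁:ℝ) * ε + ε) := by
      constructor
      · have : (j₁ : ℝ) * ε ≤ f₀ x := by
          calc (j₁ : ℝ) * ε ≤ (f₀ x * 2 ^ k) * ε := by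
                exact mul_le_mul_of_nonneg_right hfl hε.le
            _ = f₀ x := by rw [mul_assoc, h2ε, mul_one]
        linarith
      · calc f₀ x = (f₀ x * 2 ^ k) * ε := by rw [mul_assoc, h2ε, mul_one]
          _ < ((j₁:ℝ) + 1) * ε := by exact mul_lt_mul_of_pos_right hfu hε
          _ = (j₁:ℝ) * ε + ε := by ring
    have hxE : x ∈ ⋃ n, F j₁ n := by rw [hFun j₁]; exact hmem
    obtain ⟨n, hn⟩ := Set.mem_iUnion.1 hxE
    have hj₁N : j₁ < N + 1 := by
      have h1 : f₀ x * 2 ^ k < (N:ℝ) := by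
        have := (hf₀ x).2
        have h2 : (N:ℝ) = 2 ^ k := by rw [hNdef]; push_cast; ring
        rw [h2]
        nlinarith [pow_pos (show (0:ℝ) < 2 by norm_num) k]
      have := Nat.floor_lt hx0 |>.2 (by exact_mod_cast h1)
      omega
    refine ⟨(N+1) * n + j₁, ?_⟩
    have hmod : ((N+1) * n + j₁) % (N+1) = j₁ := by
      rw [Nat.mul_add_mod]
      exact Nat.mod_eq_of_lt hj₁N
    have hdiv : ((N+1) * n + j₁) / (N+1) = n := by
      rw [Nat.mul_add_div (N.succ_pos)]
      rw [Nat.div_eq_of_lt hj₁N, add_zero]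
    rw [hAdef]
    simp only [hmod, hdiv]
    exact subset_closure (Set.mem_image_of_mem ι hn)
  set c₀ : X → ℕ := fun x => Nat.find (hex x) with hc₀def
  have hc₀A : ∀ x, ι x ∈ A (c₀ x) := fun x => Nat.find_spec (hex x)
  have hc₀min : ∀ x c', c' < c₀ x → ι x ∉ A c' := fun x c' h => Nat.find_min (hex x) h
  have hc₀B : ∀ x, ι x ∉ B (c₀ x) := by
    intro x hx
    obtain ⟨c', hc', hx⟩ := Set.mem_iUnion₂.1 hx
    exact hc₀min x c' hc' hx
  have hcover : ∀ x : X, ∃ r, ι x ∈ piece (c₀ x) r := by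
    intro x
    by_cases hB : (B (c₀ x)).Nonempty
    · have hpos : 0 < infDist (ι x) (B (c₀ x)) :=
        ((hBcl _).notMem_iff_infDist_pos hB).1 (hc₀B x)
      obtain ⟨r, hr⟩ := exists_nat_one_div_lt hpos
      refine ⟨r, hc₀A x, ?_⟩
      rw [Set.mem_iInter₂]
      intro z hz
      exact le_trans hr.le (infDist_le_dist_of_mem hz)
    · refine ⟨0, hc₀A x, ?_⟩
      rw [Set.mem_iInter₂]
      intro z hz
      exact absurd ⟨z, hz⟩ hB
  -- the step function
  set jj : X → ℕ := fun x => c₀ x % (N+1) with hjjdef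
  have hjjN : ∀ x, jj x ≤ N := fun x => Nat.lt_succ_iff.1 (Nat.mod_lt _ N.succ_pos)
  set s : X → ℝ := fun x => (jj x : ℝ) * ε with hsdef
  have hs : ∀ x, |s x - f₀ x| ≤ ε := by
    intro x
    have hxF := htrace (c₀ x) x (hc₀A x)
    have hxE : x ∈ f₀ ⁻¹' (Set.Ioo ((jj x : ℝ) * ε - ε) ((jj x:ℝ) * ε + ε)) := by
      rw [← hFun (jj x)]
      exact Set.mem_iUnion.2 ⟨c₀ x / (N+1), hxF⟩
    obtain ⟨h1, h2⟩ := hxE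
    rw [hsdef, abs_sub_le_iff]
    constructor <;> simp only <;> linarith
  -- eventual membership in the stage sets
  have hDev : ∀ x, ∃ M, ∀ n ≥ M, ι x ∈ D (jj x) n := by
    intro x
    obtain ⟨r, hr⟩ := hcover x
    refine ⟨max (c₀ x) r, fun n hn => ?_⟩
    simp only [hDdef, Set.mem_iUnion]
    refine ⟨c₀ x, Set.mem_Iic.2 (le_trans (le_max_left _ _) hn), r,
      Set.mem_Iic.2 (le_trans (le_max_right _ _) hn), ?_⟩
    rw [if_pos rfl]
    exact hr
  -- the weights
  set U : ℕ → ℕ → Set Y := fun j n => ⋃ l ∈ {l | l ≤ N ∧ l ≠ j}, D l n with hUdef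
  have hUcl : ∀ j n, IsClosed (U j n) := by
    intro j n
    refine Set.Finite.isClosed_biUnion ?_ fun l _ => hDcl l n
    exact (Set.finite_Iic N).subset fun l hl => hl.1
  set w : ℕ → ℕ → Y → ℝ := fun j n y =>
    if (U j n).Nonempty then infDist y (U j n) else 1 with hwdef
  have hwcont : ∀ j n, Continuous (w j n) := by
    intro j n
    rw [hwdef]
    dsimp only
    split
    · exact continuous_infDist_pt _
    · exact continuous_const
  have hwnonneg : ∀ j n y, 0 ≤ w j n y := by
    intro j n y
    rw [hwdef]
    dsimp only
    split
    · exact infDist_nonneg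
    · norm_num
  have hwpos_of_notmem : ∀ j n y, y ∉ U j n → 0 < w j n y := by
    intro j n y hy
    rw [hwdef]
    dsimp only
    split
    · rename_i hne
      exact ((hUcl j n).notMem_iff_infDist_pos hne).1 hy
    · norm_num
  have hwzero : ∀ j n y, y ∈ U j n → w j n y = 0 := by
    intro j n y hy
    rw [hwdef]
    dsimp only
    rw [if_pos ⟨y, hy⟩]
    exact infDist_zero_of_mem hy
  set den : ℕ → Y → ℝ := fun n y => ∑ j ∈ Finset.range (N+1), w j n y with hdendef
  have hdenpos : ∀ n y, 0 < den n y := by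
    intro n y
    by_cases hyD : ∃ j₀, j₀ ≤ N ∧ y ∈ D j₀ n
    · obtain ⟨j₀, hj₀, hyj₀⟩ := hyD
      have hnot : y ∉ U j₀ n := by
        intro hy
        obtain ⟨l, hl, hyl⟩ := Set.mem_iUnion₂.1 hy
        exact hDdisj n n l j₀ hl.2 y hyl hyj₀
      refine Finset.sum_pos' (fun j _ => hwnonneg j n y) ⟨j₀, Finset.mem_range.2 (Nat.lt_succ_of_le hj₀), ?_⟩
      exact hwpos_of_notmem j₀ n y hnot
    · have hnot : y ∉ U 0 n := by
        intro hy
        obtain ⟨l, hl, hyl⟩ := Set.mem_iUnion₂.1 hy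
        exact hyD ⟨l, hl.1, hyl⟩
      refine Finset.sum_pos' (fun j _ => hwnonneg j n y) ⟨0, Finset.mem_range.2 (N.succ_pos), ?_⟩
      exact hwpos_of_notmem 0 n y hnot
  set φ : ℕ → Y → ℝ := fun n y =>
    (∑ j ∈ Finset.range (N+1), ((j:ℝ) * ε) * w j n y) / den n y with hφdef
  refine ⟨s, φ, ?_, ?_, fun x => (hs x), ?_⟩
  · intro n
    rw [hφdef]
    refine Continuous.div ?_ ?_ (fun y => (hdenpos n y).ne')
    · exact continuous_finset_sum _ fun j _ => (continuous_const.mul (hwcont j n))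
    · exact continuous_finset_sum _ fun j _ => hwcont j n
  · intro n y
    have hnum_nonneg : 0 ≤ ∑ j ∈ Finset.range (N+1), ((j:ℝ) * ε) * w j n y := by
      refine Finset.sum_nonneg fun j _ => ?_
      have : (0:ℝ) ≤ (j:ℝ) * ε := by positivity
      exact mul_nonneg this (hwnonneg j n y)
    constructor
    · exact div_nonneg hnum_nonneg (hdenpos n y).le
    · rw [div_le_one (hdenpos n y)]
      refine Finset.sum_le_sum fun j hj => ?_
      have hjN : (j:ℝ) * ε ≤ 1 := by
        have hj' : j ≤ N := Nat.lt_succ_iff.1 (Finset.mem_range.1 hj)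
        calc (j:ℝ) * ε ≤ (N:ℝ) * ε := by
              exact mul_le_mul_of_nonneg_right (by exact_mod_cast hj') hε.le
          _ = 1 := hNε
      exact mul_le_of_le_one_left (hwnonneg j n y) hjN
  · intro x
    obtain ⟨M, hM⟩ := hDev x
    rw [eventually_atTop]
    refine ⟨M, fun n hn => ?_⟩
    have hxD : ι x ∈ D (jj x) n := hM n hn
    have hwz : ∀ j, j ≤ N → j ≠ jj x → w j n (ι x) = 0 := by
      intro j hjle hjne
      refine hwzero j n (ι x) ?_
      exact Set.mem_biUnion ⟨hjjN x, fun h => hjne h.symm⟩ hxD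
    have hnum : (∑ j ∈ Finset.range (N+1), ((j:ℝ) * ε) * w j n (ι x))
        = ((jj x : ℝ) * ε) * w (jj x) n (ι x) := by
      refine Finset.sum_eq_single (jj x) ?_ ?_
      · intro j hj hjne
        rw [hwz j (Nat.lt_succ_iff.1 (Finset.mem_range.1 hj)) hjne, mul_zero]
      · intro h
        exact absurd (Finset.mem_range.2 (Nat.lt_succ_iff.2 (hjjN x))) h
    have hden : den n (ι x) = w (jj x) n (ι x) := by
      rw [hdendef]
      refine Finset.sum_eq_single (jj x) ?_ ?_
      · intro j hj hjne
        exact hwz j (Nat.lt_succ_iff.1 (Finset.mem_range.1 hj)) hjne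
      · intro h
        exact absurd (Finset.mem_range.2 (Nat.lt_succ_iff.2 (hjjN x))) h
    have hdenne : w (jj x) n (ι x) ≠ 0 := by
      have := hdenpos n (ι x)
      rw [hden] at this
      exact this.ne'
    rw [hφdef]
    dsimp only
    rw [hnum, hden, mul_div_assoc, div_self hdenne, mul_one]

noncomputable def clampR (a t : ℝ) : ℝ := max (-a) (min a t)

lemma clampR_abs_le {a : ℝ} (ha : 0 ≤ a) (t : ℝ) : |clampR a t| ≤ a := by
  rw [abs_le, clampR]
  refine ⟨le_max_left _ _, max_le (by linarith) (min_le_left _ _)⟩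

lemma clampR_eq {a t : ℝ} (h : |t| ≤ a) : clampR a t = t := by
  rw [abs_le] at h
  rw [clampR, min_eq_right h.2, max_eq_right h.1]

lemma continuous_clampR (a : ℝ) {α : Type*} [TopologicalSpace α] {f : α → ℝ}
    (hf : Continuous f) : Continuous (fun z => clampR a (f z)) :=
  continuous_const.max (continuous_const.min hf)

lemma geo_tail (K n : ℕ) : ∑ i ∈ Finset.Ico K n, (2⁻¹:ℝ)^(i+1) ≤ (2⁻¹:ℝ)^K := by
  rw [Finset.sum_Ico_eq_sum_range]
  have h1 : ∀ j : ℕ, (2⁻¹:ℝ)^(K + j + 1) = (2⁻¹)^K * (2⁻¹ * (2⁻¹)^j) := by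
    intro j; ring
  calc ∑ j ∈ Finset.range (n - K), (2⁻¹:ℝ)^(K + j + 1)
      = (2⁻¹)^K * (2⁻¹ * ∑ j ∈ Finset.range (n - K), (2⁻¹:ℝ)^j) := by
        rw [Finset.mul_sum, Finset.mul_sum]
        exact Finset.sum_congr rfl fun j _ => by rw [h1 j]
    _ ≤ (2⁻¹)^K * (2⁻¹ * 2) := by
        refine mul_le_mul_of_nonneg_left (mul_le_mul_of_nonneg_left ?_ (by norm_num))
          (by positivity)
        have := sum_geometric_two_le (n - K)
        simpa [one_div] using this
    _ = (2⁻¹)^K := by ring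

lemma key_lemma {X Y : Type*} [TopologicalSpace X] [MetricSpace Y] (ι : X → Y)
    (hι : IsInducing ι)
    (f₀ : X → ℝ) (hf₀ : ∀ x, f₀ x ∈ Set.Ioo (0:ℝ) 1)
    (g : ℕ → X → ℝ) (hg : ∀ n, Continuous (g n))
    (hlim : ∀ x, Tendsto (fun n => g n x) atTop (𝓝 (f₀ x))) :
    ∃ Φ : ℕ → Y → ℝ, (∀ n, Continuous (Φ n)) ∧
      ∀ x, Tendsto (fun n => Φ n (ι x)) atTop (𝓝 (f₀ x)) := by
  classical
  choose s φ hφcont hφbd hs hev using fun k => level_lemma ι hι f₀ hf₀ g hg hlim k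
  set Φ : ℕ → Y → ℝ := fun n y =>
    φ 0 n y + ∑ i ∈ Finset.range n,
      clampR (3 * (2⁻¹:ℝ)^(i+1)) (φ (i+1) n y - φ i n y) with hΦdef
  have hT : ∀ i x, |s (i+1) x - s i x| ≤ 3 * (2⁻¹:ℝ)^(i+1) := by
    intro i x
    have h1 := hs (i+1) x
    have h2 := hs i x
    have h3 : ((2:ℝ)⁻¹)^i = 2 * ((2:ℝ)⁻¹)^(i+1) := by
      rw [pow_succ]; ring
    calc |s (i+1) x - s i x| = |(s (i+1) x - f₀ x) - (s i x - f₀ x)| := by ring_nf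
      _ ≤ |s (i+1) x - f₀ x| + |s i x - f₀ x| := abs_sub _ _
      _ ≤ (2⁻¹)^(i+1) + (2⁻¹)^i := add_le_add h1 h2
      _ = 3 * (2⁻¹)^(i+1) := by rw [h3]; ring
  refine ⟨Φ, ?_, ?_⟩
  · intro n
    refine (hφcont 0 n).add (continuous_finset_sum _ fun i _ => ?_)
    exact continuous_clampR _ ((hφcont (i+1) n).sub (hφcont i n))
  · intro x
    rw [Metric.tendsto_atTop]
    intro ε' hε'
    obtain ⟨K, hK⟩ : ∃ K : ℕ, 8 * (2⁻¹:ℝ)^K < ε' := by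
      obtain ⟨K, hK⟩ := exists_pow_lt_of_lt_one (show (0:ℝ) < ε'/8 by linarith)
        (show (2⁻¹:ℝ) < 1 by norm_num)
      exact ⟨K, by linarith⟩
    have hMex : ∀ k, ∃ M, ∀ n ≥ M, φ k n (ι x) = s k x := by
      intro k
      exact eventually_atTop.1 (hev k x)
    choose M hM using hMex
    set N₀ : ℕ := max K ((Finset.range (K+1)).sup M) with hN₀
    refine ⟨N₀, fun n hn => ?_⟩
    have hnK : K ≤ n := le_trans (le_max_left _ _) hn
    have heqk : ∀ k ≤ K, φ k n (ι x) = s k x := by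
      intro k hk
      refine hM k n (le_trans ?_ (le_trans (le_max_right K _) hn))
      exact Finset.le_sup (Finset.mem_range.2 (Nat.lt_succ_of_le hk))
    have hkeyeq : Φ n (ι x) - f₀ x = (φ 0 n (ι x) - s 0 x)
        + (∑ i ∈ Finset.range n,
            (clampR (3 * (2⁻¹:ℝ)^(i+1)) (φ (i+1) n (ι x) - φ i n (ι x))
              - (s (i+1) x - s i x)))
        + (s n x - f₀ x) := by
      rw [Finset.sum_sub_distrib, Finset.sum_range_sub (fun i => s i x)]
      rw [hΦdef]
      ring
    rw [Real.dist_eq, hkeyeq]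
    have h0 : φ 0 n (ι x) - s 0 x = 0 := by rw [heqk 0 (Nat.zero_le K), sub_self]
    have hsum : |∑ i ∈ Finset.range n,
        (clampR (3 * (2⁻¹:ℝ)^(i+1)) (φ (i+1) n (ι x) - φ i n (ι x))
          - (s (i+1) x - s i x))| ≤ 6 * (2⁻¹:ℝ)^K := by
      rw [← Finset.sum_range_add_sum_Ico _ hnK]
      have hfirst : ∑ i ∈ Finset.range K,
          (clampR (3 * (2⁻¹:ℝ)^(i+1)) (φ (i+1) n (ι x) - φ i n (ι x))
            - (s (i+1) x - s i x)) = 0 := by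
        refine Finset.sum_eq_zero fun i hi => ?_
        have hiK := Finset.mem_range.1 hi
        rw [heqk (i+1) (by omega), heqk i (by omega), clampR_eq (hT i x), sub_self]
      rw [hfirst, zero_add]
      calc |∑ i ∈ Finset.Ico K n,
          (clampR (3 * (2⁻¹:ℝ)^(i+1)) (φ (i+1) n (ι x) - φ i n (ι x))
            - (s (i+1) x - s i x))|
          ≤ ∑ i ∈ Finset.Ico K n,
            |clampR (3 * (2⁻¹:ℝ)^(i+1)) (φ (i+1) n (ι x) - φ i n (ι x))
              - (s (i+1) x - s i x)| := Finset.abs_sum_le_sum_abs _ _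
        _ ≤ ∑ i ∈ Finset.Ico K n, 6 * (2⁻¹:ℝ)^(i+1) := by
            refine Finset.sum_le_sum fun i _ => ?_
            have h1 : |clampR (3 * (2⁻¹:ℝ)^(i+1)) (φ (i+1) n (ι x) - φ i n (ι x))|
                ≤ 3 * (2⁻¹:ℝ)^(i+1) := clampR_abs_le (by positivity) _
            have h2 := hT i x
            calc |clampR (3 * (2⁻¹:ℝ)^(i+1)) (φ (i+1) n (ι x) - φ i n (ι x))
                - (s (i+1) x - s i x)|
                ≤ |clampR (3 * (2⁻¹:ℝ)^(i+1)) (φ (i+1) n (ι x) - φ i n (ι x))|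
                  + |s (i+1) x - s i x| := abs_sub _ _
              _ ≤ 3 * (2⁻¹:ℝ)^(i+1) + 3 * (2⁻¹:ℝ)^(i+1) := add_le_add h1 h2
              _ = 6 * (2⁻¹:ℝ)^(i+1) := by ring
        _ = 6 * ∑ i ∈ Finset.Ico K n, (2⁻¹:ℝ)^(i+1) := by rw [Finset.mul_sum]
        _ ≤ 6 * (2⁻¹:ℝ)^K := mul_le_mul_of_nonneg_left (geo_tail K n) (by norm_num)
    have hlast : |s n x - f₀ x| ≤ (2⁻¹:ℝ)^K := by
      refine le_trans (hs n x) ?_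
      exact pow_le_pow_of_le_one (by norm_num) (by norm_num) hnK
    calc |(φ 0 n (ι x) - s 0 x) + (∑ i ∈ Finset.range n,
          (clampR (3 * (2⁻¹:ℝ)^(i+1)) (φ (i+1) n (ι x) - φ i n (ι x))
            - (s (i+1) x - s i x))) + (s n x - f₀ x)|
        ≤ |(φ 0 n (ι x) - s 0 x) + (∑ i ∈ Finset.range n,
          (clampR (3 * (2⁻¹:ℝ)^(i+1)) (φ (i+1) n (ι x) - φ i n (ι x))
            - (s (i+1) x - s i x)))| + |s n x - f₀ x| := abs_add_le _ _
      _ ≤ (|φ 0 n (ι x) - s 0 x| + |∑ i ∈ Finset.range n,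
          (clampR (3 * (2⁻¹:ℝ)^(i+1)) (φ (i+1) n (ι x) - φ i n (ι x))
            - (s (i+1) x - s i x))|) + |s n x - f₀ x| :=
          add_le_add_left (abs_add_le _ _) _
      _ ≤ (0 + 6 * (2⁻¹:ℝ)^K) + (2⁻¹:ℝ)^K := by
          refine add_le_add (add_le_add ?_ hsum) hlast
          rw [h0, abs_zero]
      _ < ε' := by
          have hp : (0:ℝ) < (2⁻¹:ℝ)^K := by positivity
          linarith


abbrev HCube : Type := ℕ → unitInterval

lemma exists_inducing (X : Type*) [MetricSpace X] [SeparableSpace X] [Nonempty X] :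
    ∃ ι : X → HCube, IsInducing ι := by
  obtain ⟨d, hd⟩ := TopologicalSpace.exists_dense_seq X
  have hmem : ∀ (x : X) (n : ℕ), min 1 (dist x (d n)) ∈ unitInterval := by
    intro x n
    exact ⟨le_min (by norm_num) dist_nonneg, min_le_left _ _⟩
  set ι : X → HCube := fun x n => ⟨min 1 (dist x (d n)), hmem x n⟩ with hιdef
  have hcont : Continuous ι := by
    refine continuous_pi fun n => Continuous.subtype_mk ?_ _
    exact continuous_const.min (continuous_id.dist continuous_const)
  refine ⟨ι, isInducing_iff_nhds.2 fun x => le_antisymm ?_ ?_⟩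
  · exact hcont.continuousAt.le_comap
  · -- comap ι (𝓝 (ι x)) ≤ 𝓝 x
    intro S hS
    obtain ⟨ε, hε, hball⟩ := Metric.mem_nhds_iff.1 hS
    set ε' : ℝ := min ε 1 with hε'def
    have hε' : 0 < ε' := lt_min hε (by norm_num)
    obtain ⟨n, hn⟩ := (Metric.denseRange_iff.1 hd) x (ε'/3) (by linarith)
    set δ : ℝ := min ((1/2:ℝ)^n) (ε'/3) with hδdef
    have hδ : 0 < δ := lt_min (by positivity) (by linarith)
    refine Filter.mem_comap.2 ⟨Metric.ball (ι x) δ, Metric.ball_mem_nhds _ hδ, ?_⟩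
    intro y hy
    simp only [Set.mem_preimage, Metric.mem_ball] at hy
    have hcoord : dist (ι y n) (ι x n) ≤ dist (ι y) (ι x) := by
      refine PiCountable.dist_le_dist_pi_of_dist_lt (lt_of_lt_of_le hy ?_)
      show δ ≤ (2⁻¹:ℝ) ^ (Encodable.encode n)
      have : Encodable.encode n = n := rfl
      rw [this, ← one_div]
      exact min_le_left _ _
    have hcoord' : |min 1 (dist y (d n)) - min 1 (dist x (d n))| < ε'/3 := by
      have h1 : dist (ι y n) (ι x n) = |min 1 (dist y (d n)) - min 1 (dist x (d n))| := by
        rw [Subtype.dist_eq, Real.dist_eq]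
      rw [← h1]
      exact lt_of_le_of_lt hcoord (lt_of_lt_of_le hy (min_le_right _ _))
    have hxd : dist x (d n) < ε'/3 := hn
    have hε'1 : ε' ≤ 1 := min_le_right _ _
    have hminx : min 1 (dist x (d n)) = dist x (d n) := min_eq_right (by linarith)
    have hminy : min 1 (dist y (d n)) = dist y (d n) := by
      rcases le_or_gt (dist y (d n)) 1 with h | h
      · exact min_eq_right h
      · exfalso
        rw [min_eq_left h.le, hminx] at hcoord'
        have := abs_lt.1 hcoord'
        linarith
    rw [hminx, hminy] at hcoord'
    apply hball
    have : dist y x < ε' := by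
      have h2 := abs_lt.1 hcoord'
      calc dist y x ≤ dist y (d n) + dist (d n) x := dist_triangle _ _ _
        _ = dist y (d n) + dist x (d n) := by rw [dist_comm (d n) x]
        _ < ε' := by linarith
    exact Metric.mem_ball.2 (lt_of_lt_of_le this (min_le_left _ _))


def trR (t : ℝ) : ℝ := (1 + t / (1 + |t|)) / 2

lemma one_add_abs_pos (t : ℝ) : 0 < 1 + |t| := by positivity

lemma trR_continuous : Continuous trR := by
  unfold trR
  refine Continuous.div_const ?_ 2
  refine continuous_const.add (Continuous.div continuous_id ?_ fun t => (one_add_abs_pos t).ne') 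
  exact continuous_const.add continuous_abs

lemma abs_div_one_add_abs_lt_one (t : ℝ) : |t / (1 + |t|)| < 1 := by
  rw [abs_div, abs_of_pos (one_add_abs_pos t), div_lt_one (one_add_abs_pos t)]
  linarith [abs_nonneg t]

lemma trR_mem (t : ℝ) : trR t ∈ Set.Ioo (0:ℝ) 1 := by
  have := abs_lt.1 (abs_div_one_add_abs_lt_one t)
  constructor <;> (unfold trR; ) <;> [linarith [this.1]; linarith [this.2]]

lemma two_trR_sub_one (t : ℝ) : 2 * trR t - 1 = t / (1 + |t|) := by unfold trR; ring

def invG (c : ℝ) : ℝ := c / (1 - |c|)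

lemma invG_tr (t : ℝ) : invG (t / (1 + |t|)) = t := by
  unfold invG
  have h := one_add_abs_pos t
  rw [abs_div, abs_of_pos h]
  rw [show (1:ℝ) - |t| / (1 + |t|) = 1 / (1 + |t|) by field_simp; ring]
  field_simp

def psiR (n : ℕ) (s : ℝ) : ℝ := invG (clampR (1 - 1/((n:ℝ)+2)) (2*s - 1))

lemma psiR_denom_pos (n : ℕ) (s : ℝ) :
    0 < 1 - |clampR (1 - 1/((n:ℝ)+2)) (2*s - 1)| := by
  have h2 : (0:ℝ) < 1/((n:ℝ)+2) := by positivity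
  have h3 : (0:ℝ) ≤ 1 - 1/((n:ℝ)+2) := by
    have : 1/((n:ℝ)+2) ≤ 1/2 := by
      rw [div_le_div_iff₀ (by positivity) (by norm_num)]
      have : (0:ℝ) ≤ (n:ℝ) := Nat.cast_nonneg n
      linarith
    linarith
  have := clampR_abs_le h3 (2*s - 1)
  linarith

lemma psiR_continuous (n : ℕ) : Continuous (psiR n) := by
  unfold psiR invG
  refine Continuous.div ?_ ?_ ?_
  · exact continuous_clampR _ (by continuity)
  · exact continuous_const.sub ((continuous_clampR _ (by continuity)).abs)
  · intro s
    exact (psiR_denom_pos n s).ne'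

lemma psiR_tendsto (t : ℝ) (σ : ℕ → ℝ) (hσ : Tendsto σ atTop (𝓝 (trR t))) :
    Tendsto (fun n => psiR n (σ n)) atTop (𝓝 t) := by
  set τ : ℝ := t / (1 + |t|) with hτdef
  have hτlt : |τ| < 1 := abs_div_one_add_abs_lt_one t
  set ρ : ℝ := (1 + |τ|)/2 with hρdef
  have hρ1 : ρ < 1 := by rw [hρdef]; linarith
  have hτρ : |τ| < ρ := by rw [hρdef]; linarith
  have hτlim : Tendsto (fun n => 2 * σ n - 1) atTop (𝓝 τ) := by
    have h1 : Tendsto (fun n => 2 * σ n - 1) atTop (𝓝 (2 * trR t - 1)) :=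
      ((hσ.const_mul 2).sub_const 1)
    rwa [two_trR_sub_one t] at h1
  have hev1 : ∀ᶠ n in atTop, |2 * σ n - 1| ≤ ρ := by
    have hopen : ∀ᶠ z in 𝓝 τ, |z| < ρ :=
      (isOpen_lt continuous_abs continuous_const).eventually_mem hτρ
    exact (hτlim.eventually hopen).mono fun n h => h.le
  have hev2 : ∀ᶠ n : ℕ in atTop, ρ ≤ 1 - 1/((n:ℝ)+2) := by
    obtain ⟨N, hN⟩ := exists_nat_one_div_lt (show (0:ℝ) < 1 - ρ by linarith)
    rw [eventually_atTop]
    refine ⟨N, fun n hn => ?_⟩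
    have h1 : 1/((n:ℝ)+2) ≤ 1/((N:ℝ)+1) := by
      apply one_div_le_one_div_of_le (by positivity)
      have : (N:ℝ) ≤ (n:ℝ) := Nat.cast_le.2 hn
      linarith
    linarith
  have heq : ∀ᶠ n in atTop, psiR n (σ n) = invG (2 * σ n - 1) := by
    filter_upwards [hev1, hev2] with n h1 h2
    unfold psiR
    rw [clampR_eq (le_trans h1 h2)]
  have hG : ContinuousAt invG τ := by
    unfold invG
    refine ContinuousAt.div continuousAt_id ?_ (by rw [sub_ne_zero]; intro h; rw [← h] at hτlt; simp at hτlt)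
    exact continuousAt_const.sub continuous_abs.continuousAt
  have hfin : Tendsto (fun n => invG (2 * σ n - 1)) atTop (𝓝 (invG τ)) :=
    hG.tendsto.comp hτlim
  rw [hτdef, invG_tr] at hfin
  exact Tendsto.congr' (heq.mono fun n h => h.symm) hfin

theorem b1_seqSeparable_of_separable_metric
    {X : Type*} [MetricSpace X] [SeparableSpace X] :
    ∃ S : Set (X → ℝ), S.Countable ∧ (∀ f ∈ S, Continuous f) ∧
      ∀ f : X → ℝ, IsBaire1 f → ∃ u : ℕ → X → ℝ, (∀ n, u n ∈ S) ∧
        ∀ x, Tendsto (fun n => u n x) atTop (𝓝 (f x)) := by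
  classical
  rcases isEmpty_or_nonempty X with hX | hX
  · refine ⟨{fun _ => 0}, Set.countable_singleton _, ?_, ?_⟩
    · rintro f rfl
      exact continuous_const
    · intro f _
      refine ⟨fun _ _ => 0, fun n => rfl, fun x => (IsEmpty.false x).elim⟩
  · obtain ⟨ι, hι⟩ := exists_inducing X
    obtain ⟨T, hTcount, hTdense⟩ := TopologicalSpace.exists_countable_dense C(HCube, ℝ)
    refine ⟨(fun p : C(HCube, ℝ) => (p : HCube → ℝ) ∘ ι) '' T, hTcount.image _, ?_, ?_⟩
    · rintro f ⟨p, -, rfl⟩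
      exact p.continuous.comp hι.continuous
    · intro f hf
      obtain ⟨g, hg, hlim⟩ := hf
      set f₀ : X → ℝ := fun x => trR (f x) with hf₀def
      have hf₀mem : ∀ x, f₀ x ∈ Set.Ioo (0:ℝ) 1 := fun x => trR_mem (f x)
      have hg' : ∀ n, Continuous (fun x => trR (g n x)) :=
        fun n => trR_continuous.comp (hg n)
      have hlim' : ∀ x, Tendsto (fun n => trR (g n x)) atTop (𝓝 (f₀ x)) :=
        fun x => (trR_continuous.continuousAt.tendsto).comp (hlim x)
      obtain ⟨Φ, hΦcont, hΦlim⟩ := key_lemma ι hι f₀ hf₀mem _ hg' hlim'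
      set Ψ : ℕ → C(HCube, ℝ) := fun n => ⟨fun y => psiR n (Φ n y),
        (psiR_continuous n).comp (hΦcont n)⟩ with hΨdef
      have hp : ∀ n : ℕ, ∃ p ∈ T, dist (Ψ n) p < 1/((n:ℝ)+1) := by
        intro n
        exact hTdense.exists_dist_lt (Ψ n) (by positivity)
      choose p hpT hpdist using hp
      refine ⟨fun n => (p n : HCube → ℝ) ∘ ι, fun n => Set.mem_image_of_mem _ (hpT n), ?_⟩
      intro x
      have h1 : Tendsto (fun n => psiR n (Φ n (ι x))) atTop (𝓝 (f x)) :=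
        psiR_tendsto (f x) (fun n => Φ n (ι x)) (hΦlim x)
      have h2 : Tendsto (fun n => dist (psiR n (Φ n (ι x))) ((p n) (ι x))) atTop (𝓝 0) := by
        have hb : ∀ n : ℕ, dist (psiR n (Φ n (ι x))) ((p n) (ι x)) ≤ 1/((n:ℝ)+1) := by
          intro n
          calc dist (psiR n (Φ n (ι x))) ((p n) (ι x)) = dist ((Ψ n) (ι x)) ((p n) (ι x)) := rfl
            _ ≤ dist (Ψ n) (p n) := ContinuousMap.dist_apply_le_dist _
            _ ≤ 1/((n:ℝ)+1) := (hpdist n).le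
        refine squeeze_zero (fun n => dist_nonneg) hb ?_
        exact tendsto_one_div_add_atTop_nhds_zero_nat
      exact h1.congr_dist h2

end

end B1Aux
end

section
/- Suppose there is a bijection φ from a Tychonoff space X onto a separable metrizable space Y such that (1) φ⁻¹(U) is a Z_σ-set of X for every open U ⊆ Y, and (2) φ(T) is an F_σ-set of Y for every zero-set T of X. Then B₁(X) with the pointwise convergence topology is sequentially separable. -/
open Set Filter Topology TopologicalSpace

namespace B1Aux

variable {X : Type*} [TopologicalSpace X]

/-- pointwise sequential limits from a set of functions -/
def SeqLim (S : Set (X → ℝ)) (f : X → ℝ) : Prop :=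
  ∃ u : ℕ → X → ℝ, (∀ n, u n ∈ S) ∧ ∀ x, Tendsto (fun n => u n x) atTop (𝓝 (f x))

lemma isBaire1_iff_seqLim (f : X → ℝ) :
    IsBaire1 f ↔ SeqLim {g : X → ℝ | Continuous g} f := Iff.rfl

lemma isZeroSet_empty : IsZeroSet (∅ : Set X) := by
  refine ⟨fun _ => 1, continuous_const, ?_⟩
  ext x; simp

lemma isZeroSet_univ : IsZeroSet (univ : Set X) := by
  refine ⟨fun _ => 0, continuous_const, ?_⟩
  ext x; simp

lemma isZeroSet_preimage_Icc {g : X → ℝ} (hg : Continuous g) (p q : ℝ) :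
    IsZeroSet (g ⁻¹' Icc p q) := by
  refine ⟨fun x => max (p - g x) 0 + max (g x - q) 0, by fun_prop, ?_⟩
  ext x
  simp only [mem_preimage, mem_Icc, mem_singleton_iff]
  constructor
  · rintro ⟨h1, h2⟩
    rw [max_eq_right (by linarith), max_eq_right (by linarith)]
    ring
  · intro h
    have h1 : 0 ≤ max (p - g x) 0 := le_max_right _ _
    have h2 : 0 ≤ max (g x - q) 0 := le_max_right _ _
    have e1 : max (p - g x) 0 = 0 := by linarith
    have e2 : max (g x - q) 0 = 0 := by linarith
    have := le_max_left (p - g x) 0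
    have := le_max_left (g x - q) 0
    constructor <;> nlinarith

lemma isZeroSet_iInter {Z : ℕ → Set X} (hZ : ∀ n, IsZeroSet (Z n)) :
    IsZeroSet (⋂ n, Z n) := by
  choose f hf hZf using hZ
  have hterm_nonneg : ∀ (n : ℕ) (x : X), 0 ≤ (2⁻¹ : ℝ) ^ n * min |f n x| 1 := by
    intro n x
    have : (0:ℝ) ≤ min |f n x| 1 := le_min (abs_nonneg _) zero_le_one
    positivity
  have hsumg : Summable (fun n : ℕ => (2⁻¹ : ℝ) ^ n) :=
    summable_geometric_of_lt_one (by norm_num) (by norm_num)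
  have hbd : ∀ (n : ℕ) (x : X), ‖(2⁻¹ : ℝ) ^ n * min |f n x| 1‖ ≤ (2⁻¹ : ℝ) ^ n := by
    intro n x
    rw [Real.norm_eq_abs, abs_of_nonneg (hterm_nonneg n x)]
    have h1 : min |f n x| 1 ≤ 1 := min_le_right _ _
    have h2 : (0:ℝ) ≤ (2⁻¹:ℝ)^n := by positivity
    nlinarith
  have hsummx : ∀ x : X, Summable (fun n : ℕ => (2⁻¹ : ℝ) ^ n * min |f n x| 1) := by
    intro x
    refine Summable.of_nonneg_of_le (fun n => hterm_nonneg n x) (fun n => ?_) hsumg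
    have := hbd n x
    rwa [Real.norm_eq_abs, abs_of_nonneg (hterm_nonneg n x)] at this
  refine ⟨fun x => ∑' n, (2⁻¹ : ℝ) ^ n * min |f n x| 1, ?_, ?_⟩
  · exact continuous_tsum (fun n => by fun_prop) hsumg hbd
  · ext x
    simp only [mem_iInter, mem_preimage, mem_singleton_iff]
    constructor
    · intro h
      have : ∀ n : ℕ, (2⁻¹ : ℝ) ^ n * min |f n x| 1 = 0 := by
        intro n
        have hx : f n x = 0 := by
          have := h n
          rw [hZf n] at this
          simpa using this
        simp [hx]
      have h2 : ∑' n, (2⁻¹ : ℝ) ^ n * min |f n x| 1 = ∑' _ : ℕ, (0:ℝ) := tsum_congr this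
      simpa using h2
    · intro h n
      rw [hZf n]
      simp only [mem_preimage, mem_singleton_iff]
      by_contra hne
      have hpos : 0 < (2⁻¹ : ℝ) ^ n * min |f n x| 1 := by
        have : 0 < |f n x| := abs_pos.mpr hne
        have : 0 < min |f n x| 1 := lt_min this one_pos
        positivity
      have := Summable.tsum_pos (hsummx x) (fun i => hterm_nonneg i x) n hpos
      linarith

lemma isZSigmaSet_iUnion_countable {ι : Type*} [Countable ι] (F : ι → Set X)
    (hF : ∀ i, IsZeroSet (F i)) : IsZSigmaSet (⋃ i, F i) := by
  cases isEmpty_or_nonempty ι with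
  | inl h =>
    refine ⟨fun _ => ∅, fun _ => isZeroSet_empty, ?_⟩
    simp
  | inr h =>
    obtain ⟨e, he⟩ := exists_surjective_nat ι
    refine ⟨fun n => F (e n), fun n => hF _, ?_⟩
    ext x
    simp only [mem_iUnion]
    constructor
    · rintro ⟨i, hi⟩
      obtain ⟨n, rfl⟩ := he i
      exact ⟨n, hi⟩
    · rintro ⟨n, hn⟩
      exact ⟨e n, hn⟩

lemma isZSigmaSet_iUnion {Z : ℕ → Set X} (h : ∀ n, IsZSigmaSet (Z n)) :
    IsZSigmaSet (⋃ n, Z n) := by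
  choose F hF hZF using h
  have : (⋃ n, Z n) = ⋃ p : ℕ × ℕ, F p.1 p.2 := by
    ext x
    simp only [mem_iUnion]
    constructor
    · rintro ⟨n, hn⟩
      rw [hZF n] at hn
      obtain ⟨m, hm⟩ := mem_iUnion.mp hn
      exact ⟨(n, m), hm⟩
    · rintro ⟨⟨n, m⟩, hm⟩
      refine ⟨n, ?_⟩
      rw [hZF n]
      exact mem_iUnion.mpr ⟨m, hm⟩
  rw [this]
  exact isZSigmaSet_iUnion_countable _ (fun p => hF p.1 p.2)

/-- Baire-1 functions are Zσ-measurable. -/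
lemma isZSigmaSet_preimage_of_isBaire1 {f : X → ℝ} (hf : IsBaire1 f)
    {U : Set ℝ} (hU : IsOpen U) : IsZSigmaSet (f ⁻¹' U) := by
  obtain ⟨g, hg, hlim⟩ := hf
  classical
  let ι := {t : ℚ × ℚ × ℕ // Icc (t.1 : ℝ) (t.2.1 : ℝ) ⊆ U}
  let W : ι → Set X := fun t => ⋂ m : ℕ, g (t.1.2.2 + m) ⁻¹' Icc (t.1.1 : ℝ) (t.1.2.1 : ℝ)
  have key : f ⁻¹' U = ⋃ t : ι, W t := by
    ext x
    simp only [mem_preimage, mem_iUnion]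
    constructor
    · intro hx
      obtain ⟨ε, hε, hball⟩ := Metric.isOpen_iff.mp hU (f x) hx
      obtain ⟨p, hp1, hp2⟩ := exists_rat_btwn (show f x - ε < f x by linarith)
      obtain ⟨q, hq1, hq2⟩ := exists_rat_btwn (show f x < f x + ε by linarith)
      have hsub : Icc (p : ℝ) (q : ℝ) ⊆ U := by
        intro z hz
        apply hball
        rw [Metric.mem_ball, Real.dist_eq, abs_sub_lt_iff]
        obtain ⟨hz1, hz2⟩ := hz
        constructor <;> linarith
      have hev : ∀ᶠ n in atTop, g n x ∈ Ioo (p : ℝ) (q : ℝ) :=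
        (hlim x).eventually (Ioo_mem_nhds hp2 hq1)
      obtain ⟨N, hN⟩ := eventually_atTop.mp hev
      refine ⟨⟨(p, q, N), hsub⟩, ?_⟩
      intro s hs
      simp only [mem_range] at hs
      obtain ⟨m, rfl⟩ := hs
      have := hN (N + m) (Nat.le_add_right _ _)
      exact Ioo_subset_Icc_self this
    · rintro ⟨t, ht⟩
      obtain ⟨⟨p, q, N⟩, hsub⟩ := t
      have hmem : ∀ m : ℕ, g (N + m) x ∈ Icc (p : ℝ) (q : ℝ) := by
        intro m
        have := mem_iInter.mp ht m
        exact this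
      have hlim' : Tendsto (fun m => g (N + m) x) atTop (𝓝 (f x)) := by
        have hmono : Tendsto (fun m : ℕ => N + m) atTop atTop :=
          tendsto_atTop_mono (fun m => Nat.le_add_left m N) tendsto_id
        exact (hlim x).comp hmono
      have : f x ∈ Icc (p : ℝ) (q : ℝ) :=
        isClosed_Icc.mem_of_tendsto hlim' (Eventually.of_forall hmem)
      exact hsub this
  rw [key]
  refine isZSigmaSet_iUnion_countable _ (fun t => ?_)
  exact isZeroSet_iInter (fun m => isZeroSet_preimage_Icc (hg _) _ _)

section Core

variable {T : Type*} [TopologicalSpace T]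

/-- weight functions -/
noncomputable def wfun (u : ℕ → ℕ → T → ℝ) (n i : ℕ) (y : T) : ℝ :=
  (∏ j ∈ Finset.range i, min 1 ((n:ℝ) * u j n y)) * max 0 (1 - (n:ℝ) * u i n y)

/-- the canonical approximating functions -/
noncomputable def coreD (v : ℕ → ℝ) (u : ℕ → ℕ → T → ℝ) (n : ℕ) (y : T) : ℝ :=
  (∑ i ∈ Finset.range (n+1), v i * (2⁻¹:ℝ)^i * wfun u n i y) /
    ((2⁻¹:ℝ)^n + ∑ i ∈ Finset.range (n+1), (2⁻¹:ℝ)^i * wfun u n i y)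

lemma wfun_nonneg {u : ℕ → ℕ → T → ℝ} {n : ℕ} {y : T} (h : ∀ j, 0 ≤ u j n y) (i : ℕ) :
    0 ≤ wfun u n i y := by
  apply mul_nonneg
  · apply Finset.prod_nonneg
    intro j _
    exact le_min (by norm_num) (mul_nonneg (Nat.cast_nonneg n) (h j))
  · exact le_max_left _ _

lemma wfun_le_one {u : ℕ → ℕ → T → ℝ} {n : ℕ} {y : T} (h : ∀ j, 0 ≤ u j n y) (i : ℕ) :
    wfun u n i y ≤ 1 := by
  have h1 : (∏ j ∈ Finset.range i, min 1 ((n:ℝ) * u j n y)) ≤ 1 := by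
    apply Finset.prod_le_one
    · intro j _
      exact le_min (by norm_num) (mul_nonneg (Nat.cast_nonneg n) (h j))
    · intro j _
      exact min_le_left _ _
  have h2 : max 0 (1 - (n:ℝ) * u i n y) ≤ 1 := by
    have : (n:ℝ) * u i n y ≥ 0 := mul_nonneg (Nat.cast_nonneg n) (h i)
    apply max_le (by norm_num) (by linarith)
  have h0 : 0 ≤ max 0 (1 - (n:ℝ) * u i n y) := le_max_left _ _
  calc wfun u n i y ≤ 1 * max 0 (1 - (n:ℝ) * u i n y) := by
        apply mul_le_mul_of_nonneg_right h1 h0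
    _ ≤ 1 := by simpa using h2

lemma wfun_le_min {u : ℕ → ℕ → T → ℝ} {n : ℕ} {y : T} (h : ∀ j, 0 ≤ u j n y)
    {i₀ i : ℕ} (hi : i₀ < i) : wfun u n i y ≤ min 1 ((n:ℝ) * u i₀ n y) := by
  have hmem : i₀ ∈ Finset.range i := Finset.mem_range.mpr hi
  have hnn : ∀ j, (0:ℝ) ≤ min 1 ((n:ℝ) * u j n y) := fun j =>
    le_min (by norm_num) (mul_nonneg (Nat.cast_nonneg n) (h j))
  have hprod : (∏ j ∈ Finset.range i, min 1 ((n:ℝ) * u j n y)) ≤ min 1 ((n:ℝ) * u i₀ n y) := by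
    classical
    rw [← Finset.mul_prod_erase (Finset.range i) _ hmem]
    have herase : (∏ j ∈ (Finset.range i).erase i₀, min 1 ((n:ℝ) * u j n y)) ≤ 1 :=
      Finset.prod_le_one (fun j _ => hnn j) (fun j _ => min_le_left _ _)
    have herase0 : (0:ℝ) ≤ ∏ j ∈ (Finset.range i).erase i₀, min 1 ((n:ℝ) * u j n y) :=
      Finset.prod_nonneg (fun j _ => hnn j)
    nlinarith [hnn i₀]
  have hbump : max 0 (1 - (n:ℝ) * u i n y) ≤ 1 := by
    have : (n:ℝ) * u i n y ≥ 0 := mul_nonneg (Nat.cast_nonneg n) (h i)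
    exact max_le (by norm_num) (by linarith)
  have hbump0 : 0 ≤ max 0 (1 - (n:ℝ) * u i n y) := le_max_left _ _
  calc wfun u n i y ≤ (∏ j ∈ Finset.range i, min 1 ((n:ℝ) * u j n y)) * 1 := by
        apply mul_le_mul_of_nonneg_left hbump (Finset.prod_nonneg (fun j _ => hnn j))
    _ = _ := mul_one _
    _ ≤ min 1 ((n:ℝ) * u i₀ n y) := hprod

lemma coreD_continuous (v : ℕ → ℝ) (u : ℕ → ℕ → T → ℝ) (n : ℕ)
    (hc : ∀ i, Continuous (u i n)) (hnn : ∀ i y, 0 ≤ u i n y) :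
    Continuous (fun y => coreD v u n y) := by
  have hwcont : ∀ i, Continuous (fun y => wfun u n i y) := by
    intro i
    apply Continuous.mul
    · apply continuous_finset_prod
      intro j _
      exact continuous_const.min (continuous_const.mul (hc j))
    · exact continuous_const.max (continuous_const.sub (continuous_const.mul (hc i)))
  apply Continuous.div
  · apply continuous_finset_sum
    intro i _
    exact continuous_const.mul (hwcont i)
  · apply Continuous.add continuous_const
    apply continuous_finset_sum
    intro i _
    exact continuous_const.mul (hwcont i)
  · intro y
    have hpos : (0:ℝ) < (2⁻¹:ℝ)^n := by positivity
    have hsum : (0:ℝ) ≤ ∑ i ∈ Finset.range (n+1), (2⁻¹:ℝ)^i * wfun u n i y := by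
      apply Finset.sum_nonneg
      intro i _
      exact mul_nonneg (by positivity) (wfun_nonneg (fun j => hnn j y) i)
    positivity

lemma core_tendsto (v : ℕ → ℝ) (u : ℕ → ℕ → T → ℝ) (y : T) (i₀ : ℕ)
    (hnn : ∀ i n, 0 ≤ u i n y)
    (hA : Tendsto (fun n : ℕ => (n:ℝ) * u i₀ n y) atTop (𝓝 0))
    (hB : ∀ j, j < i₀ → Tendsto (fun n : ℕ => (n:ℝ) * u j n y) atTop atTop)
    (hC : Tendsto (fun n : ℕ =>
      (∑ i ∈ Finset.Ioc i₀ n, |v i| * (2⁻¹:ℝ)^i) * min 1 ((n:ℝ) * u i₀ n y)) atTop (𝓝 0)) :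
    Tendsto (fun n => coreD v u n y) atTop (𝓝 (v i₀)) := by
  classical
  set c : ℝ := (2⁻¹ : ℝ) with hcdef
  have hc0 : (0:ℝ) < c := by norm_num
  have hbump0 : ∀ j, j < i₀ → (fun n : ℕ => wfun u n j y) =ᶠ[atTop] fun _ => 0 := by
    intro j hj
    filter_upwards [(hB j hj).eventually_ge_atTop 1] with n hn
    have hmax : max 0 (1 - (n:ℝ) * u j n y) = 0 := max_eq_left (by linarith)
    simp [wfun, hmax]
  have hwi0 : Tendsto (fun n : ℕ => wfun u n i₀ y) atTop (𝓝 1) := by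
    have hprod : Tendsto (fun n : ℕ => ∏ j ∈ Finset.range i₀, min 1 ((n:ℝ) * u j n y))
        atTop (𝓝 1) := by
      have h := tendsto_finset_prod (f := fun j (n:ℕ) => min 1 ((n:ℝ) * u j n y))
        (x := atTop) (a := fun _ => 1) (Finset.range i₀) ?_
      · simpa using h
      · intro j hj
        have hj' := Finset.mem_range.mp hj
        apply Tendsto.congr' ?_ (tendsto_const_nhds (x := (1:ℝ)))
        filter_upwards [(hB j hj').eventually_ge_atTop 1] with n hn
        exact (min_eq_left hn).symm
    have hbump : Tendsto (fun n : ℕ => max 0 (1 - (n:ℝ) * u i₀ n y)) atTop (𝓝 1) := by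
      have hcont : Continuous (fun t : ℝ => max 0 (1 - t)) :=
        continuous_const.max (continuous_const.sub continuous_id)
      have h := (hcont.tendsto 0).comp hA
      norm_num at h
      exact h
    have := hprod.mul hbump
    simp only [mul_one] at this; exact this
  have hminlim : Tendsto (fun n : ℕ => min 1 ((n:ℝ) * u i₀ n y)) atTop (𝓝 0) := by
    have hcont : Continuous (fun t : ℝ => min 1 t) := continuous_const.min continuous_id
    have h := (hcont.tendsto 0).comp hA
    norm_num at h
    exact h
  have hIoc_le : ∀ n, (∑ i ∈ Finset.Ioc i₀ n, c^i) ≤ 2 := by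
    intro n
    have hsummable : Summable (fun i : ℕ => c^i) :=
      summable_geometric_of_lt_one (by norm_num) (by norm_num)
    calc (∑ i ∈ Finset.Ioc i₀ n, c^i) ≤ ∑' i : ℕ, c^i :=
          hsummable.sum_le_tsum _ (fun i _ => by positivity)
      _ = 2 := by
          rw [tsum_geometric_of_lt_one (by norm_num) (by norm_num)]
          norm_num
  have hsplit : ∀ (g : ℕ → ℝ) (n : ℕ), i₀ ≤ n →
      (∑ i ∈ Finset.range (n+1), g i) =
        (∑ i ∈ Finset.range (i₀+1), g i) + ∑ i ∈ Finset.Ioc i₀ n, g i := by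
    intro g n hn
    have h1 : Finset.Ico (i₀+1) (n+1) = Finset.Ioc i₀ n := by
      ext k
      simp only [Finset.mem_Ico, Finset.mem_Ioc]
      omega
    rw [Finset.range_eq_Ico,
      ← Finset.sum_Ico_consecutive g (Nat.zero_le (i₀+1)) (by omega : i₀+1 ≤ n+1), h1,
      ← Finset.range_eq_Ico]
  -- numerator
  have hnum_low : Tendsto (fun n : ℕ => ∑ i ∈ Finset.range (i₀+1), v i * c^i * wfun u n i y)
      atTop (𝓝 (v i₀ * c^i₀)) := by
    have h := tendsto_finset_sum (f := fun i (n:ℕ) => v i * c^i * wfun u n i y)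
      (x := atTop) (a := fun i => if i = i₀ then v i₀ * c^i₀ else 0) (Finset.range (i₀+1)) ?_
    · have hsum : (∑ i ∈ Finset.range (i₀+1), if i = i₀ then v i₀ * c^i₀ else 0)
          = v i₀ * c^i₀ := by
        rw [Finset.sum_ite_eq' (Finset.range (i₀+1))]
        simp
      rwa [hsum] at h
    · intro i hi
      rcases Nat.lt_succ_iff_lt_or_eq.mp (Finset.mem_range.mp hi) with hlt | heq
      · simp only [if_neg (Nat.ne_of_lt hlt)]
        apply Tendsto.congr' ?_ (tendsto_const_nhds (x := (0:ℝ)))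
        filter_upwards [hbump0 i hlt] with n hn
        simp [hn]
      · subst heq
        simp only [if_pos rfl]
        have := (tendsto_const_nhds (x := v i * c^i) (f := atTop (α := ℕ))).mul hwi0
        simpa using this
  have hnum_junk : Tendsto (fun n : ℕ => ∑ i ∈ Finset.Ioc i₀ n, v i * c^i * wfun u n i y)
      atTop (𝓝 0) := by
    apply squeeze_zero_norm ?_ hC
    intro n
    rw [Real.norm_eq_abs]
    have hnnn : ∀ j, 0 ≤ u j n y := fun j => hnn j n
    calc |∑ i ∈ Finset.Ioc i₀ n, v i * c^i * wfun u n i y|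
        ≤ ∑ i ∈ Finset.Ioc i₀ n, |v i * c^i * wfun u n i y| :=
          Finset.abs_sum_le_sum_abs _ _
      _ ≤ ∑ i ∈ Finset.Ioc i₀ n, |v i| * c^i * min 1 ((n:ℝ) * u i₀ n y) := by
          apply Finset.sum_le_sum
          intro i hi
          have hi' : i₀ < i := (Finset.mem_Ioc.mp hi).1
          have habs : |v i * c^i * wfun u n i y| = |v i| * c^i * wfun u n i y := by
            rw [abs_mul, abs_mul, abs_of_nonneg (le_of_lt (pow_pos hc0 i)),
              abs_of_nonneg (wfun_nonneg hnnn i)]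
          rw [habs, mul_assoc, mul_assoc]
          apply mul_le_mul_of_nonneg_left ?_ (abs_nonneg _)
          apply mul_le_mul_of_nonneg_left (wfun_le_min hnnn hi') (le_of_lt (pow_pos hc0 i))
      _ = (∑ i ∈ Finset.Ioc i₀ n, |v i| * c^i) * min 1 ((n:ℝ) * u i₀ n y) := by
          rw [Finset.sum_mul]
  -- denominator
  have hden_low : Tendsto (fun n : ℕ => ∑ i ∈ Finset.range (i₀+1), c^i * wfun u n i y)
      atTop (𝓝 (c^i₀)) := by
    have h := tendsto_finset_sum (f := fun i (n:ℕ) => c^i * wfun u n i y)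
      (x := atTop) (a := fun i => if i = i₀ then c^i₀ else 0) (Finset.range (i₀+1)) ?_
    · have hsum : (∑ i ∈ Finset.range (i₀+1), if i = i₀ then c^i₀ else 0) = c^i₀ := by
        rw [Finset.sum_ite_eq' (Finset.range (i₀+1))]
        simp
      rwa [hsum] at h
    · intro i hi
      rcases Nat.lt_succ_iff_lt_or_eq.mp (Finset.mem_range.mp hi) with hlt | heq
      · simp only [if_neg (Nat.ne_of_lt hlt)]
        apply Tendsto.congr' ?_ (tendsto_const_nhds (x := (0:ℝ)))
        filter_upwards [hbump0 i hlt] with n hn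
        simp [hn]
      · subst heq
        simp only [if_pos rfl]
        have := (tendsto_const_nhds (x := c^i) (f := atTop (α := ℕ))).mul hwi0
        simpa using this
  have hden_junk : Tendsto (fun n : ℕ => ∑ i ∈ Finset.Ioc i₀ n, c^i * wfun u n i y)
      atTop (𝓝 0) := by
    have hub : ∀ n, (∑ i ∈ Finset.Ioc i₀ n, c^i * wfun u n i y)
        ≤ 2 * min 1 ((n:ℝ) * u i₀ n y) := by
      intro n
      have hnnn : ∀ j, 0 ≤ u j n y := fun j => hnn j n
      have hminnn : (0:ℝ) ≤ min 1 ((n:ℝ) * u i₀ n y) :=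
        le_min (by norm_num) (mul_nonneg (Nat.cast_nonneg n) (hnnn i₀))
      calc (∑ i ∈ Finset.Ioc i₀ n, c^i * wfun u n i y)
          ≤ ∑ i ∈ Finset.Ioc i₀ n, c^i * min 1 ((n:ℝ) * u i₀ n y) := by
            apply Finset.sum_le_sum
            intro i hi
            exact mul_le_mul_of_nonneg_left (wfun_le_min hnnn (Finset.mem_Ioc.mp hi).1)
              (le_of_lt (pow_pos hc0 i))
        _ = (∑ i ∈ Finset.Ioc i₀ n, c^i) * min 1 ((n:ℝ) * u i₀ n y) := by
            rw [Finset.sum_mul]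
        _ ≤ 2 * min 1 ((n:ℝ) * u i₀ n y) :=
            mul_le_mul_of_nonneg_right (hIoc_le n) hminnn
    have hlb : ∀ n, 0 ≤ ∑ i ∈ Finset.Ioc i₀ n, c^i * wfun u n i y := by
      intro n
      apply Finset.sum_nonneg
      intro i _
      exact mul_nonneg (le_of_lt (pow_pos hc0 i)) (wfun_nonneg (fun j => hnn j n) i)
    have hlim2 : Tendsto (fun n : ℕ => 2 * min 1 ((n:ℝ) * u i₀ n y)) atTop (𝓝 0) := by
      have := hminlim.const_mul (2:ℝ)
      simpa using this
    exact squeeze_zero hlb hub hlim2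
  have hpow : Tendsto (fun n : ℕ => c^n) atTop (𝓝 0) :=
    tendsto_pow_atTop_nhds_zero_of_lt_one (by norm_num) (by norm_num)
  -- assemble
  have hnum : Tendsto (fun n : ℕ => ∑ i ∈ Finset.range (n+1), v i * c^i * wfun u n i y)
      atTop (𝓝 (v i₀ * c^i₀)) := by
    apply Tendsto.congr' ?_ (by simpa using hnum_low.add hnum_junk)
    filter_upwards [eventually_ge_atTop i₀] with n hn
    exact (hsplit _ n hn).symm
  have hden : Tendsto (fun n : ℕ => c^n + ∑ i ∈ Finset.range (n+1), c^i * wfun u n i y)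
      atTop (𝓝 (c^i₀)) := by
    have h2 : Tendsto (fun n : ℕ => c^n + ((∑ i ∈ Finset.range (i₀+1), c^i * wfun u n i y)
        + ∑ i ∈ Finset.Ioc i₀ n, c^i * wfun u n i y)) atTop (𝓝 (c^i₀)) := by
      have := hpow.add (hden_low.add hden_junk)
      simpa using this
    apply Tendsto.congr' ?_ h2
    filter_upwards [eventually_ge_atTop i₀] with n hn
    rw [hsplit _ n hn]
  have hfinal := hnum.div hden (ne_of_gt (pow_pos hc0 i₀))
  have heq : (fun n => coreD v u n y) = fun n : ℕ =>
      (∑ i ∈ Finset.range (n+1), v i * c^i * wfun u n i y) /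
        (c^n + ∑ i ∈ Finset.range (n+1), c^i * wfun u n i y) := rfl
  rw [heq]
  have hval : v i₀ * c^i₀ / c^i₀ = v i₀ := by
    field_simp
  rw [← hval]
  exact hfinal

lemma coreD_congr {v v' : ℕ → ℝ} {u u' : ℕ → ℕ → T → ℝ} {n : ℕ}
    (hv : ∀ i, i ≤ n → v i = v' i) (hu : ∀ i, i ≤ n → u i n = u' i n) :
    coreD v u n = coreD v' u' n := by
  funext y
  unfold coreD wfun
  have hw : ∀ i, i ≤ n →
      ((∏ j ∈ Finset.range i, min 1 ((n:ℝ) * u j n y)) * max 0 (1 - (n:ℝ) * u i n y))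
      = ((∏ j ∈ Finset.range i, min 1 ((n:ℝ) * u' j n y)) * max 0 (1 - (n:ℝ) * u' i n y)) := by
    intro i hi
    rw [hu i hi]
    congr 1
    apply Finset.prod_congr rfl
    intro j hj
    rw [hu j (le_trans (le_of_lt (Finset.mem_range.mp hj)) hi)]
  congr 1
  · apply Finset.sum_congr rfl
    intro i hi
    have hi' : i ≤ n := Nat.lt_succ_iff.mp (Finset.mem_range.mp hi)
    rw [hv i hi', hw i hi']
  · congr 1
    apply Finset.sum_congr rfl
    intro i hi
    have hi' : i ≤ n := Nat.lt_succ_iff.mp (Finset.mem_range.mp hi)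
    rw [hw i hi']

end Core

section UL

variable {T : Type*} [TopologicalSpace T]

lemma abs_min_sub_min (a b c : ℝ) : |min a c - min b c| ≤ |a - b| := by
  rcases le_total a c with h1 | h1 <;> rcases le_total b c with h2 | h2
  · rw [min_eq_left h1, min_eq_left h2]
  · rw [min_eq_left h1, min_eq_right h2]
    rw [abs_of_nonpos (by linarith)]
    rcases abs_cases (a - b) with ⟨he, _⟩ | ⟨he, _⟩ <;> linarith
  · rw [min_eq_right h1, min_eq_left h2]
    rw [abs_of_nonneg (by linarith)]
    rcases abs_cases (a - b) with ⟨he, _⟩ | ⟨he, _⟩ <;> linarith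
  · rw [min_eq_right h1, min_eq_right h2]
    simp
  
lemma abs_clamp_sub_clamp (q a b : ℝ) :
    |max (-q) (min q a) - max (-q) (min q b)| ≤ |a - b| := by
  calc |max (-q) (min q a) - max (-q) (min q b)|
      = |max (min q a) (-q) - max (min q b) (-q)| := by rw [max_comm (-q), max_comm (-q)]
    _ ≤ |min q a - min q b| := abs_max_sub_max_le_abs _ _ _
    _ = |min a q - min b q| := by rw [min_comm q a, min_comm q b]
    _ ≤ |a - b| := abs_min_sub_min a b q

lemma clamp_eq_of_abs_le {q a : ℝ} (h : |a| ≤ q) : max (-q) (min q a) = a := by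
  rw [abs_le] at h
  rw [min_eq_right h.2, max_eq_right h.1]

lemma abs_clamp_le {q a : ℝ} (hq : 0 ≤ q) : |max (-q) (min q a)| ≤ q := by
  rw [abs_le]
  exact ⟨le_max_left _ _, max_le (by linarith) (min_le_left _ _)⟩

/-- sequential approximation is stable under uniform approximation, provided the
countable set is closed under sums and clamped differences. -/
lemma seqLim_of_uniform_approx {S : Set (T → ℝ)}
    (hadd : ∀ a ∈ S, ∀ b ∈ S, (fun x => a x + b x) ∈ S)
    (hclampsub : ∀ i : ℕ, ∀ a ∈ S, ∀ b ∈ S,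
      (fun x => max (-(2 * (2⁻¹:ℝ)^i)) (min (2 * (2⁻¹:ℝ)^i) (a x - b x))) ∈ S)
    {f : T → ℝ} (F : ℕ → T → ℝ) (hF : ∀ m, SeqLim S (F m))
    (happ : ∀ m x, |f x - F m x| ≤ (2⁻¹:ℝ)^m) : SeqLim S f := by
  classical
  choose d hdS hdlim using hF
  set q : ℕ → ℝ := fun i => 2 * (2⁻¹:ℝ)^i with hqdef
  set ct : ℕ → ℕ → T → ℝ :=
    fun i n x => max (-(q i)) (min (q i) (d (i+1) n x - d i n x)) with hctdef
  set E : ℕ → T → ℝ := fun n x => d 0 n x + ∑ i ∈ Finset.range n, ct i n x with hEdef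
  have hES : ∀ n, E n ∈ S := by
    intro n
    have key : ∀ j : ℕ, (fun x => d 0 n x + ∑ i ∈ Finset.range j, ct i n x) ∈ S := by
      intro j
      induction j with
      | zero =>
        have : (fun x => d 0 n x + ∑ i ∈ Finset.range 0, ct i n x) = d 0 n := by
          funext x; simp
        rw [this]; exact hdS 0 n
      | succ j ih =>
        have : (fun x => d 0 n x + ∑ i ∈ Finset.range (j+1), ct i n x)
            = fun x => (d 0 n x + ∑ i ∈ Finset.range j, ct i n x) + ct j n x := by
          funext x; rw [Finset.sum_range_succ]; ring
        rw [this]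
        exact hadd _ ih _ (hclampsub j _ (hdS (j+1) n) _ (hdS j n))
    exact key n
  refine ⟨E, hES, ?_⟩
  intro x
  set h : ℕ → ℝ := fun i => F (i+1) x - F i x with hhdef
  have habs_h : ∀ i, |h i| ≤ q i := by
    intro i
    have h1 := happ (i+1) x
    have h2 := happ i x
    have : |h i| ≤ (2⁻¹:ℝ)^(i+1) + (2⁻¹:ℝ)^i := by
      have : h i = (F (i+1) x - f x) + (f x - F i x) := by ring
      rw [this]
      calc |(F (i+1) x - f x) + (f x - F i x)|
          ≤ |F (i+1) x - f x| + |f x - F i x| := abs_add_le _ _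
        _ ≤ (2⁻¹:ℝ)^(i+1) + (2⁻¹:ℝ)^i := by
            rw [abs_sub_comm (F (i+1) x) (f x)]
            exact add_le_add h1 h2
    have hp : (2⁻¹:ℝ)^(i+1) ≤ (2⁻¹:ℝ)^i := by
      apply pow_le_pow_of_le_one (by norm_num) (by norm_num) (by omega)
    simp only [hqdef]
    linarith
  have hdiff : ∀ i, Tendsto (fun n => |ct i n x - h i|) atTop (𝓝 0) := by
    intro i
    have hlim : Tendsto (fun n => |(d (i+1) n x - d i n x) - h i|) atTop (𝓝 0) := by
      have h1 : Tendsto (fun n => (d (i+1) n x - d i n x) - h i) atTop (𝓝 0) := by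
        have := ((hdlim (i+1) x).sub (hdlim i x)).sub
          (tendsto_const_nhds (x := h i) (f := atTop (α := ℕ)))
        rw [show F (i+1) x - F i x - h i = 0 from sub_self _] at this; exact this
      have := h1.abs
      simpa using this
    apply squeeze_zero (fun n => abs_nonneg _) ?_ hlim
    intro n
    have : ct i n x - h i
        = max (-(q i)) (min (q i) (d (i+1) n x - d i n x)) - max (-(q i)) (min (q i) (h i)) := by
      rw [clamp_eq_of_abs_le (habs_h i)]
    rw [this]
    exact abs_clamp_sub_clamp _ _ _
  rw [Metric.tendsto_atTop]
  intro ε hε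
  -- choose K
  obtain ⟨K, hK⟩ : ∃ K : ℕ, 10 * (2⁻¹:ℝ)^K < ε / 2 := by
    have : Tendsto (fun K : ℕ => 10 * (2⁻¹:ℝ)^K) atTop (𝓝 0) := by
      have := (tendsto_pow_atTop_nhds_zero_of_lt_one (by norm_num : (0:ℝ) ≤ 2⁻¹)
        (by norm_num : (2⁻¹:ℝ) < 1)).const_mul (10:ℝ)
      simpa using this
    have := (this.eventually (eventually_lt_nhds (show (0:ℝ) < ε/2 by linarith))).exists
    simpa using this
  have hhead : Tendsto (fun n => |d 0 n x - F 0 x| + ∑ i ∈ Finset.range K, |ct i n x - h i|)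
      atTop (𝓝 0) := by
    have h1 : Tendsto (fun n => |d 0 n x - F 0 x|) atTop (𝓝 0) := by
      have := ((hdlim 0 x).sub (tendsto_const_nhds (x := F 0 x) (f := atTop (α := ℕ)))).abs
      simpa using this
    have h2 : Tendsto (fun n => ∑ i ∈ Finset.range K, |ct i n x - h i|) atTop (𝓝 0) := by
      have := tendsto_finset_sum (f := fun i (n : ℕ) => |ct i n x - h i|) (x := atTop)
        (a := fun _ => 0) (Finset.range K) (fun i _ => hdiff i)
      simpa using this
    have := h1.add h2
    simpa using this
  obtain ⟨N1, hN1⟩ := (Metric.tendsto_atTop.mp hhead (ε/2) (by linarith))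
  refine ⟨max K N1, ?_⟩
  intro n hn
  have hnK : K ≤ n := le_trans (le_max_left _ _) hn
  have hnN1 : N1 ≤ n := le_trans (le_max_right _ _) hn
  rw [Real.dist_eq]
  -- decomposition
  have htel : ∑ i ∈ Finset.range n, h i = F n x - F 0 x :=
    Finset.sum_range_sub (fun i => F i x) n
  have hdecomp : E n x - f x
      = (d 0 n x - F 0 x) + (∑ i ∈ Finset.range n, (ct i n x - h i)) + (F n x - f x) := by
    rw [Finset.sum_sub_distrib, htel]
    simp only [hEdef]
    ring
  have hsum_split : ∑ i ∈ Finset.range n, (ct i n x - h i)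
      = (∑ i ∈ Finset.range K, (ct i n x - h i)) + ∑ i ∈ Finset.Ico K n, (ct i n x - h i) := by
    rw [Finset.range_eq_Ico, ← Finset.sum_Ico_consecutive _ (Nat.zero_le K) hnK,
      ← Finset.range_eq_Ico]
  have htail : |∑ i ∈ Finset.Ico K n, (ct i n x - h i)| ≤ 8 * (2⁻¹:ℝ)^K := by
    calc |∑ i ∈ Finset.Ico K n, (ct i n x - h i)|
        ≤ ∑ i ∈ Finset.Ico K n, |ct i n x - h i| := Finset.abs_sum_le_sum_abs _ _
      _ ≤ ∑ i ∈ Finset.Ico K n, 4 * (2⁻¹:ℝ)^i := by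
          apply Finset.sum_le_sum
          intro i _
          calc |ct i n x - h i| ≤ |ct i n x| + |h i| := abs_sub _ _
            _ ≤ q i + q i := add_le_add (abs_clamp_le (by positivity)) (habs_h i)
            _ = 4 * (2⁻¹:ℝ)^i := by simp only [hqdef]; ring
      _ = 4 * ∑ i ∈ Finset.Ico K n, (2⁻¹:ℝ)^i := by rw [Finset.mul_sum]
      _ ≤ 8 * (2⁻¹:ℝ)^K := by
          have : ∑ i ∈ Finset.Ico K n, (2⁻¹:ℝ)^i ≤ 2 * (2⁻¹:ℝ)^K := by
            rw [Finset.sum_Ico_eq_sum_range]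
            have : ∀ i, (2⁻¹:ℝ)^(K + i) = (2⁻¹:ℝ)^K * (2⁻¹:ℝ)^i := fun i => pow_add _ _ _
            calc ∑ i ∈ Finset.range (n - K), (2⁻¹:ℝ)^(K + i)
                = (2⁻¹:ℝ)^K * ∑ i ∈ Finset.range (n - K), (2⁻¹:ℝ)^i := by
                  rw [Finset.mul_sum]
                  exact Finset.sum_congr rfl (fun i _ => pow_add _ _ _)
              _ ≤ (2⁻¹:ℝ)^K * 2 := by
                  apply mul_le_mul_of_nonneg_left ?_ (by positivity)
                  calc ∑ i ∈ Finset.range (n - K), (2⁻¹:ℝ)^i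
                      ≤ ∑' i : ℕ, (2⁻¹:ℝ)^i := (summable_geometric_of_lt_one (by norm_num) (by norm_num)).sum_le_tsum _
                        (fun i _ => by positivity)
                    _ = 2 := by
                        rw [tsum_geometric_of_lt_one (by norm_num) (by norm_num)]
                        norm_num
              _ = 2 * (2⁻¹:ℝ)^K := by ring
          linarith
  have hlast : |F n x - f x| ≤ (2⁻¹:ℝ)^K := by
    calc |F n x - f x| = |f x - F n x| := abs_sub_comm _ _
      _ ≤ (2⁻¹:ℝ)^n := happ n x
      _ ≤ (2⁻¹:ℝ)^K := pow_le_pow_of_le_one (by norm_num) (by norm_num) hnK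
  have hheadn := hN1 n hnN1
  rw [Real.dist_eq] at hheadn
  have hheadn' : |d 0 n x - F 0 x| + ∑ i ∈ Finset.range K, |ct i n x - h i| < ε/2 := by
    have h0 : (0:ℝ) ≤ |d 0 n x - F 0 x| + ∑ i ∈ Finset.range K, |ct i n x - h i| := by
      apply add_nonneg (abs_nonneg _) (Finset.sum_nonneg (fun i _ => abs_nonneg _))
    rw [abs_of_nonneg (by simpa using h0)] at hheadn
    simpa using hheadn
  calc |E n x - f x|
      ≤ |d 0 n x - F 0 x| + |∑ i ∈ Finset.range n, (ct i n x - h i)| + |F n x - f x| := by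
        rw [hdecomp]
        calc |(d 0 n x - F 0 x) + (∑ i ∈ Finset.range n, (ct i n x - h i)) + (F n x - f x)|
            ≤ |(d 0 n x - F 0 x) + (∑ i ∈ Finset.range n, (ct i n x - h i))| + |F n x - f x| :=
              abs_add_le _ _
          _ ≤ |d 0 n x - F 0 x| + |∑ i ∈ Finset.range n, (ct i n x - h i)| + |F n x - f x| := by
              have := abs_add_le (d 0 n x - F 0 x) (∑ i ∈ Finset.range n, (ct i n x - h i))
              linarith
    _ ≤ |d 0 n x - F 0 x| + ((∑ i ∈ Finset.range K, |ct i n x - h i|) + 8 * (2⁻¹:ℝ)^K)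
        + (2⁻¹:ℝ)^K := by
        have hb : |∑ i ∈ Finset.range n, (ct i n x - h i)|
            ≤ (∑ i ∈ Finset.range K, |ct i n x - h i|) + 8 * (2⁻¹:ℝ)^K := by
          rw [hsum_split]
          calc |(∑ i ∈ Finset.range K, (ct i n x - h i)) + ∑ i ∈ Finset.Ico K n, (ct i n x - h i)|
              ≤ |∑ i ∈ Finset.range K, (ct i n x - h i)| + |∑ i ∈ Finset.Ico K n, (ct i n x - h i)| :=
                abs_add_le _ _
            _ ≤ (∑ i ∈ Finset.range K, |ct i n x - h i|) + 8 * (2⁻¹:ℝ)^K :=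
                add_le_add (Finset.abs_sum_le_sum_abs _ _) htail
        have := hlast
        linarith
    _ < ε := by
        have h9 : (9:ℝ) * (2⁻¹:ℝ)^K ≤ 10 * (2⁻¹:ℝ)^K := by
          have : (0:ℝ) ≤ (2⁻¹:ℝ)^K := by positivity
          linarith
        linarith [hheadn', hK]

end UL

section LH

variable {X : Type*} [TopologicalSpace X]

/-- one-step approximation of a Zσ-measurable function by a function that is a
pointwise limit of continuous functions -/
lemma approx_step {f : X → ℝ}
    (hf : ∀ U : Set ℝ, IsOpen U → IsZSigmaSet (f ⁻¹' U)) {ε : ℝ} (hε : 0 < ε) :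
    ∃ g : X → ℝ, SeqLim {g : X → ℝ | Continuous g} g ∧ ∀ x, |f x - g x| ≤ ε := by
  classical
  have hZ : ∀ k : ℤ, IsZSigmaSet (f ⁻¹' Ioo (((k:ℝ)-1)*ε) (((k:ℝ)+1)*ε)) :=
    fun k => hf _ isOpen_Ioo
  choose Fk hFk hUk using hZ
  obtain ⟨e, he⟩ := exists_surjective_nat (ℤ × ℕ)
  set P : ℕ → Set X := fun i => Fk (e i).1 (e i).2 with hPdef
  choose z hzc hzZ using fun i => hFk (e i).1 (e i).2
  have hcover : ∀ x, ∃ i, x ∈ P i := by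
    intro x
    set k : ℤ := ⌊f x / ε⌋ with hkdef
    have h1 : (k:ℝ) ≤ f x / ε := Int.floor_le _
    have h2 : f x / ε < (k:ℝ) + 1 := Int.lt_floor_add_one _
    have hmem : f x ∈ Ioo (((k:ℝ)-1)*ε) (((k:ℝ)+1)*ε) := by
      constructor
      · have := mul_le_mul_of_nonneg_right h1 (le_of_lt hε)
        rw [div_mul_cancel₀ _ (ne_of_gt hε)] at this
        nlinarith
      · have := mul_lt_mul_of_pos_right h2 hε
        rw [div_mul_cancel₀ _ (ne_of_gt hε)] at this
        linarith
    have : x ∈ f ⁻¹' Ioo (((k:ℝ)-1)*ε) (((k:ℝ)+1)*ε) := hmem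
    rw [hUk k] at this
    obtain ⟨m, hm⟩ := mem_iUnion.mp this
    obtain ⟨i, hi⟩ := he (k, m)
    refine ⟨i, ?_⟩
    simp only [hPdef, hi]
    exact hm
  set i₀ : X → ℕ := fun x => Nat.find (hcover x) with hi₀def
  have hi₀mem : ∀ x, x ∈ P (i₀ x) := fun x => Nat.find_spec (hcover x)
  have hi₀min : ∀ x, ∀ j, j < i₀ x → x ∉ P j := fun x j hj => Nat.find_min (hcover x) hj
  set v : ℕ → ℝ := fun i => ((e i).1 : ℝ) * ε with hvdef
  set u : ℕ → ℕ → X → ℝ := fun i _ x => |z i x| with hudef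
  have hPz : ∀ i, P i = z i ⁻¹' {0} := fun i => hzZ i
  refine ⟨fun x => v (i₀ x), ⟨fun n => coreD v u n, ?_, ?_⟩, ?_⟩
  · intro n
    apply coreD_continuous
    · intro i
      exact (hzc i).abs
    · intro i y
      exact abs_nonneg _
  · intro x
    apply core_tendsto v u x (i₀ x)
    · intro i n
      exact abs_nonneg _
    · have h0 : z (i₀ x) x = 0 := by
        have := hi₀mem x
        rw [hPz (i₀ x)] at this
        simpa using this
      have : (fun n : ℕ => (n:ℝ) * u (i₀ x) n x) = fun _ => 0 := by
        funext n
        simp [hudef, h0]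
      rw [this]
      exact tendsto_const_nhds
    · intro j hj
      have hzj : z j x ≠ 0 := by
        intro h0
        apply hi₀min x j hj
        rw [hPz j]
        simpa using h0
      have hpos : 0 < |z j x| := abs_pos.mpr hzj
      have : (fun n : ℕ => (n:ℝ) * u j n x) = fun n : ℕ => (n:ℝ) * |z j x| := rfl
      rw [this]
      exact Tendsto.atTop_mul_const hpos tendsto_natCast_atTop_atTop
    · have h0 : z (i₀ x) x = 0 := by
        have := hi₀mem x
        rw [hPz (i₀ x)] at this
        simpa using this
      have : (fun n : ℕ => (∑ i ∈ Finset.Ioc (i₀ x) n, |v i| * (2⁻¹:ℝ)^i)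
          * min 1 ((n:ℝ) * u (i₀ x) n x)) = fun _ => 0 := by
        funext n
        simp [hudef, h0]
      rw [this]
      exact tendsto_const_nhds
  · intro x
    have hx := hi₀mem x
    have hsub : P (i₀ x) ⊆ f ⁻¹' Ioo ((((e (i₀ x)).1:ℝ)-1)*ε) ((((e (i₀ x)).1:ℝ)+1)*ε) := by
      rw [hUk (e (i₀ x)).1, hPdef]
      exact subset_iUnion _ (e (i₀ x)).2
    have := hsub hx
    simp only [mem_preimage, mem_Ioo] at this
    rw [abs_le]
    constructor <;> simp only [hvdef] <;> nlinarith [this.1, this.2]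

/-- The Lebesgue–Hausdorff theorem for Zσ-measurable functions. -/
lemma isBaire1_of_zsigma_measurable {f : X → ℝ}
    (hf : ∀ U : Set ℝ, IsOpen U → IsZSigmaSet (f ⁻¹' U)) : IsBaire1 f := by
  rw [isBaire1_iff_seqLim]
  have hstep : ∀ m : ℕ, ∃ g : X → ℝ,
      SeqLim {g : X → ℝ | Continuous g} g ∧ ∀ x, |f x - g x| ≤ (2⁻¹:ℝ)^m :=
    fun m => approx_step hf (by positivity)
  choose F hFlim hFapp using hstep
  apply seqLim_of_uniform_approx (S := {g : X → ℝ | Continuous g})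
    (fun a ha b hb => by
      simp only [mem_setOf_eq] at *
      fun_prop)
    (fun i a ha b hb => by
      simp only [mem_setOf_eq] at *
      fun_prop) F hFlim hFapp

end LH

section Closure

variable {T : Type*}

def addOp (f g : T → ℝ) : T → ℝ := fun x => f x + g x

noncomputable def clampOp (i : ℕ) (f g : T → ℝ) : T → ℝ :=
  fun x => max (-(2 * (2⁻¹:ℝ)^i)) (min (2 * (2⁻¹:ℝ)^i) (f x - g x))

def clIter (S : Set (T → ℝ)) : ℕ → Set (T → ℝ)
  | 0 => S
  | n+1 => (clIter S n ∪ Set.image2 addOp (clIter S n) (clIter S n)) ∪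
      ⋃ i : ℕ, Set.image2 (clampOp i) (clIter S n) (clIter S n)

def clClosure (S : Set (T → ℝ)) : Set (T → ℝ) := ⋃ n, clIter S n

lemma clIter_countable {S : Set (T → ℝ)} (hS : S.Countable) :
    ∀ n, (clIter S n).Countable := by
  intro n
  induction n with
  | zero => exact hS
  | succ n ih =>
    refine ((ih.union (ih.image2 ih _)).union ?_)
    exact countable_iUnion (fun i => ih.image2 ih _)

lemma clClosure_countable {S : Set (T → ℝ)} (hS : S.Countable) :
    (clClosure S).Countable := countable_iUnion (clIter_countable hS)

lemma clIter_mono_succ {S : Set (T → ℝ)} (n : ℕ) : clIter S n ⊆ clIter S (n+1) :=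
  fun _ hx => Or.inl (Or.inl hx)

lemma clIter_mono {S : Set (T → ℝ)} {m n : ℕ} (h : m ≤ n) : clIter S m ⊆ clIter S n := by
  induction n with
  | zero =>
    have : m = 0 := Nat.le_zero.mp h
    subst this
    exact subset_rfl
  | succ n ih =>
    rcases Nat.lt_succ_iff_lt_or_eq.mp (Nat.lt_succ_of_le h) with h' | h'
    · exact (ih (by omega)).trans (clIter_mono_succ n)
    · subst h'
      exact subset_rfl

lemma subset_clClosure {S : Set (T → ℝ)} : S ⊆ clClosure S :=
  fun x hx => mem_iUnion.mpr ⟨0, hx⟩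

lemma clClosure_add {S : Set (T → ℝ)} {a b : T → ℝ}
    (ha : a ∈ clClosure S) (hb : b ∈ clClosure S) : addOp a b ∈ clClosure S := by
  obtain ⟨m, hm⟩ := mem_iUnion.mp ha
  obtain ⟨k, hk⟩ := mem_iUnion.mp hb
  refine mem_iUnion.mpr ⟨max m k + 1, ?_⟩
  exact Or.inl (Or.inr (mem_image2_of_mem (clIter_mono (le_max_left m k) hm)
    (clIter_mono (le_max_right m k) hk)))

lemma clClosure_clamp {S : Set (T → ℝ)} (i : ℕ) {a b : T → ℝ}
    (ha : a ∈ clClosure S) (hb : b ∈ clClosure S) : clampOp i a b ∈ clClosure S := by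
  obtain ⟨m, hm⟩ := mem_iUnion.mp ha
  obtain ⟨k, hk⟩ := mem_iUnion.mp hb
  refine mem_iUnion.mpr ⟨max m k + 1, ?_⟩
  refine Or.inr (mem_iUnion.mpr ⟨i, ?_⟩)
  exact mem_image2_of_mem (clIter_mono (le_max_left m k) hm)
    (clIter_mono (le_max_right m k) hk)

lemma clClosure_continuous [TopologicalSpace T] {S : Set (T → ℝ)}
    (hS : ∀ s ∈ S, Continuous s) : ∀ s ∈ clClosure S, Continuous s := by
  have key : ∀ n, ∀ s ∈ clIter S n, Continuous s := by
    intro n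
    induction n with
    | zero => exact hS
    | succ n ih =>
      rintro s (⟨hs | hs⟩ | hs)
      · exact ih s hs
      · obtain ⟨a, ha, b, hb, rfl⟩ := hs
        exact (ih a ha).add (ih b hb)
      · obtain ⟨i, hi⟩ := mem_iUnion.mp hs
        obtain ⟨a, ha, b, hb, rfl⟩ := hi
        unfold clampOp
        exact continuous_const.max (continuous_const.min ((ih a ha).sub (ih b hb)))
  intro s hs
  obtain ⟨n, hn⟩ := mem_iUnion.mp hs
  exact key n s hn

end Closure

/-- net parameter data -/
def NetP : Type := Option ((K : ℕ) × Finset (Fin K → ℚ))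

instance : Countable NetP := by
  unfold NetP
  infer_instance

section MetricPart

variable {Y : Type*} [MetricSpace Y]

/-- truncated distance -/
noncomputable def d1 (y z : Y) : ℝ := min (dist y z) 1

lemma d1_nonneg (y z : Y) : 0 ≤ d1 y z := le_min dist_nonneg zero_le_one

lemma d1_le_one (y z : Y) : d1 y z ≤ 1 := min_le_right _ _

lemma d1_continuous (z : Y) : Continuous (fun y => d1 y z) :=
  (continuous_id.dist continuous_const).min continuous_const

noncomputable def sumd (a : ℕ → Y) (K : ℕ) (q : Fin K → ℚ) (y : Y) : ℝ :=
  ∑ k : Fin K, (2⁻¹:ℝ)^(k:ℕ) * |d1 y (a k) - (q k : ℝ)|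

lemma sumd_nonneg (a : ℕ → Y) (K : ℕ) (q : Fin K → ℚ) (y : Y) : 0 ≤ sumd a K q y :=
  Finset.sum_nonneg (fun k _ => mul_nonneg (by positivity) (abs_nonneg _))

lemma sumd_continuous (a : ℕ → Y) (K : ℕ) (q : Fin K → ℚ) : Continuous (sumd a K q) := by
  apply continuous_finset_sum
  intro k _
  exact continuous_const.mul (((d1_continuous (a k)).sub continuous_const).abs)

noncomputable def interpNet (a : ℕ → Y) : NetP → Y → ℝ
  | none => fun _ => 1
  | some p =>
      if h : p.2.Nonempty then fun y => p.2.inf' h (fun q => sumd a p.1 q y) else fun _ => 1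

lemma interpNet_nonneg (a : ℕ → Y) (p : NetP) (y : Y) : 0 ≤ interpNet a p y := by
  match p with
  | none => norm_num [interpNet]
  | some p =>
    rw [interpNet]
    split
    · exact Finset.le_inf' _ _ (fun q _ => sumd_nonneg a p.1 q y)
    · norm_num

lemma continuous_finset_inf' {ι : Type*} {G : Finset ι} (h : G.Nonempty) (F : ι → Y → ℝ)
    (hF : ∀ q, Continuous (F q)) : Continuous (fun y => G.inf' h (fun q => F q y)) := by
  induction h using Finset.Nonempty.cons_induction with
  | singleton a => simpa using hF a
  | cons a s ha hs ih =>
    have heq : (fun y => (Finset.cons a s ha).inf' (Finset.cons_nonempty ha) (fun q => F q y))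
        = fun y => min (F a y) (s.inf' hs (fun q => F q y)) := by
      funext y
      rw [Finset.inf'_cons hs]
    rw [heq]
    exact (hF a).min ih

lemma interpNet_continuous (a : ℕ → Y) (p : NetP) : Continuous (interpNet a p) := by
  match p with
  | none => rw [interpNet]; exact continuous_const
  | some p =>
    rw [interpNet]
    split
    · exact continuous_finset_inf' _ _ (fun q => sumd_continuous a p.1 q)
    · exact continuous_const

lemma net_exists (a : ℕ → Y) {C : Set Y} (hCne : C.Nonempty) (n : ℕ) :
    ∃ p : NetP,
      (∀ y ∈ C, interpNet a p y ≤ 2 * (2⁻¹:ℝ)^n) ∧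
      (∀ (y : Y) (k : ℕ), k < n → ∀ r : ℝ,
        (∀ c ∈ C, r ≤ |d1 y (a k) - d1 c (a k)|) →
        (2⁻¹:ℝ)^k * r - 4 * (2⁻¹:ℝ)^n ≤ interpNet a p y) := by
  classical
  set δ : ℝ := (2⁻¹:ℝ)^n with hδdef
  have hδpos : 0 < δ := by positivity
  set δq : ℚ := (2⁻¹:ℚ)^n with hδqdef
  have hcast : ((δq : ℚ) : ℝ) = δ := by
    rw [hδqdef, hδdef]
    push_cast
    norm_num
  set grid : Finset ℚ := (Finset.range (2^n+1)).image (fun j : ℕ => (j:ℚ) * δq) with hgriddef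
  set gridK : Finset (Fin n → ℚ) := Fintype.piFinset (fun _ => grid) with hgridKdef
  have hnear : ∀ y : Y, ∃ q ∈ gridK, sumd a n q y ≤ 2*δ := by
    intro y
    set q : Fin n → ℚ := fun k => ((⌊d1 y (a k) / δ⌋).toNat : ℚ) * δq with hqdef
    have hfl_nonneg : ∀ k : Fin n, (0:ℤ) ≤ ⌊d1 y (a k) / δ⌋ :=
      fun k => Int.floor_nonneg.mpr (div_nonneg (d1_nonneg _ _) (le_of_lt hδpos))
    have hq_real : ∀ k : Fin n, ((q k : ℚ) : ℝ) = ((⌊d1 y (a k) / δ⌋ : ℤ) : ℝ) * δ := by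
      intro k
      have h1 : ((⌊d1 y (a k) / δ⌋.toNat : ℕ) : ℝ) = ((⌊d1 y (a k) / δ⌋ : ℤ) : ℝ) := by
        exact_mod_cast congrArg (fun z : ℤ => (z : ℝ)) (Int.toNat_of_nonneg (hfl_nonneg k))
      simp only [hqdef]
      push_cast [hcast]
      rw [h1]
    have hq_mem : q ∈ gridK := by
      rw [hgridKdef, Fintype.mem_piFinset]
      intro k
      rw [hgriddef]
      apply Finset.mem_image.mpr
      refine ⟨(⌊d1 y (a k) / δ⌋).toNat, ?_, rfl⟩
      rw [Finset.mem_range]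
      have h1 : d1 y (a k) / δ ≤ ((2^n : ℕ) : ℝ) := by
        rw [div_le_iff₀ hδpos]
        push_cast
        calc d1 y (a k) ≤ 1 := d1_le_one _ _
          _ = (2:ℝ)^n * (2⁻¹:ℝ)^n := by
              rw [← mul_pow]
              norm_num
          _ = (2:ℝ)^n * δ := by rw [hδdef]
      have h2 : ⌊d1 y (a k) / δ⌋ ≤ ((2^n : ℕ) : ℤ) := by
        have := Int.floor_le_floor h1
        rwa [Int.floor_natCast] at this
      have := Int.toNat_le.mpr h2
      omega
    have hclose : ∀ k : Fin n, |d1 y (a k) - (q k : ℝ)| ≤ δ := by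
      intro k
      rw [hq_real k]
      set t : ℝ := d1 y (a k) / δ with htdef
      have h1 : ((⌊t⌋ : ℤ) : ℝ) ≤ t := Int.floor_le t
      have h2 : t < ((⌊t⌋ : ℤ) : ℝ) + 1 := Int.lt_floor_add_one t
      have hd1 : d1 y (a k) = t * δ := by
        rw [htdef, div_mul_cancel₀ _ (ne_of_gt hδpos)]
      rw [hd1, abs_of_nonneg (by nlinarith)]
      nlinarith
    refine ⟨q, hq_mem, ?_⟩
    have hsumpow : (∑ k : Fin n, (2⁻¹:ℝ)^(k:ℕ)) ≤ 2 := by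
      rw [Fin.sum_univ_eq_sum_range]
      calc (∑ k ∈ Finset.range n, (2⁻¹:ℝ)^k) ≤ ∑' k : ℕ, (2⁻¹:ℝ)^k :=
            (summable_geometric_of_lt_one (by norm_num) (by norm_num)).sum_le_tsum _
              (fun k _ => by positivity)
        _ = 2 := by
            rw [tsum_geometric_of_lt_one (by norm_num) (by norm_num)]
            norm_num
    calc sumd a n q y ≤ ∑ k : Fin n, (2⁻¹:ℝ)^(k:ℕ) * δ := by
          apply Finset.sum_le_sum
          intro k _
          exact mul_le_mul_of_nonneg_left (hclose k) (by positivity)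
      _ = (∑ k : Fin n, (2⁻¹:ℝ)^(k:ℕ)) * δ := by rw [Finset.sum_mul]
      _ ≤ 2 * δ := mul_le_mul_of_nonneg_right hsumpow (le_of_lt hδpos)
  obtain ⟨c₀, hc₀⟩ := hCne
  set Gset : Set (Fin n → ℚ) := {q | q ∈ gridK ∧ ∃ c ∈ C, sumd a n q c ≤ 2*δ} with hGsetdef
  have hGfin : Gset.Finite := gridK.finite_toSet.subset (fun q hq => hq.1)
  set G : Finset (Fin n → ℚ) := hGfin.toFinset with hGdef
  have hGmem : ∀ q, q ∈ G ↔ (q ∈ gridK ∧ ∃ c ∈ C, sumd a n q c ≤ 2*δ) := by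
    intro q
    rw [hGdef, Set.Finite.mem_toFinset]
    rfl
  have hGne : G.Nonempty := by
    obtain ⟨q, hqm, hqc⟩ := hnear c₀
    exact ⟨q, (hGmem q).mpr ⟨hqm, c₀, hc₀, hqc⟩⟩
  refine ⟨some ⟨n, G⟩, ?_, ?_⟩
  all_goals
    have hinterp : interpNet a (some ⟨n, G⟩) = fun y => G.inf' hGne (fun q => sumd a n q y) := by
      rw [interpNet]
      rw [dif_pos hGne]
  · intro y hy
    obtain ⟨q, hqm, hqc⟩ := hnear y
    rw [hinterp]
    calc G.inf' hGne (fun q => sumd a n q y) ≤ sumd a n q y :=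
          Finset.inf'_le _ ((hGmem q).mpr ⟨hqm, y, hy, hqc⟩)
      _ ≤ 2*δ := hqc
  · intro y k hk r hr
    rw [hinterp]
    apply Finset.le_inf'
    intro q hq
    obtain ⟨-, c, hc, hqc⟩ := (hGmem q).mp hq
    have htri : (∑ j : Fin n, (2⁻¹:ℝ)^(j:ℕ) * |d1 y (a j) - d1 c (a j)|) - sumd a n q c
        ≤ sumd a n q y := by
      rw [sub_le_iff_le_add]
      unfold sumd
      rw [← Finset.sum_add_distrib]
      apply Finset.sum_le_sum
      intro j _
      rw [← mul_add]
      apply mul_le_mul_of_nonneg_left ?_ (by positivity)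
      calc |d1 y (a j) - d1 c (a j)|
          = |(d1 y (a j) - (q j : ℝ)) + ((q j : ℝ) - d1 c (a j))| := by ring_nf
        _ ≤ |d1 y (a j) - (q j : ℝ)| + |(q j : ℝ) - d1 c (a j)| := abs_add_le _ _
        _ = |d1 y (a j) - (q j : ℝ)| + |d1 c (a j) - (q j : ℝ)| := by
            rw [abs_sub_comm ((q j : ℝ)) (d1 c (a j))]
    have hsingle : (2⁻¹:ℝ)^k * r ≤ ∑ j : Fin n, (2⁻¹:ℝ)^(j:ℕ) * |d1 y (a j) - d1 c (a j)| := by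
      have hkmem : (⟨k, hk⟩ : Fin n) ∈ (Finset.univ : Finset (Fin n)) := Finset.mem_univ _
      have hterm := Finset.single_le_sum
        (f := fun j : Fin n => (2⁻¹:ℝ)^(j:ℕ) * |d1 y (a j) - d1 c (a j)|)
        (fun j _ => mul_nonneg (by positivity) (abs_nonneg _)) hkmem
      calc (2⁻¹:ℝ)^k * r ≤ (2⁻¹:ℝ)^k * |d1 y (a k) - d1 c (a k)| := by
            apply mul_le_mul_of_nonneg_left (hr c hc) (by positivity)
        _ ≤ _ := hterm
    have hq2 : sumd a n q c ≤ 2*δ := hqc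
    linarith

lemma exists_enum : ∃ e : ℕ → ℤ × ℕ, Function.Surjective e ∧ ∀ i, ((e i).1).natAbs ≤ i := by
  classical
  set intOf : ℕ → ℤ := fun m => if Even m then ((m/2 : ℕ) : ℤ) else -(((m+1)/2 : ℕ) : ℤ)
    with hio
  have hsurj : Function.Surjective intOf := by
    intro k
    rcases le_or_gt 0 k with hk | hk
    · refine ⟨2 * k.toNat, ?_⟩
      have he : Even (2 * k.toNat) := even_two_mul _
      simp only [hio, if_pos he]
      omega
    · refine ⟨2 * (-k).toNat - 1, ?_⟩
      have h1 : 1 ≤ (-k).toNat := by omega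
      have he : ¬ Even (2 * (-k).toNat - 1) := by
        rw [Nat.even_iff]
        omega
      simp only [hio, if_neg he]
      omega
  have hbound : ∀ m, (intOf m).natAbs ≤ m := by
    intro m
    by_cases he : Even m
    · simp only [hio, if_pos he]
      rw [Nat.even_iff] at he
      omega
    · simp only [hio, if_neg he]
      rw [Nat.even_iff] at he
      omega
  refine ⟨fun i => (intOf (Nat.unpair i).1, (Nat.unpair i).2), ?_, ?_⟩
  · rintro ⟨k, j⟩
    obtain ⟨mm, hmm⟩ := hsurj k
    refine ⟨Nat.pair mm j, ?_⟩
    simp only [Nat.unpair_pair, hmm]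
  · intro i
    exact le_trans (hbound _) (Nat.unpair_left_le i)

theorem exists_seq_dense_B1 [SeparableSpace Y] [Nonempty Y] :
    ∃ D : Set (Y → ℝ), D.Countable ∧ (∀ s ∈ D, Continuous s) ∧
      ∀ g : Y → ℝ, (∀ U : Set ℝ, IsOpen U → IsFSigmaSet (g ⁻¹' U)) → SeqLim D g := by
  classical
  set a : ℕ → Y := denseSeq Y with hadef
  have hd : DenseRange a := denseRange_denseSeq Y
  set mk : ((n : ℕ) × ((Fin (n+1) → ℚ) × (Fin (n+1) → NetP))) → (Y → ℝ) :=
    fun p => coreD (fun i => if h : i < p.1 + 1 then ((p.2.1 ⟨i, h⟩ : ℚ) : ℝ) else 0)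
      (fun i _ => if h : i < p.1 + 1 then interpNet a (p.2.2 ⟨i, h⟩) else fun _ => 1) p.1
    with hmkdef
  set D0 : Set (Y → ℝ) := Set.range mk with hD0def
  have hD0count : D0.Countable := countable_range mk
  have hD0cont : ∀ s ∈ D0, Continuous s := by
    rintro s ⟨p, rfl⟩
    apply coreD_continuous
    · intro i
      split
      · exact interpNet_continuous a _
      · exact continuous_const
    · intro i y
      split
      · exact interpNet_nonneg a _ y
      · norm_num
  refine ⟨clClosure D0, clClosure_countable hD0count, clClosure_continuous hD0cont, ?_⟩
  intro g hg
  obtain ⟨e, he, heb⟩ := exists_enum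
  have hstep : ∀ m : ℕ, ∃ gm : Y → ℝ, SeqLim (clClosure D0) gm ∧
      ∀ x, |g x - gm x| ≤ (2⁻¹:ℝ)^m := by
    intro m
    set ε : ℝ := (2⁻¹:ℝ)^m with hεdef
    have hε : 0 < ε := by positivity
    have hε1 : ε ≤ 1 := by
      rw [hεdef]
      exact pow_le_one₀ (by norm_num) (by norm_num)
    have hZ : ∀ k : ℤ, IsFSigmaSet (g ⁻¹' Ioo (((k:ℝ)-1)*ε) (((k:ℝ)+1)*ε)) :=
      fun k => hg _ isOpen_Ioo
    choose Ck hCkcl hCkU using hZ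
    set P : ℕ → Set Y := fun i => Ck (e i).1 (e i).2 with hPdef
    have hPcl : ∀ i, IsClosed (P i) := fun i => hCkcl _ _
    have hcover : ∀ x, ∃ i, x ∈ P i := by
      intro x
      set k : ℤ := ⌊g x / ε⌋ with hkdef
      have h1 : (k:ℝ) ≤ g x / ε := Int.floor_le _
      have h2 : g x / ε < (k:ℝ) + 1 := Int.lt_floor_add_one _
      have hmem : g x ∈ Ioo (((k:ℝ)-1)*ε) (((k:ℝ)+1)*ε) := by
        constructor
        · have := mul_le_mul_of_nonneg_right h1 (le_of_lt hε)
          rw [div_mul_cancel₀ _ (ne_of_gt hε)] at this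
          nlinarith
        · have := mul_lt_mul_of_pos_right h2 hε
          rw [div_mul_cancel₀ _ (ne_of_gt hε)] at this
          linarith
      have hx : x ∈ g ⁻¹' Ioo (((k:ℝ)-1)*ε) (((k:ℝ)+1)*ε) := hmem
      rw [hCkU k] at hx
      obtain ⟨mm, hmm⟩ := mem_iUnion.mp hx
      obtain ⟨i, hi⟩ := he (k, mm)
      exact ⟨i, by simp only [hPdef, hi]; exact hmm⟩
    set i₀ : Y → ℕ := fun x => Nat.find (hcover x) with hi₀def
    have hi₀mem : ∀ x, x ∈ P (i₀ x) := fun x => Nat.find_spec (hcover x)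
    have hi₀min : ∀ x, ∀ j, j < i₀ x → x ∉ P j := fun x j hj => Nat.find_min (hcover x) hj
    set v : ℕ → ℝ := fun i => ((e i).1 : ℝ) * ε with hvdef
    have hnet : ∀ i n, ∃ p : NetP, ((P i).Nonempty →
        ((∀ y ∈ P i, interpNet a p y ≤ 2 * (2⁻¹:ℝ)^n) ∧
        (∀ (y : Y) (k : ℕ), k < n → ∀ r : ℝ, (∀ c ∈ P i, r ≤ |d1 y (a k) - d1 c (a k)|) →
          (2⁻¹:ℝ)^k * r - 4 * (2⁻¹:ℝ)^n ≤ interpNet a p y))) ∧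
        (¬ (P i).Nonempty → p = none) := by
      intro i n
      by_cases h : (P i).Nonempty
      · obtain ⟨p, h1, h2⟩ := net_exists a h n
        exact ⟨p, fun _ => ⟨h1, h2⟩, fun h' => absurd h h'⟩
      · exact ⟨none, fun h' => absurd h' h, fun _ => rfl⟩
    choose np hnp1 hnp2 using hnet
    set u : ℕ → ℕ → Y → ℝ := fun i n => interpNet a (np i n) with hudef
    have hunn : ∀ i n x, 0 ≤ u i n x := by
      intro i n x
      simp only [hudef]
      exact interpNet_nonneg a _ x
    have hgeom : Tendsto (fun n : ℕ => (n:ℝ) * (2 * (2⁻¹:ℝ)^n)) atTop (𝓝 0) := by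
      have hs : Summable (fun n : ℕ => (n:ℝ) * (2⁻¹:ℝ)^n) :=
        (hasSum_coe_mul_geometric_of_norm_lt_one
          (by rw [Real.norm_eq_abs, abs_of_nonneg (by norm_num : (0:ℝ) ≤ 2⁻¹)]; norm_num)).summable
      have h2 := (hs.tendsto_atTop_zero).const_mul (2:ℝ)
      simp only [mul_zero] at h2
      apply h2.congr
      intro n
      ring
    have hA : ∀ x, Tendsto (fun n : ℕ => (n:ℝ) * u (i₀ x) n x) atTop (𝓝 0) := by
      intro x
      have hPne : (P (i₀ x)).Nonempty := ⟨x, hi₀mem x⟩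
      apply squeeze_zero (fun n => mul_nonneg (Nat.cast_nonneg n) (hunn _ n x)) ?_ hgeom
      intro n
      apply mul_le_mul_of_nonneg_left ?_ (Nat.cast_nonneg n)
      have := ((hnp1 _ n hPne).1) x (hi₀mem x)
      simpa only [hudef] using this
    have hB : ∀ x, ∀ j, j < i₀ x → Tendsto (fun n : ℕ => (n:ℝ) * u j n x) atTop atTop := by
      intro x j hj
      by_cases hPj : (P j).Nonempty
      · have hxc : x ∈ (P j)ᶜ := hi₀min x j hj
        obtain ⟨ε', hε', hball⟩ := Metric.isOpen_iff.mp (hPcl j).isOpen_compl x hxc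
        set ε2 : ℝ := min ε' 2⁻¹ with hε2def
        have hε2pos : 0 < ε2 := lt_min hε' (by norm_num)
        have hε2le : ε2 ≤ 2⁻¹ := min_le_right _ _
        have hε2le' : ε2 ≤ ε' := min_le_left _ _
        obtain ⟨k₀, hk₀⟩ := hd.exists_dist_lt x (show (0:ℝ) < ε2/3 by linarith)
        set r : ℝ := ε2/3 with hrdef
        have hrpos : 0 < r := by rw [hrdef]; linarith
        have hrc : ∀ c ∈ P j, r ≤ |d1 x (a k₀) - d1 c (a k₀)| := by
          intro c hc
          have hdist : ε2 ≤ dist x c := by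
            by_contra hlt
            push_neg at hlt
            have hcb : c ∈ Metric.ball x ε' := by
              rw [Metric.mem_ball, dist_comm]
              exact lt_of_lt_of_le hlt hε2le'
            exact (hball hcb) hc
          have h1 : d1 x (a k₀) < r := by
            rw [hrdef]
            exact lt_of_le_of_lt (min_le_left _ _) hk₀
          have h2 : 2*r ≤ d1 c (a k₀) := by
            have htri := dist_triangle x (a k₀) c
            rw [dist_comm (a k₀) c] at htri
            have hca : 2*r ≤ dist c (a k₀) := by
              rw [hrdef]
              linarith
            have h2r1 : 2*r ≤ 1 := by
              rw [hrdef]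
              linarith
            exact le_min hca h2r1
          calc r = 2*r - r := by ring
            _ ≤ d1 c (a k₀) - d1 x (a k₀) := by linarith
            _ ≤ |d1 x (a k₀) - d1 c (a k₀)| := by
                rw [abs_sub_comm]
                exact le_abs_self _
        set cst : ℝ := (2⁻¹:ℝ)^k₀ * r with hcstdef
        have hcstpos : 0 < cst := by rw [hcstdef]; positivity
        apply tendsto_atTop_mono' atTop ?_
          (Tendsto.atTop_mul_const (show 0 < cst/2 by linarith) tendsto_natCast_atTop_atTop)
        have hev1 : ∀ᶠ n : ℕ in atTop, 4 * (2⁻¹:ℝ)^n < cst/2 := by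
          have hpow : Tendsto (fun n : ℕ => 4 * (2⁻¹:ℝ)^n) atTop (𝓝 0) := by
            have := (tendsto_pow_atTop_nhds_zero_of_lt_one
              (show (0:ℝ) ≤ 2⁻¹ by norm_num) (by norm_num)).const_mul (4:ℝ)
            simpa using this
          exact hpow.eventually (eventually_lt_nhds (show (0:ℝ) < cst/2 by linarith))
        filter_upwards [hev1, eventually_gt_atTop k₀] with n hn1 hn2
        have hlow := (hnp1 j n hPj).2 x k₀ hn2 r hrc
        have hucst : cst/2 ≤ u j n x := by
          simp only [hudef]
          rw [hcstdef] at hn1 ⊢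
          linarith
        exact mul_le_mul_of_nonneg_left hucst (Nat.cast_nonneg n)
      · have hone : ∀ n, u j n x = 1 := by
          intro n
          show interpNet a (np j n) x = 1
          rw [hnp2 j n hPj]
          rfl
        apply tendsto_atTop_mono' atTop ?_ tendsto_natCast_atTop_atTop
        filter_upwards with n
        rw [hone n, mul_one]
    have hsummableM : Summable (fun i : ℕ => (i:ℝ) * (2⁻¹:ℝ)^i) :=
      (hasSum_coe_mul_geometric_of_norm_lt_one
        (by rw [Real.norm_eq_abs, abs_of_nonneg (by norm_num : (0:ℝ) ≤ 2⁻¹)]; norm_num)).summable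
    set M : ℝ := ∑' i : ℕ, (i:ℝ) * (2⁻¹:ℝ)^i with hMdef
    have hvbound : ∀ i, |v i| ≤ (i:ℝ) := by
      intro i
      have h1 : |((e i).1 : ℝ)| ≤ (i : ℝ) := by
        have hb := heb i
        calc |((e i).1:ℝ)| = (((e i).1.natAbs : ℕ) : ℝ) := by
              rw [Nat.cast_natAbs, Int.cast_abs]
          _ ≤ (i:ℝ) := by exact_mod_cast hb
      calc |v i| = |((e i).1:ℝ)| * ε := by
            simp only [hvdef]
            rw [abs_mul, abs_of_nonneg (le_of_lt hε)]
        _ ≤ (i:ℝ) * 1 := mul_le_mul h1 hε1 (le_of_lt hε) (Nat.cast_nonneg i)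
        _ = (i:ℝ) := mul_one _
    have hC : ∀ x, Tendsto (fun n : ℕ =>
        (∑ i ∈ Finset.Ioc (i₀ x) n, |v i| * (2⁻¹:ℝ)^i) * min 1 ((n:ℝ) * u (i₀ x) n x))
        atTop (𝓝 0) := by
      intro x
      have hsumIoc : ∀ n : ℕ, (∑ i ∈ Finset.Ioc (i₀ x) n, |v i| * (2⁻¹:ℝ)^i) ≤ M := by
        intro n
        calc (∑ i ∈ Finset.Ioc (i₀ x) n, |v i| * (2⁻¹:ℝ)^i)
            ≤ ∑ i ∈ Finset.Ioc (i₀ x) n, (i:ℝ) * (2⁻¹:ℝ)^i := by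
              apply Finset.sum_le_sum
              intro i _
              exact mul_le_mul_of_nonneg_right (hvbound i) (by positivity)
          _ ≤ M := hsummableM.sum_le_tsum _ (fun i _ => by positivity)
      have hminlim : Tendsto (fun n : ℕ => min 1 ((n:ℝ) * u (i₀ x) n x)) atTop (𝓝 0) := by
        have hcont : Continuous (fun t : ℝ => min 1 t) := continuous_const.min continuous_id
        have h := (hcont.tendsto 0).comp (hA x)
        norm_num at h
        exact h
      have hminnn : ∀ n : ℕ, (0:ℝ) ≤ min 1 ((n:ℝ) * u (i₀ x) n x) :=
        fun n => le_min (by norm_num) (mul_nonneg (Nat.cast_nonneg n) (hunn _ n x))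
      apply squeeze_zero (fun n => mul_nonneg (Finset.sum_nonneg
        (fun i _ => mul_nonneg (abs_nonneg _) (by positivity))) (hminnn n)) ?_
        (by simpa using hminlim.const_mul M)
      intro n
      exact mul_le_mul_of_nonneg_right (hsumIoc n) (hminnn n)
    refine ⟨fun x => v (i₀ x), ⟨fun n => coreD v u n, ?_, ?_⟩, ?_⟩
    · intro n
      apply subset_clClosure
      rw [hD0def]
      refine ⟨⟨n, fun i => ((e (i:ℕ)).1 : ℚ) * (2⁻¹:ℚ)^m, fun i => np (i:ℕ) n⟩, ?_⟩
      rw [hmkdef]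
      dsimp only
      apply coreD_congr
      · intro i hi
        rw [dif_pos (Nat.lt_succ_of_le hi)]
        simp only [hvdef, hεdef]
        push_cast
        norm_num
      · intro i hi
        rw [dif_pos (Nat.lt_succ_of_le hi)]
    · intro x
      exact core_tendsto v u x (i₀ x) (fun i n => hunn i n x) (hA x) (hB x) (hC x)
    · intro x
      have hx := hi₀mem x
      have hsub : P (i₀ x) ⊆ g ⁻¹' Ioo ((((e (i₀ x)).1:ℝ)-1)*ε) ((((e (i₀ x)).1:ℝ)+1)*ε) := by
        rw [hCkU (e (i₀ x)).1]
        exact subset_iUnion (fun mm => Ck (e (i₀ x)).1 mm) (e (i₀ x)).2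
      have hmem2 := hsub hx
      simp only [mem_preimage, mem_Ioo] at hmem2
      rw [abs_le]
      constructor <;> simp only [hvdef] <;> nlinarith [hmem2.1, hmem2.2]
  choose F hFlim hFapp using hstep
  exact seqLim_of_uniform_approx (fun a' ha' b hb => clClosure_add ha' hb)
    (fun i a' ha' b hb => clClosure_clamp i ha' hb) F hFlim hFapp

theorem exists_seq_dense_B1' (Z : Type*) [TopologicalSpace Z] [MetrizableSpace Z]
    [SeparableSpace Z] [Nonempty Z] :
    ∃ D : Set (Z → ℝ), D.Countable ∧ (∀ s ∈ D, Continuous s) ∧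
      ∀ g : Z → ℝ, (∀ U : Set ℝ, IsOpen U → IsFSigmaSet (g ⁻¹' U)) → SeqLim D g := by
  letI : MetricSpace Z := TopologicalSpace.metrizableSpaceMetric Z
  exact exists_seq_dense_B1

end MetricPart

end B1Aux

theorem b1_seqSeparable_of_bijection
    {X : Type*} [TopologicalSpace X] [T35Space X]
    (Y : Type*) [TopologicalSpace Y] [SeparableSpace Y] [MetrizableSpace Y]
    (φ : X → Y) (hbij : Function.Bijective φ)
    (h1 : ∀ U : Set Y, IsOpen U → IsZSigmaSet (φ ⁻¹' U))
    (h2 : ∀ T : Set X, IsZeroSet T → IsFSigmaSet (φ '' T)) :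
    B1SeqSeparable X := by
  classical
  rcases isEmpty_or_nonempty X with hX | hX
  · refine ⟨{fun _ => 0}, countable_singleton _, ?_, ?_⟩
    · intro f hf
      rw [mem_singleton_iff] at hf
      subst hf
      exact ⟨fun _ _ => 0, fun _ => continuous_const, fun x => isEmptyElim x⟩
    · intro f _
      exact ⟨fun _ => fun _ => 0, fun _ => mem_singleton_iff.mpr rfl, fun x => isEmptyElim x⟩
  · haveI : Nonempty Y := ⟨φ (Classical.arbitrary X)⟩
    obtain ⟨D, hDc, hDcont, hDseq⟩ := B1Aux.exists_seq_dense_B1' Y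
    set ψ : Y → X := fun y => (Equiv.ofBijective φ hbij).symm y with hψdef
    refine ⟨(fun s => s ∘ φ) '' D, hDc.image _, ?_, ?_⟩
    · rintro f₀ ⟨s, hs, rfl⟩
      apply B1Aux.isBaire1_of_zsigma_measurable
      intro U hU
      have hpre : (s ∘ φ) ⁻¹' U = φ ⁻¹' (s ⁻¹' U) := rfl
      rw [hpre]
      exact h1 _ (hU.preimage (hDcont s hs))
    · intro f hf
      set g : Y → ℝ := f ∘ ψ with hgdef
      have hgm : ∀ U : Set ℝ, IsOpen U → IsFSigmaSet (g ⁻¹' U) := by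
        intro U hU
        have hpre : g ⁻¹' U = φ '' (f ⁻¹' U) := by
          ext y
          simp only [mem_preimage, mem_image]
          constructor
          · intro hy
            exact ⟨ψ y, hy, (Equiv.ofBijective φ hbij).apply_symm_apply y⟩
          · rintro ⟨x, hx, rfl⟩
            have hψφ : ψ (φ x) = x := (Equiv.ofBijective φ hbij).symm_apply_apply x
            show f (ψ (φ x)) ∈ U
            rw [hψφ]
            exact hx
        rw [hpre]
        obtain ⟨Z, hZ0, hZU⟩ := B1Aux.isZSigmaSet_preimage_of_isBaire1 hf hU
        rw [hZU, image_iUnion]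
        have hFσ : ∀ n, IsFSigmaSet (φ '' Z n) := fun n => h2 _ (hZ0 n)
        choose Cf hCf hCfU using hFσ
        refine ⟨fun p => Cf (Nat.unpair p).1 (Nat.unpair p).2, fun p => hCf _ _, ?_⟩
        ext y
        simp only [mem_iUnion]
        constructor
        · rintro ⟨n, hy⟩
          rw [hCfU n] at hy
          obtain ⟨mq, hmq⟩ := mem_iUnion.mp hy
          exact ⟨Nat.pair n mq, by rw [Nat.unpair_pair]; exact hmq⟩
        · rintro ⟨p, hp⟩
          refine ⟨(Nat.unpair p).1, ?_⟩
          rw [hCfU]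
          exact mem_iUnion.mpr ⟨(Nat.unpair p).2, hp⟩
      obtain ⟨w, hwD, hwlim⟩ := hDseq g hgm
      refine ⟨fun n => w n ∘ φ, fun n => ⟨w n, hwD n, rfl⟩, ?_⟩
      intro x
      have hlim := hwlim (φ x)
      have hgx : g (φ x) = f x := by
        have h3 : ψ (φ x) = x := (Equiv.ofBijective φ hbij).symm_apply_apply x
        show f (ψ (φ x)) = f x
        rw [h3]
      rw [hgx] at hlim
      exact hlim
end

section
/- If B₁(X) with the pointwise convergence topology is sequentially separable, then there exists a bijection φ from X onto a separable metrizable space Y such that φ⁻¹(U) is a Z_σ-set of X for every open U ⊆ Y, and φ(T) is an F_σ-set of Y for every zero-set T of X. -/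
open Set Filter Topology TopologicalSpace

section Aux
variable {X : Type*} [TopologicalSpace X]

lemma isZeroSet_empty : IsZeroSet (∅ : Set X) :=
  ⟨fun _ => 1, continuous_const, by ext x; simp⟩

lemma isZeroSet_univ : IsZeroSet (univ : Set X) :=
  ⟨fun _ => 0, continuous_const, by ext x; simp⟩

lemma IsZeroSet.inter {A B : Set X} (hA : IsZeroSet A) (hB : IsZeroSet B) :
    IsZeroSet (A ∩ B) := by
  obtain ⟨f, hf, rfl⟩ := hA; obtain ⟨g, hg, rfl⟩ := hB
  refine ⟨fun x => |f x| + |g x|, hf.abs.add hg.abs, ?_⟩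
  ext x
  simp [add_eq_zero_iff_of_nonneg (abs_nonneg (f x)) (abs_nonneg (g x)), abs_eq_zero]

lemma isZeroSet_iInter {A : ℕ → Set X} (h : ∀ n, IsZeroSet (A n)) :
    IsZeroSet (⋂ n, A n) := by
  choose g hg hA using h
  set t : ℕ → X → ℝ := fun n x => (2⁻¹ : ℝ) ^ n * min |g n x| 1 with ht
  have h2 : (0:ℝ) ≤ 2⁻¹ := by norm_num
  have htnn : ∀ n x, 0 ≤ t n x := fun n x =>
    mul_nonneg (pow_nonneg h2 n) (le_min (abs_nonneg _) zero_le_one)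
  have htle : ∀ n x, ‖t n x‖ ≤ (2⁻¹:ℝ)^n := by
    intro n x
    rw [Real.norm_eq_abs, abs_of_nonneg (htnn n x)]
    calc (2⁻¹ : ℝ) ^ n * min |g n x| 1 ≤ (2⁻¹:ℝ)^n * 1 :=
          mul_le_mul_of_nonneg_left (min_le_right _ _) (pow_nonneg h2 n)
      _ = (2⁻¹:ℝ)^n := mul_one _
  have hsum : Summable fun n => (2⁻¹:ℝ)^n :=
    summable_geometric_of_lt_one h2 (by norm_num)
  have hsx : ∀ x, Summable fun n => t n x := fun x =>
    hsum.of_nonneg_of_le (fun n => htnn n x)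
      (fun n => by simpa [Real.norm_eq_abs, abs_of_nonneg (htnn n x)] using htle n x)
  refine ⟨fun x => ∑' n, t n x,
    continuous_tsum (fun n => continuous_const.mul (((hg n).abs).min continuous_const))
      hsum (fun n x => htle n x), ?_⟩
  ext x
  simp only [mem_iInter, mem_preimage, mem_singleton_iff]
  constructor
  · intro hx
    have hz : ∀ n, t n x = 0 := by
      intro n
      have hgx : g n x = 0 := by
        have := hx n; rw [hA n] at this; simpa using this
      simp [ht, hgx]
    calc ∑' n, t n x = ∑' _ : ℕ, (0:ℝ) := tsum_congr hz
      _ = 0 := tsum_zero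
  · intro h0 n
    have h1 : t n x ≤ 0 := h0 ▸ Summable.le_tsum (hsx x) n (fun j _ => htnn j x)
    have h2' : t n x = 0 := le_antisymm h1 (htnn n x)
    have hmin : min |g n x| 1 = 0 := by
      have hp : (2⁻¹:ℝ)^n ≠ 0 := by positivity
      exact (mul_eq_zero.1 h2').resolve_left hp
    have : |g n x| = 0 := by
      rcases min_eq_iff.1 hmin with ⟨h', _⟩ | ⟨h', _⟩
      · exact h'
      · norm_num at h'
    rw [hA n]
    simpa using abs_eq_zero.1 this

lemma IsZeroSet.zsigma {A : Set X} (h : IsZeroSet A) : IsZSigmaSet A :=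
  ⟨fun _ => A, fun _ => h, (iUnion_const A).symm⟩

lemma isZSigmaSet_empty : IsZSigmaSet (∅ : Set X) := isZeroSet_empty.zsigma

lemma isZSigmaSet_univ : IsZSigmaSet (univ : Set X) := isZeroSet_univ.zsigma

lemma isZSigmaSet_iUnion {A : ℕ → Set X} (h : ∀ n, IsZSigmaSet (A n)) :
    IsZSigmaSet (⋃ n, A n) := by
  choose F hF hA using h
  let e : ℕ ≃ ℕ × ℕ := (Denumerable.eqv (ℕ × ℕ)).symm
  refine ⟨fun n => F (e n).1 (e n).2, fun n => hF _ _, ?_⟩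
  have h1 : (⋃ n, A n) = ⋃ p : ℕ × ℕ, F p.1 p.2 := by
    simp_rw [hA, Set.iUnion_prod']
  rw [h1, ← e.surjective.iUnion_comp (g := fun p : ℕ × ℕ => F p.1 p.2)]

lemma IsZSigmaSet.inter {A B : Set X} (hA : IsZSigmaSet A) (hB : IsZSigmaSet B) :
    IsZSigmaSet (A ∩ B) := by
  obtain ⟨F, hF, rfl⟩ := hA; obtain ⟨G, hG, rfl⟩ := hB
  let e : ℕ ≃ ℕ × ℕ := (Denumerable.eqv (ℕ × ℕ)).symm
  refine ⟨fun n => F (e n).1 ∩ G (e n).2, fun n => (hF _).inter (hG _), ?_⟩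
  ext x
  simp only [mem_inter_iff, mem_iUnion]
  constructor
  · rintro ⟨⟨n, hn⟩, ⟨m, hm⟩⟩
    exact ⟨e.symm (n, m), by simpa using ⟨hn, hm⟩⟩
  · rintro ⟨n, hn, hm⟩
    exact ⟨⟨_, hn⟩, ⟨_, hm⟩⟩

lemma isZSigmaSet_biUnion {ι : Type*} {s : Set ι} (hs : s.Countable) {A : ι → Set X}
    (hA : ∀ i ∈ s, IsZSigmaSet (A i)) : IsZSigmaSet (⋃ i ∈ s, A i) := by
  rcases s.eq_empty_or_nonempty with rfl | hne
  · simpa using isZSigmaSet_empty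
  obtain ⟨f, rfl⟩ := hs.exists_eq_range hne
  rw [biUnion_range]
  exact isZSigmaSet_iUnion fun n => hA _ ⟨n, rfl⟩

lemma isZSigmaSet_finset_iInter {ι : Type*} (s : Finset ι) {A : ι → Set X}
    (hA : ∀ i ∈ s, IsZSigmaSet (A i)) : IsZSigmaSet (⋂ i ∈ s, A i) := by
  classical
  induction s using Finset.induction_on with
  | empty => simpa using isZSigmaSet_univ
  | @insert a s ha ih =>
    rw [Finset.set_biInter_insert]
    exact (hA a (Finset.mem_insert_self a s)).inter
      (ih fun i hi => hA i (Finset.mem_insert_of_mem hi))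

lemma isZeroSet_preimage_Ici {g : X → ℝ} (hg : Continuous g) (q : ℝ) :
    IsZeroSet (g ⁻¹' Ici q) := by
  refine ⟨fun x => max (q - g x) 0, (continuous_const.sub hg).max continuous_const, ?_⟩
  ext x
  simp [max_eq_right_iff, sub_nonpos]

lemma IsBaire1.preimage_Ioi {f : X → ℝ} (hf : IsBaire1 f) (a : ℝ) :
    IsZSigmaSet (f ⁻¹' Ioi a) := by
  obtain ⟨g, hg, hlim⟩ := hf
  have key : f ⁻¹' Ioi a =
      ⋃ p ∈ {p : ℚ × ℕ | a < (p.1 : ℝ)},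
        ⋂ m, (g (m + p.2)) ⁻¹' Ici (p.1 : ℝ) := by
    ext x
    simp only [mem_preimage, mem_Ioi, mem_iUnion, mem_setOf_eq, mem_iInter, mem_preimage,
      mem_Ici, exists_prop]
    constructor
    · intro hx
      obtain ⟨q, haq, hq⟩ := exists_rat_btwn hx
      obtain ⟨N, hN⟩ := ((hlim x).eventually_const_lt hq).exists_forall_of_atTop
      exact ⟨(q, N), haq, fun m => (hN _ (Nat.le_add_left N m)).le⟩
    · rintro ⟨⟨q, N⟩, haq, hx⟩
      have hle : (q : ℝ) ≤ f x := by
        refine ge_of_tendsto (hlim x) (eventually_atTop.2 ⟨N, fun n hn => ?_⟩)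
        have := hx (n - N)
        rwa [Nat.sub_add_cancel hn] at this
      exact lt_of_lt_of_le haq hle
  rw [key]
  exact isZSigmaSet_biUnion (Set.to_countable _)
    (fun p _ => (isZeroSet_iInter fun m => isZeroSet_preimage_Ici (hg _) _).zsigma)

lemma IsBaire1.neg {f : X → ℝ} (hf : IsBaire1 f) : IsBaire1 (fun x => -f x) := by
  obtain ⟨g, hg, hlim⟩ := hf
  exact ⟨fun n x => -g n x, fun n => (hg n).neg, fun x => (hlim x).neg⟩

lemma IsBaire1.preimage_Iio {f : X → ℝ} (hf : IsBaire1 f) (a : ℝ) :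
    IsZSigmaSet (f ⁻¹' Iio a) := by
  have h1 : f ⁻¹' Iio a = (fun x => -f x) ⁻¹' Ioi (-a) := by
    ext x; simp [neg_lt_neg_iff]
  rw [h1]
  exact hf.neg.preimage_Ioi (-a)

lemma IsBaire1.preimage_Ioo {f : X → ℝ} (hf : IsBaire1 f) (a b : ℝ) :
    IsZSigmaSet (f ⁻¹' Ioo a b) := by
  have : f ⁻¹' Ioo a b = f ⁻¹' Ioi a ∩ f ⁻¹' Iio b := by
    ext x; simp [and_comm]
  rw [this]
  exact (hf.preimage_Ioi a).inter (hf.preimage_Iio b)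

end Aux

theorem bijection_of_b1_seqSeparable
    {X : Type*} [TopologicalSpace X] [T35Space X]
    (h : B1SeqSeparable X) :
    ∃ (Y : Type _) (tY : TopologicalSpace Y),
      @SeparableSpace Y tY ∧ @MetrizableSpace Y tY ∧
      ∃ φ : X → Y, Function.Bijective φ ∧
        (∀ U : Set Y, IsOpen[tY] U → IsZSigmaSet (φ ⁻¹' U)) ∧
        (∀ T : Set X, IsZeroSet T → @IsFSigmaSet Y tY (φ '' T)) := by
  classical
  obtain ⟨S, hScount, hSb1, hrep⟩ := h
  have hSne : S.Nonempty := by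
    obtain ⟨u, hu, -⟩ := hrep (fun _ => 0)
      ⟨fun _ _ => 0, fun _ => continuous_const, fun x => tendsto_const_nhds⟩
    exact ⟨u 0, hu 0⟩
  obtain ⟨en, hen⟩ := hScount.exists_eq_range hSne
  have henB1 : ∀ n, IsBaire1 (en n) := fun n => hSb1 _ (hen ▸ mem_range_self n)
  set φ₀ : X → (ℕ → ℝ) := fun x n => en n x with hφ₀
  have hinj : Function.Injective φ₀ := by
    intro x y hxy
    by_contra hne
    obtain ⟨f, hfc, hfxy⟩ := separatesPoints_continuous_of_t35Space hne
    obtain ⟨u, hu, hconv⟩ := hrep f ⟨fun _ => f, fun _ => hfc, fun x => tendsto_const_nhds⟩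
    have huxy : ∀ n, u n x = u n y := by
      intro n
      have h1 := hu n
      rw [hen, mem_range] at h1
      obtain ⟨m, hm⟩ := h1
      rw [← hm]
      exact congrFun hxy m
    have : (fun n => u n y) = fun n => u n x := by
      funext n; exact (huxy n).symm
    exact hfxy (tendsto_nhds_unique (hconv x) (this ▸ hconv y))
  have hrfinj : Function.Injective (Set.rangeFactorization φ₀) := by
    intro a b hab
    exact hinj (congrArg Subtype.val hab)
  haveI h2c : SecondCountableTopology (ULift ↥(range φ₀)) :=
    IsEmbedding.uliftDown.secondCountableTopology
  haveI hmet : MetrizableSpace (ULift ↥(range φ₀)) :=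
    IsEmbedding.uliftDown.metrizableSpace
  refine ⟨ULift ↥(range φ₀), inferInstance, inferInstance, inferInstance,
    fun x => ULift.up (Set.rangeFactorization φ₀ x),
    ⟨fun a b hab => hrfinj (congrArg ULift.down hab),
      ULift.up_surjective.comp Set.rangeFactorization_surjective⟩, ?_, ?_⟩
  · -- preimages of open sets
    intro U hU
    obtain ⟨W, hW, rfl⟩ := isOpen_induced_iff.1 hU
    obtain ⟨V, hV, rfl⟩ := isOpen_induced_iff.1 hW
    have hpre : (fun x => ULift.up (Set.rangeFactorization φ₀ x)) ⁻¹'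
        (ULift.down ⁻¹' (Subtype.val ⁻¹' V)) = φ₀ ⁻¹' V := rfl
    rw [hpre]
    set B : Finset (ℕ × ℚ × ℚ) → Set (ℕ → ℝ) := fun s =>
      ⋂ p ∈ s, (fun y : ℕ → ℝ => y p.1) ⁻¹' Ioo (p.2.1 : ℝ) (p.2.2 : ℝ) with hB
    have hcover : V = ⋃ s ∈ {s : Finset (ℕ × ℚ × ℚ) | B s ⊆ V}, B s := by
      apply Subset.antisymm
      · intro y hy
        obtain ⟨I, u, hu, hIu⟩ := isOpen_pi_iff.1 hV y hy
        have hex : ∀ a ∈ I, ∃ q r : ℚ, y a ∈ Ioo (q : ℝ) r ∧ Ioo (q : ℝ) (r : ℝ) ⊆ u a := by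
          intro a ha
          obtain ⟨l, u', hyl, hsub⟩ :=
            mem_nhds_iff_exists_Ioo_subset.1 ((hu a ha).1.mem_nhds (hu a ha).2)
          obtain ⟨q, hlq, hqy⟩ := exists_rat_btwn hyl.1
          obtain ⟨r, hyr, hru⟩ := exists_rat_btwn hyl.2
          exact ⟨q, r, ⟨hqy, hyr⟩, fun z hz => hsub ⟨hlq.trans hz.1, hz.2.trans hru⟩⟩
        choose q r hqr hsub using hex
        set s : Finset (ℕ × ℚ × ℚ) :=
          I.attach.image (fun a => (a.1, q a.1 a.2, r a.1 a.2)) with hs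
        have hmem : ∀ a (ha : a ∈ I), (a, q a ha, r a ha) ∈ s := fun a ha =>
          Finset.mem_image.2 ⟨⟨a, ha⟩, Finset.mem_attach _ _, rfl⟩
        have hBsV : B s ⊆ V := by
          intro z hz
          refine hIu (fun a ha => ?_)
          exact hsub a ha (mem_iInter₂.1 hz _ (hmem a ha))
        refine mem_biUnion hBsV ?_
        refine mem_iInter₂.2 ?_
        intro p hp
        rw [hs] at hp
        obtain ⟨⟨a, ha⟩, -, rfl⟩ := Finset.mem_image.1 hp
        exact hqr a ha
      · exact iUnion₂_subset fun s hs => hs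
    rw [hcover, preimage_iUnion₂]
    refine isZSigmaSet_biUnion (Set.to_countable _) (fun s hs => ?_)
    rw [hB, preimage_iInter₂]
    refine isZSigmaSet_finset_iInter s (fun p hp => ?_)
    have heq : φ₀ ⁻¹' ((fun y : ℕ → ℝ => y p.1) ⁻¹' Ioo (p.2.1 : ℝ) (p.2.2 : ℝ))
        = (en p.1) ⁻¹' Ioo (p.2.1 : ℝ) (p.2.2 : ℝ) := rfl
    rw [heq]
    exact (henB1 p.1).preimage_Ioo _ _
  · -- images of zero sets
    intro T hT
    obtain ⟨f, hfc, rfl⟩ := hT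
    set χ : X → ℝ := fun x => if f x = 0 then 1 else 0 with hχ
    have hχB1 : IsBaire1 χ := by
      refine ⟨fun n x => max (1 - (n : ℝ) * |f x|) 0, fun n =>
        (continuous_const.sub (continuous_const.mul hfc.abs)).max continuous_const, ?_⟩
      intro x
      by_cases hx : f x = 0
      · have h1 : (fun n : ℕ => max (1 - (n : ℝ) * |f x|) 0) = fun _ => (1 : ℝ) := by
          funext n; simp [hx]
        have h2 : χ x = 1 := by simp [hχ, hx]
        rw [h1, h2]
        exact tendsto_const_nhds
      · have hc : 0 < |f x| := abs_pos.2 hx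
        have h2 : χ x = 0 := by simp [hχ, hx]
        rw [h2]
        apply tendsto_atTop_of_eventually_const (i₀ := ⌈|f x|⁻¹⌉₊)
        intro n hn
        have h1 : |f x|⁻¹ ≤ (n : ℝ) := le_trans (Nat.le_ceil _) (by exact_mod_cast hn)
        have h3 : (1 : ℝ) ≤ (n : ℝ) * |f x| := by
          rw [← div_le_iff₀ hc, one_div]
          exact h1
        simp [max_eq_right, sub_nonpos.2 h3]
    obtain ⟨u, hu, hconv⟩ := hrep χ hχB1
    have hk' : ∀ n, ∃ m, en m = u n := by
      intro n
      have := hu n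
      rwa [hen, mem_range] at this
    choose k hk using hk'
    set G : ℕ → Set (↥(range φ₀)) :=
      fun N => {y : ↥(range φ₀) | ∀ n, N ≤ n → (1/2 : ℝ) ≤ (y : ℕ → ℝ) (k n)} with hG
    have hGclosed : ∀ N, IsClosed (G N) := by
      intro N
      have heq : G N = ⋂ n, ⋂ (_ : N ≤ n),
              (fun y : ↥(range φ₀) => (y : ℕ → ℝ) (k n)) ⁻¹' Ici (1/2 : ℝ) := by
        ext y; simp [hG, mem_iInter]
      rw [heq]
      exact isClosed_iInter fun n => isClosed_iInter fun _ =>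
        isClosed_Ici.preimage ((continuous_apply (k n)).comp continuous_subtype_val)
    have hupim : ∀ A : Set (↥(range φ₀)), ULift.up '' A = ULift.down ⁻¹' A := by
      intro A
      ext ⟨y⟩
      simp
    have hmain : Set.rangeFactorization φ₀ '' (f ⁻¹' {0}) = ⋃ N, G N := by
      ext y
      simp only [mem_image, mem_iUnion, mem_setOf_eq]
      constructor
      · rintro ⟨x, hx, rfl⟩
        have hfx : f x = 0 := by simpa using hx
        have hχx : χ x = 1 := by simp [hχ, hfx]
        have h1 : Tendsto (fun n => u n x) atTop (𝓝 1) := hχx ▸ hconv x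
        obtain ⟨N, hN⟩ :=
          (h1.eventually_const_lt (by norm_num : (1/2 : ℝ) < 1)).exists_forall_of_atTop
        refine ⟨N, fun n hn => ?_⟩
        have heq2 : (Set.rangeFactorization φ₀ x : ℕ → ℝ) (k n) = en (k n) x := rfl
        rw [heq2, hk n]
        exact (hN n hn).le
      · rintro ⟨N, hy⟩
        obtain ⟨x, hx⟩ := y.2
        have hle : (1/2 : ℝ) ≤ χ x := by
          refine ge_of_tendsto (hconv x) (eventually_atTop.2 ⟨N, fun n hn => ?_⟩)
          have heq3 : u n x = (y : ℕ → ℝ) (k n) := by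
            rw [← hk n, ← hx]
          rw [heq3]
          exact hy n hn
        have hfx : f x = 0 := by
          by_contra hne
          rw [hχ] at hle
          simp only [if_neg hne] at hle
          norm_num at hle
        exact ⟨x, by simpa using hfx, Subtype.ext hx⟩
    refine ⟨fun N => ULift.down ⁻¹' (G N), fun N => (hGclosed N).preimage continuous_uliftDown, ?_⟩
    have himc : (fun x => ULift.up (Set.rangeFactorization φ₀ x)) '' (f ⁻¹' {0})
        = ULift.up '' (Set.rangeFactorization φ₀ '' (f ⁻¹' {0})) := by
      rw [← image_comp]; rfl
    rw [himc, hmain, image_iUnion]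
    exact iUnion_congr fun N => hupim (G N)
end

section
/- For every regular topological space X with a countable network, the space B₁(X) of first Baire class functions with the pointwise convergence topology is sequentially separable. -/
open Set Filter Topology TopologicalSpace

/-- `N` is a network for `X`: every open set is a union of members of `N`. -/
def IsNetwork {X : Type*} [TopologicalSpace X] (N : Set (Set X)) : Prop :=
  ∀ U : Set X, IsOpen U → ∀ x ∈ U, ∃ P ∈ N, x ∈ P ∧ P ⊆ U


set_option linter.unusedSectionVars false

namespace B1Aux

variable {X : Type*} [TopologicalSpace X]


variable {X : Type*} [TopologicalSpace X]

open Classical in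
noncomputable def stepFn (C : ℕ → Set X) : List (ℕ × ℚ) → X → ℝ
  | [] => fun _ => 0
  | p :: t => fun x => if x ∈ C p.1 then (p.2 : ℝ) else stepFn C t x

lemma stepFn_append_of_not (C : ℕ → Set X) (L₁ L₂ : List (ℕ × ℚ)) (x : X)
    (h : ∀ p ∈ L₁, x ∉ C p.1) : stepFn C (L₁ ++ L₂) x = stepFn C L₂ x := by
  induction L₁ with
  | nil => rfl
  | cons p t ih =>
    simp only [List.cons_append, stepFn]
    rw [if_neg (h p List.mem_cons_self)]
    exact ih fun q hq => h q (List.mem_cons_of_mem _ hq)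

lemma stepFn_append_of_exists (C : ℕ → Set X) (L₁ L₂ : List (ℕ × ℚ)) (x : X)
    (h : ∃ p ∈ L₁, x ∈ C p.1) : stepFn C (L₁ ++ L₂) x = stepFn C L₁ x := by
  induction L₁ with
  | nil => simp at h
  | cons p t ih =>
    by_cases hx : x ∈ C p.1
    · simp only [List.cons_append, stepFn, if_pos hx]
    · obtain ⟨q, hq, hqx⟩ := h
      rcases List.mem_cons.mp hq with rfl | hq'
      · exact absurd hqx hx
      · simp only [List.cons_append, stepFn, if_neg hx]
        exact ih ⟨q, hq', hqx⟩

lemma stepFn_spec (C : ℕ → Set X) (L : List (ℕ × ℚ)) (x : X)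
    (h : ∃ p ∈ L, x ∈ C p.1) : ∃ p ∈ L, x ∈ C p.1 ∧ stepFn C L x = (p.2 : ℝ) := by
  induction L with
  | nil => simp at h
  | cons p t ih =>
    by_cases hx : x ∈ C p.1
    · exact ⟨p, List.mem_cons_self, hx, by simp [stepFn, if_pos hx]⟩
    · obtain ⟨q, hq, hqx⟩ := h
      rcases List.mem_cons.mp hq with rfl | hq'
      · exact absurd hqx hx
      · obtain ⟨q', hq', hx', hv⟩ := ih ⟨q, hq', hqx⟩
        exact ⟨q', List.mem_cons_of_mem _ hq', hx', by simp [stepFn, if_neg hx, hv]⟩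

lemma isBaire1_stepFn (C : ℕ → Set X)
    (hC : ∀ i, ∃ h : X → ℝ, Continuous h ∧ C i = h ⁻¹' {0}) (L : List (ℕ × ℚ)) :
    IsBaire1 (stepFn C L) := by
  induction L with
  | nil => exact ⟨fun _ _ => 0, fun _ => continuous_const, fun x => tendsto_const_nhds⟩
  | cons p t ih =>
    obtain ⟨h, hc, hC0⟩ := hC p.1
    obtain ⟨g, hgc, hgt⟩ := ih
    set c : ℕ → X → ℝ := fun n x => max (1 - n * |h x|) 0 with hcdef
    have hcc : ∀ n, Continuous (c n) :=
      fun n => (continuous_const.sub (continuous_const.mul hc.abs)).max continuous_const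
    refine ⟨fun n x => g n x + c n x * ((p.2 : ℝ) - g n x), fun n =>
      (hgc n).add ((hcc n).mul (continuous_const.sub (hgc n))), fun x => ?_⟩
    by_cases hx : x ∈ C p.1
    · have hhx : h x = 0 := by
        have := hC0 ▸ hx; simpa using this
      have hcx : ∀ n : ℕ, c n x = 1 := by
        intro n; simp [hcdef, hhx]
      have : ∀ n : ℕ, g n x + c n x * ((p.2 : ℝ) - g n x) = (p.2 : ℝ) := by
        intro n; rw [hcx n]; ring
      have htarget : stepFn C (p :: t) x = (p.2 : ℝ) := by simp [stepFn, if_pos hx]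
      rw [htarget]
      exact tendsto_const_nhds.congr fun n => (this n).symm
    · have hhx : h x ≠ 0 := by
        intro h0
        exact hx (hC0 ▸ (by simpa using h0))
      have habs : 0 < |h x| := abs_pos.mpr hhx
      have hev : ∀ᶠ n in atTop, g n x = g n x + c n x * ((p.2 : ℝ) - g n x) := by
        filter_upwards [eventually_ge_atTop ⌈1 / |h x|⌉₊] with n hn
        have h1 : (1:ℝ) / |h x| ≤ n := le_trans (Nat.le_ceil _) (by exact_mod_cast hn)
        have h2 : (1:ℝ) ≤ n * |h x| := by
          rw [div_le_iff₀ habs] at h1; linarith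
        have : c n x = 0 := max_eq_right (by linarith)
        rw [this]; ring
      have htarget : stepFn C (p :: t) x = stepFn C t x := by simp [stepFn, if_neg hx]
      rw [htarget]
      exact (hgt x).congr' hev

noncomputable def blockL (Good : ℕ → ℕ → ℚ → Prop) (r : ℕ → ℚ) (m n : ℕ) :
    List (ℕ × ℚ) :=
  (List.range (m + 1)).flatMap fun i => (List.range (m + 1)).filterMap fun j =>
    open Classical in if Good n i (r j) then some (i, r j) else none

lemma mem_blockL {Good : ℕ → ℕ → ℚ → Prop} {r : ℕ → ℚ} {m n : ℕ} {p : ℕ × ℚ} :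
    p ∈ blockL Good r m n ↔
      ∃ i < m + 1, ∃ j < m + 1, p = (i, r j) ∧ Good n i (r j) := by
  classical
  simp only [blockL, List.mem_flatMap, List.mem_filterMap, List.mem_range]
  constructor
  · rintro ⟨i, hi, j, hj, hij⟩
    split at hij
    · exact ⟨i, hi, j, hj, by cases hij; simp_all⟩
    · simp at hij
  · rintro ⟨i, hi, j, hj, rfl, hgd⟩
    exact ⟨i, hi, j, hj, by rw [if_pos hgd]⟩

lemma good_of_mem_blockL {Good : ℕ → ℕ → ℚ → Prop} {r : ℕ → ℚ} {m n : ℕ} {p : ℕ × ℚ}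
    (h : p ∈ blockL Good r m n) : Good n p.1 p.2 := by
  obtain ⟨i, _, j, _, rfl, hgd⟩ := mem_blockL.mp h
  exact hgd

noncomputable def descL (f : ℕ → List (ℕ × ℚ)) : ℕ → List (ℕ × ℚ)
  | 0 => f 0
  | n + 1 => f (n + 1) ++ descL f n

lemma descL_head (f : ℕ → List (ℕ × ℚ)) (k : ℕ) : ∃ R, descL f k = f k ++ R := by
  cases k with
  | zero => exact ⟨[], (List.append_nil _).symm⟩
  | succ n => exact ⟨descL f n, rfl⟩

lemma descL_split (f : ℕ → List (ℕ × ℚ)) {k m : ℕ} (hkm : k ≤ m) :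
    ∃ L₁, descL f m = L₁ ++ descL f k ∧ ∀ p ∈ L₁, ∃ n, k < n ∧ n ≤ m ∧ p ∈ f n := by
  induction m with
  | zero =>
    obtain rfl : k = 0 := Nat.le_zero.mp hkm
    exact ⟨[], rfl, by simp⟩
  | succ m ih =>
    rcases Nat.eq_or_lt_of_le hkm with rfl | hlt
    · exact ⟨[], rfl, by simp⟩
    · obtain ⟨L₁, hL, hmem⟩ := ih (Nat.lt_succ_iff.mp hlt)
      refine ⟨f (m + 1) ++ L₁, by rw [descL, hL, List.append_assoc], ?_⟩
      intro p hp
      rcases List.mem_append.mp hp with hp | hp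
      · exact ⟨m + 1, Nat.lt_succ_iff.mpr (Nat.lt_succ_iff.mp hlt), le_rfl, hp⟩
      · obtain ⟨n, h1, h2, h3⟩ := hmem p hp
        exact ⟨n, h1, Nat.le_succ_of_le h2, h3⟩



lemma isZero_of_closed [T35Space X] (e : ℕ → Set X)
    (hnet : ∀ U : Set X, IsOpen U → ∀ x ∈ U, ∃ i, x ∈ e i ∧ e i ⊆ U)
    (K : Set X) (hK : IsClosed K) :
    ∃ h : X → ℝ, Continuous h ∧ K = h ⁻¹' {0} := by
  classical
  set good : ℕ → Prop := fun i => ∃ g : X → ℝ, Continuous g ∧ (∀ y, 0 ≤ g y) ∧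
    (∀ y, g y ≤ 1) ∧ (∀ y ∈ K, g y = 0) ∧ (∀ y ∈ e i, g y ≠ 0) with hgood_def
  set G : ℕ → X → ℝ := fun i => if hg : good i then hg.choose else fun _ => 0 with hG_def
  have Gc : ∀ i, Continuous (G i) := by
    intro i; rw [hG_def]; dsimp only
    split
    · next hg => exact hg.choose_spec.1
    · exact continuous_const
  have G0 : ∀ i y, 0 ≤ G i y := by
    intro i y; rw [hG_def]; dsimp only
    split
    · next hg => exact hg.choose_spec.2.1 y
    · exact le_rfl
  have G1 : ∀ i y, G i y ≤ 1 := by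
    intro i y; rw [hG_def]; dsimp only
    split
    · next hg => exact hg.choose_spec.2.2.1 y
    · exact zero_le_one
  have GK : ∀ i, ∀ y ∈ K, G i y = 0 := by
    intro i y hy; rw [hG_def]; dsimp only
    split
    · next hg => exact hg.choose_spec.2.2.2.1 y hy
    · rfl
  have Ggood : ∀ i, good i → ∀ y ∈ e i, G i y ≠ 0 := by
    intro i hg y hy; rw [hG_def]; dsimp only
    rw [dif_pos hg]
    exact hg.choose_spec.2.2.2.2 y hy
  have hterm_nonneg : ∀ (y : X) (i : ℕ), 0 ≤ ((1:ℝ)/2) ^ i * G i y :=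
    fun y i => mul_nonneg (by positivity) (G0 i y)
  have hterm_le : ∀ (y : X) (i : ℕ), ((1:ℝ)/2) ^ i * G i y ≤ ((1:ℝ)/2) ^ i := by
    intro y i
    calc ((1:ℝ)/2) ^ i * G i y ≤ ((1:ℝ)/2) ^ i * 1 :=
          mul_le_mul_of_nonneg_left (G1 i y) (by positivity)
      _ = ((1:ℝ)/2) ^ i := mul_one _
  have hsum : ∀ y : X, Summable fun i => ((1:ℝ)/2) ^ i * G i y := fun y =>
    Summable.of_nonneg_of_le (hterm_nonneg y) (hterm_le y) summable_geometric_two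
  refine ⟨fun y => ∑' i, ((1:ℝ)/2) ^ i * G i y, ?_, ?_⟩
  · refine continuous_tsum (fun i => continuous_const.mul (Gc i)) summable_geometric_two ?_
    intro i y
    rw [Real.norm_eq_abs, abs_of_nonneg (hterm_nonneg y i)]
    exact hterm_le y i
  · ext y
    simp only [mem_preimage, mem_singleton_iff]
    constructor
    · intro hy
      have : ∀ i, ((1:ℝ)/2) ^ i * G i y = 0 := fun i => by rw [GK i y hy, mul_zero]
      calc (∑' i, ((1:ℝ)/2) ^ i * G i y) = ∑' _ : ℕ, (0:ℝ) := tsum_congr this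
        _ = 0 := tsum_zero
    · intro hy
      by_contra hyK
      obtain ⟨f, fc, hf0, hf1⟩ := CompletelyRegularSpace.completely_regular y K hK hyK
      have fcr : Continuous fun z => (f z : ℝ) := continuous_subtype_val.comp fc
      set W : Set X := {z | (f z : ℝ) < 1/2} with hW_def
      have hWopen : IsOpen W := isOpen_lt fcr continuous_const
      have hyW : y ∈ W := by
        have : (f y : ℝ) = 0 := by rw [hf0]; rfl
        simp only [hW_def, mem_setOf_eq, this]; norm_num
      obtain ⟨i, hyi, hiW⟩ := hnet W hWopen y hyW
      have hgi : good i := by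
        refine ⟨fun z => max (1/2 - (f z : ℝ)) 0, (continuous_const.sub fcr).max
          continuous_const, fun z => le_max_right _ _, fun z => ?_, fun z hz => ?_, fun z hz => ?_⟩
        · have h0 : (0:ℝ) ≤ (f z : ℝ) := (f z).2.1
          exact max_le (by linarith) zero_le_one
        · have h1 : (f z : ℝ) = 1 := by rw [hf1 hz]; rfl
          show max (1/2 - (f z : ℝ)) 0 = 0
          rw [h1]
          exact max_eq_right (by norm_num)
        · have hz' : (f z : ℝ) < 1/2 := hiW hz
          have : (0:ℝ) < 1/2 - (f z : ℝ) := by linarith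
          exact ne_of_gt (lt_of_lt_of_le this (le_max_left _ _))
      have hpos : 0 < ((1:ℝ)/2) ^ i * G i y :=
        mul_pos (by positivity) (lt_of_le_of_ne (G0 i y) (Ne.symm (Ggood i hgi y hyi)))
      exact absurd hy (ne_of_gt (Summable.tsum_pos (hsum y) (hterm_nonneg y) i hpos))

end B1Aux

open B1Aux in
theorem b1_seqSeparable_of_countable_network
    {X : Type*} [TopologicalSpace X] [T35Space X]
    (hN : ∃ N : Set (Set X), N.Countable ∧ IsNetwork N) :
    B1SeqSeparable X := by
  classical
  obtain ⟨N₀, hN₀c, hN₀n⟩ := hN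
  obtain ⟨e, he⟩ := (hN₀c.insert (∅ : Set X)).exists_eq_range (insert_nonempty _ _)
  have hnet : ∀ U : Set X, IsOpen U → ∀ x ∈ U, ∃ i, x ∈ e i ∧ e i ⊆ U := by
    intro U hU x hx
    obtain ⟨P, hP, hxP, hPU⟩ := hN₀n U hU x hx
    have hP' : P ∈ range e := he ▸ mem_insert_of_mem _ hP
    obtain ⟨i, rfl⟩ := hP'
    exact ⟨i, hxP, hPU⟩
  set C : ℕ → Set X := fun i => closure (e i) with hC_def
  have hCzero : ∀ i, ∃ h : X → ℝ, Continuous h ∧ C i = h ⁻¹' {0} :=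
    fun i => isZero_of_closed e hnet _ isClosed_closure
  refine ⟨Set.range (stepFn C), countable_range _, ?_, ?_⟩
  · rintro f ⟨L, rfl⟩
    exact isBaire1_stepFn C hCzero L
  · rintro f ⟨g, hgc, hgt⟩
    obtain ⟨r, hr⟩ := exists_surjective_nat ℚ
    set Good : ℕ → ℕ → ℚ → Prop :=
      fun n i q => ∀ y ∈ C i, |g n y - (q : ℝ)| ≤ 1 / ((n : ℝ) + 1) with hGood_def
    have claimA : ∀ (n : ℕ) (x : X), ∃ i j, x ∈ C i ∧ Good n i (r j) := by
      intro n x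
      have hδ : (0:ℝ) < 1 / ((n : ℝ) + 1) := by positivity
      obtain ⟨q, hq1, hq2⟩ := exists_rat_btwn (lt_add_of_pos_right (g n x) hδ)
      set U : Set X := {y | |g n y - (q : ℝ)| < 1 / ((n : ℝ) + 1)} with hU_def
      have hUopen : IsOpen U :=
        isOpen_lt (((hgc n).sub continuous_const).abs) continuous_const
      have hxU : x ∈ U := by
        simp only [hU_def, mem_setOf_eq]
        rw [abs_lt]
        constructor <;> linarith
      obtain ⟨i, hxi, hiU⟩ := hnet U hUopen x hxU
      obtain ⟨j, rfl⟩ := hr q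
      refine ⟨i, j, subset_closure hxi, ?_⟩
      intro y hy
      have hclosed : IsClosed {y | |g n y - (r j : ℝ)| ≤ 1 / ((n : ℝ) + 1)} :=
        isClosed_le (((hgc n).sub continuous_const).abs) continuous_const
      have hsub : C i ⊆ {y | |g n y - (r j : ℝ)| ≤ 1 / ((n : ℝ) + 1)} := by
        apply closure_minimal ?_ hclosed
        intro z hz
        have h5 : |g n z - (r j : ℝ)| < 1 / ((n : ℝ) + 1) := hiU hz
        exact le_of_lt h5
      exact hsub hy
    set u : ℕ → X → ℝ := fun m => stepFn C (descL (blockL Good r m) m) with hu_def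
    refine ⟨u, fun m => ⟨_, rfl⟩, ?_⟩
    intro x
    rw [Metric.tendsto_atTop]
    intro ε hε
    obtain ⟨N₂, hN₂⟩ := Metric.tendsto_atTop.mp (hgt x) (ε / 2) (half_pos hε)
    obtain ⟨N₃, hN₃⟩ := exists_nat_one_div_lt (K := ℝ) (half_pos hε)
    set N₁ := max N₂ N₃ with hN₁_def
    obtain ⟨i₀, j₀, hxi₀, hgood₀⟩ := claimA N₁ x
    refine ⟨max N₁ (max i₀ j₀), ?_⟩
    intro m hm
    have hN₁m : N₁ ≤ m := le_trans (le_max_left _ _) hm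
    have hi₀m : i₀ < m + 1 :=
      Nat.lt_succ_of_le (le_trans (le_trans (le_max_left _ _) (le_max_right N₁ _)) hm)
    have hj₀m : j₀ < m + 1 :=
      Nat.lt_succ_of_le (le_trans (le_trans (le_max_right i₀ _) (le_max_right N₁ _)) hm)
    have hhit : (i₀, r j₀) ∈ blockL Good r m N₁ :=
      mem_blockL.mpr ⟨i₀, hi₀m, j₀, hj₀m, rfl, hgood₀⟩
    -- the key estimate
    have est : ∀ (n : ℕ) (p : ℕ × ℚ), N₁ ≤ n → Good n p.1 p.2 → x ∈ C p.1 →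
        |(p.2 : ℝ) - f x| < ε := by
      intro n p hn hgd hxp
      have h1 : |g n x - (p.2 : ℝ)| ≤ 1 / ((n : ℝ) + 1) := hgd x hxp
      have h2 : (1:ℝ) / ((n : ℝ) + 1) ≤ 1 / ((N₃ : ℝ) + 1) := by
        apply one_div_le_one_div_of_le (by positivity)
        have : N₃ ≤ n := le_trans (le_max_right N₂ _) hn
        exact_mod_cast add_le_add_left (Nat.cast_le.mpr this) 1
      have h3 : dist (g n x) (f x) < ε / 2 := hN₂ n (le_trans (le_max_left _ _) hn)
      rw [Real.dist_eq] at h3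
      have h4 : |(p.2 : ℝ) - f x| ≤ |g n x - (p.2 : ℝ)| + |g n x - f x| := by
        have := abs_sub_abs_le_abs_sub ((p.2:ℝ) - f x) 0
        calc |(p.2 : ℝ) - f x| = |((g n x) - f x) - ((g n x) - (p.2:ℝ))| := by ring_nf
          _ ≤ |g n x - f x| + |g n x - (p.2:ℝ)| := abs_sub _ _
          _ = |g n x - (p.2 : ℝ)| + |g n x - f x| := add_comm _ _
      linarith
    obtain ⟨L₁, hLeq, hL₁⟩ := descL_split (blockL Good r m) hN₁m
    have hval : dist (u m x) (f x) < ε := by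
      rw [hu_def]
      dsimp only
      rw [hLeq]
      by_cases hcase : ∃ p ∈ L₁, x ∈ C p.1
      · rw [stepFn_append_of_exists C L₁ _ x hcase]
        obtain ⟨p, hpL, hpx, hv⟩ := stepFn_spec C L₁ x hcase
        obtain ⟨n, hn1, hn2, hpn⟩ := hL₁ p hpL
        have hgd : Good n p.1 p.2 := good_of_mem_blockL hpn
        rw [hv, Real.dist_eq]
        exact est n p (le_of_lt hn1) hgd hpx
      · push_neg at hcase
        rw [stepFn_append_of_not C L₁ _ x hcase]
        obtain ⟨R, hR⟩ := descL_head (blockL Good r m) N₁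
        rw [hR]
        rw [stepFn_append_of_exists C _ R x ⟨(i₀, r j₀), hhit, hxi₀⟩]
        obtain ⟨p, hpL, hpx, hv⟩ := stepFn_spec C (blockL Good r m N₁) x ⟨(i₀, r j₀), hhit, hxi₀⟩
        have hgd : Good N₁ p.1 p.2 := good_of_mem_blockL hpL
        rw [hv, Real.dist_eq]
        exact est N₁ p le_rfl hgd hpx
    exact hval
end

section
/- A regular space X with a countable network of closed sets admits a coarser (as a bijective preimage construction) zero-dimensional second-countable topology: the topology generated by the network elements and their complements is a separable metrizable zero-dimensional topology on the underlying set of X. -/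
open Set Filter Topology TopologicalSpace

theorem aux_zeroDim {X : Type*} (F : ℕ → Set X)
    (hsep : ∀ x y : X, x ≠ y → ∃ n, x ∈ F n ∧ y ∉ F n) :
    letI τ : TopologicalSpace X :=
      generateFrom {S : Set X | ∃ n, S = F n ∨ S = (F n)ᶜ}
    @SeparableSpace X τ ∧ @MetrizableSpace X τ ∧
      ∃ B : Set (Set X), @IsTopologicalBasis X τ B ∧ ∀ S ∈ B, @IsClopen X τ S := by
  set S : Set (Set X) := {S : Set X | ∃ n, S = F n ∨ S = (F n)ᶜ} with hS
  letI τ : TopologicalSpace X := generateFrom S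
  have hopen : ∀ s ∈ S, IsOpen s := fun s hs => GenerateOpen.basic s hs
  have hclopen : ∀ s ∈ S, IsClopen s := by
    rintro s ⟨n, rfl | rfl⟩
    · exact ⟨isOpen_compl_iff.mp (hopen _ ⟨n, Or.inr rfl⟩), hopen _ ⟨n, Or.inl rfl⟩⟩
    · exact ⟨isClosed_compl_iff.mpr (hopen _ ⟨n, Or.inl rfl⟩), hopen _ ⟨n, Or.inr rfl⟩⟩
  have hScount : S.Countable := by
    have : S ⊆ (range F) ∪ (compl '' range F) := by
      rintro s ⟨n, rfl | rfl⟩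
      · exact Or.inl ⟨n, rfl⟩
      · exact Or.inr ⟨F n, ⟨n, rfl⟩, rfl⟩
    exact ((countable_range F).union ((countable_range F).image _)).mono this
  have hbasis : IsTopologicalBasis ((fun f : Set (Set X) => ⋂₀ f) '' {f : Set (Set X) | f.Finite ∧ f ⊆ S}) :=
    isTopologicalBasis_of_subbasis rfl
  have hBclopen : ∀ t ∈ (fun f : Set (Set X) => ⋂₀ f) '' {f : Set (Set X) | f.Finite ∧ f ⊆ S}, IsClopen t := by
    rintro t ⟨f, ⟨hfin, hsub⟩, rfl⟩
    simp only [sInter_eq_biInter]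
    exact hfin.isClopen_biInter fun s hs => hclopen s (hsub hs)
  have hBcount : ((fun f : Set (Set X) => ⋂₀ f) '' {f : Set (Set X) | f.Finite ∧ f ⊆ S}).Countable :=
    (countable_setOf_finite_subset hScount).image _
  haveI : SecondCountableTopology X := hbasis.secondCountableTopology hBcount
  haveI : T2Space X := by
    constructor
    intro x y hxy
    obtain ⟨n, hx, hy⟩ := hsep x y hxy
    exact ⟨F n, (F n)ᶜ, hopen _ ⟨n, Or.inl rfl⟩, hopen _ ⟨n, Or.inr rfl⟩, hx, hy,
      disjoint_compl_right⟩
  haveI : RegularSpace X := by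
    apply RegularSpace.of_exists_mem_nhds_isClosed_subset
    intro x s hs
    obtain ⟨t, ht, hxt, hts⟩ := hbasis.mem_nhds_iff.mp hs
    exact ⟨t, (hBclopen t ht).2.mem_nhds hxt, (hBclopen t ht).1, hts⟩
  haveI : T3Space X := ⟨⟩
  refine ⟨inferInstance, inferInstance, _, hbasis, hBclopen⟩


theorem generated_topology_separable_metrizable_zeroDim
    {X : Type*} [TopologicalSpace X] [T35Space X]
    (F : ℕ → Set X) (hcl : ∀ n, IsClosed (F n))
    (hnet : IsNetwork (Set.range F)) :
    letI τ : TopologicalSpace X :=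
      generateFrom {S : Set X | ∃ n, S = F n ∨ S = (F n)ᶜ}
    @SeparableSpace X τ ∧ @MetrizableSpace X τ ∧
      ∃ B : Set (Set X), @IsTopologicalBasis X τ B ∧ ∀ S ∈ B, @IsClopen X τ S := by
  apply aux_zeroDim
  intro x y hxy
  obtain ⟨P, ⟨n, rfl⟩, hxP, hPU⟩ := hnet {y}ᶜ isOpen_compl_singleton x hxy
  exact ⟨n, hxP, fun hy => hPU hy rfl⟩
end

section
/- Let X be a regular space with countable network consisting of closed sets {Fₙ}, let Z denote the set X with the topology generated by {Fₙ, X∖Fₙ}, and let h : Z → X be the identity map. Then h(U) is an F_σ-set of X for every open set U of Z, and h⁻¹(T) is a zero-set of Z for every zero-set T of X. -/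
open Set Filter Topology TopologicalSpace

section Aux
variable {X : Type*} [TopologicalSpace X]

lemma isClosed_fSigma {A : Set X} (h : IsClosed A) : IsFSigmaSet A :=
  ⟨fun _ => A, fun _ => h, (iUnion_const A).symm⟩

lemma fSigma_iUnion {A : ℕ → Set X} (h : ∀ n, IsFSigmaSet (A n)) :
    IsFSigmaSet (⋃ n, A n) := by
  choose G hGcl hGeq using h
  refine ⟨fun k => G k.unpair.1 k.unpair.2, fun k => hGcl _ _, ?_⟩
  rw [Set.iUnion_unpair G]
  exact iUnion_congr hGeq

lemma fSigma_inter {A B : Set X} (hA : IsFSigmaSet A) (hB : IsFSigmaSet B) :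
    IsFSigmaSet (A ∩ B) := by
  obtain ⟨G, hG, rfl⟩ := hA
  obtain ⟨H, hH, rfl⟩ := hB
  refine ⟨fun k => G k.unpair.1 ∩ H k.unpair.2, fun k => (hG _).inter (hH _), ?_⟩
  rw [Set.iUnion_unpair fun i j => G i ∩ H j]
  ext x; simp [mem_iUnion]

lemma fSigma_sUnion {S : Set (Set X)} (hc : S.Countable)
    (h : ∀ A ∈ S, IsFSigmaSet A) : IsFSigmaSet (⋃₀ S) := by
  rcases S.eq_empty_or_nonempty with rfl | hne
  · simpa using isClosed_fSigma isClosed_empty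
  obtain ⟨f, rfl⟩ := hc.exists_eq_range hne
  rw [sUnion_range]
  exact fSigma_iUnion fun n => h _ (mem_range_self n)

lemma fSigma_sInter {s : Set (Set X)} (hfin : s.Finite)
    (h : ∀ A ∈ s, IsFSigmaSet A) : IsFSigmaSet (⋂₀ s) := by
  revert h
  refine Set.Finite.induction_on s hfin (fun _ => ?_) (fun {a t} _ _ ih h => ?_)
  · simpa using isClosed_fSigma isClosed_univ
  · rw [sInter_insert]
    exact fSigma_inter (h _ (mem_insert _ _)) (ih fun A hA => h A (mem_insert_of_mem _ hA))

end Aux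

open Classical in
lemma network_repr {X : Type*} [TopologicalSpace X] {F : ℕ → Set X}
    (hnet : IsNetwork (Set.range F)) {U : Set X} (hU : IsOpen U) :
    U = ⋃ n, (if F n ⊆ U then F n else ∅) := by
  apply Subset.antisymm
  · intro x hx
    obtain ⟨P, hP, hxP, hPU⟩ := hnet U hU x hx
    obtain ⟨n, rfl⟩ := hP
    exact mem_iUnion.2 ⟨n, by simp [hPU, hxP]⟩
  · intro x hx
    obtain ⟨n, hn⟩ := mem_iUnion.1 hx
    by_cases h : F n ⊆ U
    · exact h (by simpa [h] using hn)
    · simp [h] at hn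

open Classical in
lemma network_open_fsigma {X : Type*} [TopologicalSpace X] {F : ℕ → Set X}
    (hcl : ∀ n, IsClosed (F n)) (hnet : IsNetwork (Set.range F))
    {U : Set X} (hU : IsOpen U) : IsFSigmaSet U := by
  refine ⟨fun n => if F n ⊆ U then F n else ∅, fun n => ?_, network_repr hnet hU⟩
  dsimp only
  split_ifs with h
  · exact hcl n
  · exact isClosed_empty

/-- With `Z` the set `X` retopologized by the topology `τ` generated by the closed
network sets and their complements, and `h : Z → X` the identity: images under `h` of
τ-open sets are `F_σ` in `X`, and preimages under `h` of zero-sets of `X` are zero-sets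
of `Z`. -/
theorem identity_map_fSigma_and_zeroSet
    {X : Type*} [tX : TopologicalSpace X] [T35Space X]
    (F : ℕ → Set X) (hcl : ∀ n, IsClosed (F n))
    (hnet : IsNetwork (Set.range F)) :
    letI τ : TopologicalSpace X :=
      generateFrom {S : Set X | ∃ n, S = F n ∨ S = (F n)ᶜ}
    (∀ U : Set X, IsOpen[τ] U → @IsFSigmaSet X tX U) ∧
      (∀ T : Set X, @IsZeroSet X tX T → @IsZeroSet X τ T) := by
  set S : Set (Set X) := {S : Set X | ∃ n, S = F n ∨ S = (F n)ᶜ} with hSdef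
  have hScount : S.Countable := by
    have hsub : S ⊆ range F ∪ range (fun n => (F n)ᶜ) := by
      rintro A ⟨n, rfl | rfl⟩
      · exact Or.inl ⟨n, rfl⟩
      · exact Or.inr ⟨n, rfl⟩
    exact ((countable_range F).union (countable_range _)).mono hsub
  have hSfs : ∀ A ∈ S, IsFSigmaSet A := by
    rintro A ⟨n, rfl | rfl⟩
    · exact isClosed_fSigma (hcl n)
    · exact network_open_fsigma hcl hnet (hcl n).isOpen_compl
  have hbasis : @IsTopologicalBasis X (generateFrom S)
      ((fun f : Set (Set X) => ⋂₀ f) '' {f : Set (Set X) | f.Finite ∧ f ⊆ S}) :=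
    @isTopologicalBasis_of_subbasis X (generateFrom S) S rfl
  have hBc : ((fun f : Set (Set X) => ⋂₀ f) '' {f : Set (Set X) | f.Finite ∧ f ⊆ S}).Countable :=
    (countable_setOf_finite_subset hScount).image _
  refine ⟨fun U hU => ?_, fun T hT => ?_⟩
  · obtain ⟨S', hS'B, rfl⟩ :=
      @IsTopologicalBasis.open_eq_sUnion X (generateFrom S) _ hbasis U hU
    refine fSigma_sUnion (hBc.mono hS'B) fun A hA => ?_
    obtain ⟨f, ⟨hf, hfS⟩, rfl⟩ := hS'B hA
    exact fSigma_sInter hf fun B hB => hSfs B (hfS hB)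
  · have hle : ∀ U : Set X, IsOpen U → IsOpen[generateFrom S] U := by
      intro U hU
      rw [network_repr hnet hU]
      refine @isOpen_iUnion X ℕ (generateFrom S) _ fun n => ?_
      by_cases h : F n ⊆ U
      · rw [if_pos h]
        exact isOpen_generateFrom_of_mem ⟨n, Or.inl rfl⟩
      · rw [if_neg h]
        exact @isOpen_empty X (generateFrom S)
    obtain ⟨f, hf, rfl⟩ := hT
    refine ⟨f, ?_, rfl⟩
    rw [@continuous_def X ℝ (generateFrom S) _]
    exact fun s hs => hle _ (hf.isOpen_preimage s hs)
end

section
/- If B₁(X) with the pointwise convergence topology is strongly sequentially separable, then for every bijection φ from X onto a separable metrizable space Y such that φ⁻¹(U) is a Z_σ-set of X for every open U ⊆ Y, the space Y has property γ. -/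
open Set Filter Topology TopologicalSpace

/-- Strongly sequentially separable: separable, and every countable dense subset is
sequentially dense. -/
def StronglySeqSeparable (T : Type*) [TopologicalSpace T] : Prop :=
  (∃ D : Set T, D.Countable ∧ Dense D) ∧
    ∀ D : Set T, D.Countable → Dense D →
      ∀ x : T, ∃ u : ℕ → T, (∀ n, u n ∈ D) ∧ Filter.Tendsto u Filter.atTop (𝓝 x)

/-- Property `γ`: every open `ω`-cover has a subsequence whose `lim inf` is the whole
space. -/
def HasPropertyGamma (Y : Type*) [TopologicalSpace Y] : Prop :=
  ∀ α : Set (Set Y), (∀ U ∈ α, IsOpen U) →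
    (∀ F : Set Y, F.Finite → ∃ U ∈ α, F ⊆ U) →
    ∃ u : ℕ → Set Y, (∀ n, u n ∈ α) ∧ ∀ y : Y, ∀ᶠ n in Filter.atTop, y ∈ u n

open scoped Classical in
/-- Blend: equals `d` on `Z`, and `1` off `Z`. -/
noncomputable def blendFn {X : Type*} (Z : Set X) (d : X → ℝ) : X → ℝ :=
  fun x => if x ∈ Z then d x else 1

lemma isBaire1_zero {X : Type*} [TopologicalSpace X] : IsBaire1 (fun _ : X => (0:ℝ)) :=
  ⟨fun _ _ => 0, fun _ => continuous_const, fun _ => tendsto_const_nhds⟩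

lemma isBaire1_blend {X : Type*} [TopologicalSpace X] {Z : Set X} {w : X → ℝ}
    (hw : Continuous w) (hZ : Z = w ⁻¹' {0}) {d : X → ℝ} (hd : IsBaire1 d) :
    IsBaire1 (blendFn Z d) := by
  classical
  obtain ⟨g, hg, hgt⟩ := hd
  refine ⟨fun i x => g i x * max 0 (1 - (i+1) * |w x|) + (1 - max 0 (1 - (i+1) * |w x|)),
    fun i => ?_, fun x => ?_⟩
  · have hc : Continuous fun x => max 0 (1 - ((i:ℝ)+1) * |w x|) :=
      continuous_const.max (continuous_const.sub (continuous_const.mul hw.abs))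
    exact ((hg i).mul hc).add (continuous_const.sub hc)
  · by_cases hx : x ∈ Z
    · have hw0 : w x = 0 := by
        have := hx; rw [hZ] at this; simpa using this
      have heq : ∀ i : ℕ, g i x * max 0 (1 - ((i:ℝ)+1) * |w x|) +
          (1 - max 0 (1 - ((i:ℝ)+1) * |w x|)) = g i x := by
        intro i; simp [hw0]
      have : blendFn Z d x = d x := if_pos hx
      rw [this]
      have : (fun i : ℕ => g i x * max 0 (1 - ((i:ℝ)+1) * |w x|) +
          (1 - max 0 (1 - ((i:ℝ)+1) * |w x|))) = fun i => g i x := funext heq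
      rw [this]; exact hgt x
    · have hw0 : w x ≠ 0 := by
        intro h0; apply hx; rw [hZ]; simpa using h0
      have hpos : 0 < |w x| := abs_pos.mpr hw0
      obtain ⟨N, hN⟩ := exists_nat_ge (1 / |w x|)
      have : blendFn Z d x = 1 := if_neg hx
      rw [this]
      apply tendsto_atTop_of_eventually_const (i₀ := N)
      intro i hi
      have h1 : (1:ℝ) ≤ ((i:ℝ)+1) * |w x| := by
        have hiN : (1 / |w x|) ≤ (i:ℝ) + 1 := by
          calc (1 / |w x|) ≤ (N:ℝ) := hN
          _ ≤ (i:ℝ) := by exact_mod_cast hi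
          _ ≤ (i:ℝ) + 1 := by linarith
        calc (1:ℝ) = (1 / |w x|) * |w x| := by field_simp
        _ ≤ ((i:ℝ)+1) * |w x| := by
            exact mul_le_mul_of_nonneg_right hiN hpos.le
      have hmax : max 0 (1 - ((i:ℝ)+1) * |w x|) = 0 :=
        max_eq_left (by linarith)
      dsimp only
      rw [hmax]; ring

theorem gamma_of_b1_stronglySeqSeparable
    {X : Type*} [TopologicalSpace X] [T35Space X]
    (h : StronglySeqSeparable {f : X → ℝ // IsBaire1 f})
    (Y : Type*) [TopologicalSpace Y] [SeparableSpace Y] [MetrizableSpace Y]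
    (φ : X → Y) (hbij : Function.Bijective φ)
    (h1 : ∀ U : Set Y, IsOpen U → IsZSigmaSet (φ ⁻¹' U)) :
    HasPropertyGamma Y := by
  classical
  intro α hopen hωcov
  obtain ⟨U₀, hU₀, -⟩ := hωcov ∅ finite_empty
  by_cases hY : Nonempty Y
  swap
  · exact ⟨fun _ => U₀, fun _ => hU₀, fun y => absurd ⟨y⟩ hY⟩
  -- Y is second countable
  letI : MetricSpace Y := TopologicalSpace.metrizableSpaceMetric Y
  haveI : SecondCountableTopology Y := UniformSpace.secondCountable_of_separable Y
  -- enumerate a countable basis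
  have hbne : (countableBasis Y).Nonempty := by
    obtain ⟨y⟩ := hY
    have hsu := (isBasis_countableBasis Y).sUnion_eq
    have : y ∈ ⋃₀ countableBasis Y := by rw [hsu]; trivial
    obtain ⟨s, hs, -⟩ := this
    exact ⟨s, hs⟩
  obtain ⟨b, hb⟩ := (countable_countableBasis Y).exists_eq_range hbne
  -- countable ω-subcover W of α
  set pick : Finset ℕ → Set Y := fun t =>
    if hex : ∃ U ∈ α, (⋃ i ∈ t, b i) ⊆ U then hex.choose else U₀ with hpick
  have hpickα : ∀ t, pick t ∈ α := by
    intro t; rw [hpick]; dsimp only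
    split
    · next hex => exact hex.choose_spec.1
    · exact hU₀
  have hpicksub : ∀ t, (∃ U ∈ α, (⋃ i ∈ t, b i) ⊆ U) → (⋃ i ∈ t, b i) ⊆ pick t := by
    intro t hex; rw [hpick]; dsimp only; rw [dif_pos hex]; exact hex.choose_spec.2
  obtain ⟨e, he⟩ := exists_surjective_nat (Finset ℕ)
  set W : ℕ → Set Y := fun n => pick (e n) with hW
  have hWα : ∀ n, W n ∈ α := fun n => hpickα (e n)
  have hWcov : ∀ F : Set Y, F.Finite → ∃ n, F ⊆ W n := by
    intro F hF
    obtain ⟨U, hUα, hFU⟩ := hωcov F hF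
    have hch : ∀ x ∈ F, ∃ i, x ∈ b i ∧ b i ⊆ U := by
      intro x hx
      obtain ⟨v, hv, hxv, hvU⟩ :=
        (isBasis_countableBasis Y).exists_subset_of_mem_open (hFU hx) (hopen U hUα)
      rw [hb] at hv
      obtain ⟨i, rfl⟩ := hv
      exact ⟨i, hxv, hvU⟩
    choose! c hc1 hc2 using hch
    set t : Finset ℕ := hF.toFinset.image c with ht
    have hsubU : (⋃ i ∈ t, b i) ⊆ U := by
      intro y hy
      simp only [ht, mem_iUnion, Finset.mem_image, Set.Finite.mem_toFinset] at hy
      obtain ⟨i, ⟨x, hxF, rfl⟩, hyb⟩ := hy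
      exact hc2 x hxF hyb
    obtain ⟨n, hn⟩ := he t
    refine ⟨n, ?_⟩
    intro x hx
    have : x ∈ ⋃ i ∈ t, b i := by
      simp only [ht, mem_iUnion, Finset.mem_image, Set.Finite.mem_toFinset]
      exact ⟨c x, ⟨x, hx, rfl⟩, hc1 x hx⟩
    have := hpicksub t ⟨U, hUα, hsubU⟩ this
    show x ∈ pick (e n)
    rw [hn]; exact this
  -- pull back to X
  set E : ℕ → Set X := fun n => φ ⁻¹' (W n) with hE
  have hEcov : ∀ I : Set X, I.Finite → ∃ n, I ⊆ E n := by
    intro I hI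
    obtain ⟨n, hn⟩ := hWcov (φ '' I) (hI.image φ)
    exact ⟨n, fun x hx => hn ⟨x, hx, rfl⟩⟩
  -- Z_σ decomposition with increasing zero sets
  have hEZ : ∀ n, IsZSigmaSet (E n) := fun n => h1 (W n) (hopen _ (hWα n))
  choose Z hZzero hZeq using hEZ
  choose w hwcont hweq using fun n m => hZzero n m
  set wP : ℕ → ℕ → X → ℝ := fun n m x => ∏ i ∈ Finset.range (m+1), w n i x with hwP
  have hwPcont : ∀ n m, Continuous (wP n m) := by
    intro n m
    apply continuous_finset_prod
    intro i _
    exact hwcont n i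
  set ZP : ℕ → ℕ → Set X := fun n m => wP n m ⁻¹' {0} with hZP
  have hZPmem : ∀ n m x, x ∈ ZP n m ↔ ∃ i ≤ m, x ∈ Z n i := by
    intro n m x
    simp only [hZP, Set.mem_preimage, Set.mem_singleton_iff, hwP,
      Finset.prod_eq_zero_iff, Finset.mem_range, Nat.lt_succ_iff]
    constructor
    · rintro ⟨i, him, hwi⟩
      exact ⟨i, him, by rw [hweq n i]; simpa using hwi⟩
    · rintro ⟨i, him, hzi⟩
      refine ⟨i, him, ?_⟩
      rw [hweq n i] at hzi; simpa using hzi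
  have hZPE : ∀ n m, ZP n m ⊆ E n := by
    intro n m x hx
    obtain ⟨i, -, hzi⟩ := (hZPmem n m x).mp hx
    rw [hZeq n]; exact Set.mem_iUnion.mpr ⟨i, hzi⟩
  have hZPfin : ∀ n (I : Set X), I.Finite → I ⊆ E n → ∃ m, I ⊆ ZP n m := by
    intro n I hI hIE
    have hch : ∀ x ∈ I, ∃ m, x ∈ ZP n m := by
      intro x hx
      have := hIE hx
      rw [hZeq n] at this
      obtain ⟨i, hi⟩ := Set.mem_iUnion.mp this
      exact ⟨i, (hZPmem n i x).mpr ⟨i, le_refl i, hi⟩⟩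
    choose! c hc using hch
    refine ⟨hI.toFinset.sup c, fun x hx => ?_⟩
    have hcx := hc x hx
    obtain ⟨i, him, hzi⟩ := (hZPmem n (c x) x).mp hcx
    refine (hZPmem n _ x).mpr ⟨i, le_trans him ?_, hzi⟩
    exact Finset.le_sup (hI.mem_toFinset.mpr hx)
  -- the countable dense set
  obtain ⟨⟨D₀, hD₀c, hD₀d⟩, hsss⟩ := h
  set bl : {f : X → ℝ // IsBaire1 f} → ℕ → ℕ → {f : X → ℝ // IsBaire1 f} :=
    fun d n m => ⟨blendFn (ZP n m) d.1,
      isBaire1_blend (hwPcont n m) rfl d.2⟩ with hbl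
  set D : Set {f : X → ℝ // IsBaire1 f} :=
    ⋃ (n : ℕ), ⋃ (m : ℕ), (fun d => bl d n m) '' D₀ with hD
  have hDc : D.Countable :=
    Set.countable_iUnion fun n => Set.countable_iUnion fun m => hD₀c.image (fun d => bl d n m)
  have hDd : Dense D := by
    intro f
    rw [mem_closure_iff_nhds]
    intro N hN
    rw [nhds_induced Subtype.val f] at hN
    obtain ⟨V, hV, hVN⟩ := Filter.mem_comap.mp hN
    rw [nhds_pi, Filter.mem_pi] at hV
    obtain ⟨I, hIfin, t, ht, htV⟩ := hV
    obtain ⟨n, hnE⟩ := hEcov I hIfin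
    obtain ⟨m, hmZ⟩ := hZPfin n I hIfin hnE
    have hpit : (I.pi t) ∈ 𝓝 (f.1) := by
      rw [nhds_pi]; exact Filter.pi_mem_pi hIfin (fun i _ => ht i)
    have hne : (Subtype.val ⁻¹' (I.pi t) ∩ D₀).Nonempty := by
      have hcl := hD₀d f
      rw [mem_closure_iff_nhds] at hcl
      exact hcl _ (by rw [nhds_induced Subtype.val f]; exact Filter.preimage_mem_comap hpit)
    obtain ⟨d, hdV, hdD₀⟩ := hne
    refine ⟨bl d n m, hVN ?_, Set.mem_iUnion.mpr ⟨n, Set.mem_iUnion.mpr ⟨m, ⟨d, hdD₀, rfl⟩⟩⟩⟩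
    apply htV
    intro x hx
    have hbx : (bl d n m).1 x = d.1 x := if_pos (hmZ hx)
    rw [hbx]
    exact hdV x hx
  -- apply strong sequential separability at the zero function
  obtain ⟨u, huD, hconv⟩ := hsss D hDc hDd ⟨fun _ => 0, isBaire1_zero⟩
  have hidx : ∀ k, ∃ n m d, d ∈ D₀ ∧ u k = bl d n m := by
    intro k
    have := huD k
    rw [hD] at this
    obtain ⟨n, hmem⟩ := Set.mem_iUnion.mp this
    obtain ⟨m, hmem⟩ := Set.mem_iUnion.mp hmem
    obtain ⟨d, hdD₀, hdeq⟩ := hmem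
    exact ⟨n, m, d, hdD₀, hdeq.symm⟩
  choose nk mk dk hdkD hdkeq using hidx
  refine ⟨fun k => W (nk k), fun k => hWα (nk k), ?_⟩
  intro y
  obtain ⟨x, rfl⟩ := hbij.2 y
  have hptconv : Tendsto (fun k => (u k).1 x) atTop (𝓝 0) := by
    have hcont : Continuous fun f : {f : X → ℝ // IsBaire1 f} => f.1 x :=
      (continuous_apply x).comp continuous_subtype_val
    exact (hcont.continuousAt.tendsto.comp hconv : _)
  have hne1 : ∀ᶠ k in atTop, (u k).1 x ≠ 1 :=
    hptconv.eventually_ne (by norm_num)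
  filter_upwards [hne1] with k hk
  have hxZ : x ∈ ZP (nk k) (mk k) := by
    by_contra hxZ
    apply hk
    rw [hdkeq k]
    exact if_neg hxZ
  exact hZPE (nk k) (mk k) hxZ
end
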